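/- arXiv:2603.15543 — 12 statements merged into one kernel-verified Lean document; each statement's English description precedes it below -/
import Mathlib

section
/- In the oriented Dutch windmill graph D^m_n, for any cycle index k in {1,...,m} and vertices i, j both in the k-th cycle, there exists a walk of length n-1 from i to j if and only if (i=1 and j=(k-1)(n-1)+n) or (i=(k-1)(n-1)+2 and j=1) or (i=(k-1)(n-1)+ℓ and j=i-1 for some ℓ in {3,...,n}); moreover, in each of these cases the walk of length n-1 is unique. -/
/-- Edge relation of the oriented Dutch windmill graph `D^m_n`, on vertex
labels `1, …, m*(n-1)+1`. -/
def windmillEdge (m n a b : ℕ) : Prop :=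
  (∃ k, 1 ≤ k ∧ k ≤ m ∧ a = 1 ∧ b = (k-1)*(n-1)+2) ∨
  (∃ k i, 1 ≤ k ∧ k ≤ m ∧ 2 ≤ i ∧ i ≤ n-1 ∧ a = (k-1)*(n-1)+i ∧ b = a+1) ∨
  (∃ k, 1 ≤ k ∧ k ≤ m ∧ a = (k-1)*(n-1)+n ∧ b = 1)

/-- `IsWalk m n r w i j` : `w` is a walk of length `r` from `i` to `j` in `D^m_n`,
recorded as the sequence of its `r+1` vertices. -/
def IsWalk (m n r : ℕ) (w : Fin (r+1) → ℕ) (i j : ℕ) : Prop :=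
  w 0 = i ∧ w (Fin.last r) = j ∧
  (∀ t : Fin (r+1), 1 ≤ w t ∧ w t ≤ m*(n-1)+1) ∧
  (∀ t : Fin r, windmillEdge m n (w t.castSucc) (w t.succ))

/-- Number of walks of length `r` from `i` to `j` in `D^m_n`. -/
noncomputable def numWalks (m n r i j : ℕ) : ℕ :=
  Nat.card {w : Fin (r+1) → ℕ // IsWalk m n r w i j}

open Classical in
/-- Adjacency matrix of `D^m_n` (vertex `v : Fin (m*(n-1)+1)` has label `v+1`). -/
noncomputable def windmillMatrix (m n : ℕ) :
    Matrix (Fin (m*(n-1)+1)) (Fin (m*(n-1)+1)) ℝ :=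
  fun i j => if windmillEdge m n ((i : ℕ)+1) ((j : ℕ)+1) then 1 else 0

private lemma mulU {N k k' ℓ ℓ' : ℕ} (hk : 1 ≤ k)
    (hℓ : 2 ≤ ℓ) (hℓN : ℓ ≤ N + 1) (hℓ' : 2 ≤ ℓ') (hℓ'N : ℓ' ≤ N + 1)
    (hle : k ≤ k')
    (h : (k - 1) * N + ℓ = (k' - 1) * N + ℓ') : k = k' ∧ ℓ = ℓ' := by
  obtain ⟨d, rfl⟩ := Nat.exists_eq_add_of_le hle
  have hsplit : (k + d - 1) * N = (k - 1) * N + d * N := by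
    have h1 : k + d - 1 = (k - 1) + d := by omega
    rw [h1, Nat.add_mul]
  rcases Nat.eq_zero_or_pos d with rfl | hd
  · omega
  · have hdN : N ≤ d * N := Nat.le_mul_of_pos_left N hd
    omega

private lemma repU {N k k' ℓ ℓ' : ℕ} (hk : 1 ≤ k) (hk' : 1 ≤ k')
    (hℓ : 2 ≤ ℓ) (hℓN : ℓ ≤ N+1) (hℓ' : 2 ≤ ℓ') (hℓ'N : ℓ' ≤ N+1)
    (h : (k-1)*N + ℓ = (k'-1)*N + ℓ') : k = k' ∧ ℓ = ℓ' := by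
  rcases Nat.le_total k k' with hle | hle
  · exact mulU hk hℓ hℓN hℓ' hℓ'N hle h
  · obtain ⟨h1, h2⟩ := mulU hk' hℓ' hℓ'N hℓ hℓN hle h.symm
    exact ⟨h1.symm, h2.symm⟩

private lemma edge_iff {m N a b : ℕ} :
    windmillEdge m (N+1) a b ↔
      ((∃ k, 1 ≤ k ∧ k ≤ m ∧ a = 1 ∧ b = (k-1)*N+2) ∨
       (∃ k i, 1 ≤ k ∧ k ≤ m ∧ 2 ≤ i ∧ i ≤ N ∧ a = (k-1)*N+i ∧ b = a+1) ∨
       (∃ k, 1 ≤ k ∧ k ≤ m ∧ a = (k-1)*N+(N+1) ∧ b = 1)) := by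
  unfold windmillEdge
  simp only [Nat.add_sub_cancel]

private lemma step_nonlast {m N k ℓ b : ℕ} (hN : 2 ≤ N) (hk : 1 ≤ k)
    (hℓ2 : 2 ≤ ℓ) (hℓN : ℓ ≤ N)
    (h : windmillEdge m (N+1) ((k-1)*N + ℓ) b) : b = (k-1)*N + ℓ + 1 := by
  rw [edge_iff] at h
  rcases h with ⟨k', _, _, ha, _⟩ | ⟨k', i, _, _, _, _, _, hb⟩ | ⟨k', hk', _, ha, _⟩
  · omega
  · omega
  · obtain ⟨_, h2⟩ := repU hk hk' hℓ2 (by omega) (by omega) (by omega) ha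
    omega

private lemma step_last {m N k b : ℕ} (hN : 2 ≤ N) (hk : 1 ≤ k)
    (h : windmillEdge m (N+1) ((k-1)*N + (N+1)) b) : b = 1 := by
  rw [edge_iff] at h
  rcases h with ⟨k', _, _, ha, _⟩ | ⟨k', i, hk', _, hi2, hiN, ha, _⟩ | ⟨k', _, _, _, hb⟩
  · omega
  · obtain ⟨_, h2⟩ := repU hk hk' (by omega) (by omega) hi2 (by omega) ha
    omega
  · exact hb

private lemma step_hub {m N b : ℕ} (hN : 2 ≤ N)
    (h : windmillEdge m (N+1) 1 b) :
    ∃ k', 1 ≤ k' ∧ k' ≤ m ∧ b = (k'-1)*N + 2 := by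
  rw [edge_iff] at h
  rcases h with ⟨k', h1, h2, _, hb⟩ | ⟨k', i, _, _, hi2, _, ha, _⟩ | ⟨k', _, _, ha, _⟩
  · exact ⟨k', h1, h2, hb⟩
  · have : i ≤ (k'-1)*N + i := Nat.le_add_left _ _
    omega
  · have : N+1 ≤ (k'-1)*N + (N+1) := Nat.le_add_left _ _
    omega

private lemma edge_hub {m N k : ℕ} (hk1 : 1 ≤ k) (hkm : k ≤ m) :
    windmillEdge m (N+1) 1 ((k-1)*N+2) := edge_iff.mpr (Or.inl ⟨k, hk1, hkm, rfl, rfl⟩)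

private lemma edge_mid {m N k ℓ : ℕ} (hk1 : 1 ≤ k) (hkm : k ≤ m) (h2 : 2 ≤ ℓ) (hN : ℓ ≤ N) :
    windmillEdge m (N+1) ((k-1)*N+ℓ) ((k-1)*N+ℓ+1) :=
  edge_iff.mpr (Or.inr (Or.inl ⟨k, ℓ, hk1, hkm, h2, hN, rfl, rfl⟩))

private lemma edge_last {m N k : ℕ} (hk1 : 1 ≤ k) (hkm : k ≤ m) :
    windmillEdge m (N+1) ((k-1)*N+(N+1)) 1 :=
  edge_iff.mpr (Or.inr (Or.inr ⟨k, hk1, hkm, rfl, rfl⟩))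

private lemma kN_bound {m N k : ℕ} (hk1 : 1 ≤ k) (hkm : k ≤ m) :
    (k-1)*N + (N+1) ≤ m*N + 1 := by
  have h1 : (k-1)*N + N = ((k-1)+1)*N := (Nat.succ_mul _ _).symm
  have h2 : (k-1)+1 = k := by omega
  rw [h2] at h1
  have h3 : k*N ≤ m*N := Nat.mul_le_mul_right N hkm
  omega

private def cw (N b b' ℓ t : ℕ) : ℕ :=
  if ℓ + t ≤ N+1 then b + ℓ + t
  else if ℓ + t = N+2 then 1
  else b' + (ℓ + t - (N+1))

private lemma ex_cw {m N k k' ℓ : ℕ} (hN : 2 ≤ N) (hk1 : 1 ≤ k) (hkm : k ≤ m)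
    (hk1' : 1 ≤ k') (hkm' : k' ≤ m) (hℓ2 : 2 ≤ ℓ) (hℓ : ℓ ≤ N+2) :
    IsWalk m (N+1) N (fun t => cw N ((k-1)*N) ((k'-1)*N) ℓ t.val)
      (if ℓ = N+2 then 1 else (k-1)*N+ℓ)
      (if ℓ = 2 then 1 else (k'-1)*N + (ℓ-1)) := by
  have hb := kN_bound (m:=m) (N:=N) hk1 hkm
  have hb' := kN_bound (m:=m) (N:=N) hk1' hkm'
  have hNs : N + 1 - 1 = N := by omega
  refine ⟨?_, ?_, ?_, ?_⟩
  · show cw N _ _ ℓ (0 : Fin (N+1)).val = _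
    simp only [Fin.val_zero]
    unfold cw
    split_ifs <;> omega
  · show cw N _ _ ℓ (Fin.last N).val = _
    simp only [Fin.val_last]
    unfold cw
    split_ifs <;> omega
  · intro t
    have ht : t.val ≤ N := Nat.lt_succ_iff.mp t.isLt
    rw [hNs]
    show 1 ≤ cw N ((k-1)*N) ((k'-1)*N) ℓ t.val ∧ cw N ((k-1)*N) ((k'-1)*N) ℓ t.val ≤ m*N+1
    constructor <;> (unfold cw; split_ifs <;> omega)
  · intro t
    have ht : t.val < N := t.isLt
    show windmillEdge m (N+1) (cw N _ _ ℓ t.castSucc.val) (cw N _ _ ℓ t.succ.val)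
    rw [Fin.coe_castSucc, Fin.val_succ]
    unfold cw
    rcases Nat.lt_or_ge (ℓ + t.val) (N+1) with h1 | h1
    · rw [if_pos (by omega), if_pos (by omega)]
      exact edge_iff.mpr (Or.inr (Or.inl
        ⟨k, ℓ+t.val, hk1, hkm, by omega, by omega, by omega, by omega⟩))
    rcases Nat.eq_or_lt_of_le h1 with h2 | h2
    · rw [if_pos (by omega), if_neg (by omega), if_pos (by omega)]
      exact edge_iff.mpr (Or.inr (Or.inr ⟨k, hk1, hkm, by omega, rfl⟩))
    rcases Nat.eq_or_lt_of_le h2 with h3 | h3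
    · rw [if_neg (by omega), if_pos (by omega), if_neg (by omega), if_neg (by omega)]
      exact edge_iff.mpr (Or.inl ⟨k', hk1', hkm', rfl, by omega⟩)
    · rw [if_neg (by omega), if_neg (by omega), if_neg (by omega), if_neg (by omega)]
      exact edge_iff.mpr (Or.inr (Or.inl
        ⟨k', ℓ+t.val-(N+1), hk1', hkm', by omega, by omega, by omega, by omega⟩))

private lemma cw_two {N b b1 b2 t : ℕ} (ht : t ≤ N) : cw N b b1 2 t = cw N b b2 2 t := by
  unfold cw
  split_ifs <;> omega

private lemma walk_from_hub {m N : ℕ} (hN : 2 ≤ N) (b : ℕ) {w : Fin (N+1) → ℕ} {j : ℕ}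
    (hw : IsWalk m (N+1) N w 1 j) :
    ∃ k', 1 ≤ k' ∧ k' ≤ m ∧ ∀ t : Fin (N+1), w t = cw N b ((k'-1)*N) (N+2) t.val := by
  obtain ⟨h0, hlast, hbd, hstep⟩ := hw
  have estep : ∀ u, u < N → ∀ (h1 : u < N+1) (h2 : u+1 < N+1),
      windmillEdge m (N+1) (w ⟨u, h1⟩) (w ⟨u+1, h2⟩) := by
    intro u hu h1 h2
    exact hstep ⟨u, hu⟩
  have hq0 : (0:ℕ) < N+1 := by omega
  have hq1 : (1:ℕ) < N+1 := by omega
  have h0' : w ⟨0, hq0⟩ = 1 := h0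
  have e0 := estep 0 (by omega) hq0 hq1
  rw [h0'] at e0
  obtain ⟨k', hk1', hkm', h1⟩ := step_hub hN e0
  refine ⟨k', hk1', hkm', ?_⟩
  have key : ∀ u, 1 + u ≤ N → ∀ (hh : 1 + u < N+1), w ⟨1+u, hh⟩ = (k'-1)*N + (2+u) := by
    intro u
    induction u with
    | zero => intro _ hh; exact h1.trans (by omega)
    | succ u ih =>
      intro hu hh
      have ha : 1 + u < N + 1 := by omega
      have e := estep (1+u) (by omega) ha hh
      rw [ih (by omega) ha] at e
      exact (step_nonlast hN hk1' (by omega) (by omega) e).trans (by omega)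
  intro t
  have htN : t.val ≤ N := Nat.lt_succ_iff.mp t.isLt
  rcases Nat.eq_zero_or_pos t.val with h | h
  · have hval : w t = 1 := by
      have ht : t = ⟨0, hq0⟩ := Fin.ext (by simp only [Fin.val_mk]; omega)
      rw [ht]
      exact h0'
    rw [hval]
    unfold cw
    split_ifs <;> omega
  · have hval : w t = (k'-1)*N + (2 + (t.val - 1)) := by
      have ht : t = ⟨1 + (t.val - 1), by omega⟩ := Fin.ext (by simp only [Fin.val_mk]; omega)
      conv_lhs => rw [ht]
      exact key (t.val - 1) (by omega) _
    rw [hval]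
    unfold cw
    split_ifs <;> omega

private lemma walk_from_nonhub {m N k ℓ : ℕ} (hN : 2 ≤ N) (hk1 : 1 ≤ k) (hkm : k ≤ m)
    (hℓ2 : 2 ≤ ℓ) (hℓN1 : ℓ ≤ N+1) {w : Fin (N+1) → ℕ} {j : ℕ}
    (hw : IsWalk m (N+1) N w ((k-1)*N+ℓ) j) :
    ∃ k', 1 ≤ k' ∧ k' ≤ m ∧ ∀ t : Fin (N+1), w t = cw N ((k-1)*N) ((k'-1)*N) ℓ t.val := by
  obtain ⟨h0, hlast, hbd, hstep⟩ := hw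
  have estep : ∀ u, u < N → ∀ (h1 : u < N+1) (h2 : u+1 < N+1),
      windmillEdge m (N+1) (w ⟨u, h1⟩) (w ⟨u+1, h2⟩) := by
    intro u hu h1 h2
    exact hstep ⟨u, hu⟩
  have key1 : ∀ u, ℓ + u ≤ N + 1 → ∀ (hh : u < N+1), w ⟨u, hh⟩ = (k-1)*N + (ℓ + u) := by
    intro u
    induction u with
    | zero => intro _ hh; exact h0.trans (by omega)
    | succ u ih =>
      intro hu hh
      have ha : u < N + 1 := by omega
      have e := estep u (by omega) ha hh
      rw [ih (by omega) ha] at e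
      exact (step_nonlast hN hk1 (by omega) (by omega) e).trans (by omega)
  obtain ⟨s, hs⟩ : ∃ s, s = N + 1 - ℓ := ⟨_, rfl⟩
  have hp1 : s < N+1 := by omega
  have hp2 : s+1 < N+1 := by omega
  have hws : w ⟨s, hp1⟩ = (k-1)*N + (N+1) := (key1 s (by omega) hp1).trans (by omega)
  have ehub := estep s (by omega) hp1 hp2
  rw [hws] at ehub
  have hws1 : w ⟨s+1, hp2⟩ = 1 := step_last hN hk1 ehub
  by_cases hℓeq : ℓ = 2
  · refine ⟨k, hk1, hkm, ?_⟩
    intro t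
    have htN : t.val ≤ N := Nat.lt_succ_iff.mp t.isLt
    rcases Nat.lt_or_ge t.val (s+1) with h | h
    · refine (key1 t.val (by omega) t.isLt).trans ?_
      unfold cw
      split_ifs <;> omega
    · have hval : w t = 1 := by
        have ht : t = ⟨s+1, hp2⟩ := Fin.ext (by simp only [Fin.val_mk]; omega)
        rw [ht]
        exact hws1
      rw [hval]
      unfold cw
      split_ifs <;> omega
  · have hℓ3 : 3 ≤ ℓ := by omega
    have hp3 : s+2 < N+1 := by omega
    have ehub2 := estep (s+1) (by omega) hp2 hp3
    rw [hws1] at ehub2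
    obtain ⟨k', hk1', hkm', hws2⟩ := step_hub hN ehub2
    refine ⟨k', hk1', hkm', ?_⟩
    have key2 : ∀ u, s + 2 + u ≤ N → ∀ (hh : s+2+u < N+1), w ⟨s+2+u, hh⟩ = (k'-1)*N + (2+u) := by
      intro u
      induction u with
      | zero => intro _ hh; exact hws2.trans (by omega)
      | succ u ih =>
        intro hu hh
        have ha : s + 2 + u < N + 1 := by omega
        have e := estep (s+2+u) (by omega) ha hh
        rw [ih (by omega) ha] at e
        exact (step_nonlast hN hk1' (by omega) (by omega) e).trans (by omega)
    intro t
    have htN : t.val ≤ N := Nat.lt_succ_iff.mp t.isLt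
    rcases Nat.lt_or_ge t.val (s+1) with h | h
    · refine (key1 t.val (by omega) t.isLt).trans ?_
      unfold cw
      split_ifs <;> omega
    rcases Nat.eq_or_lt_of_le h with h2 | h2
    · have hval : w t = 1 := by
        have ht : t = ⟨s+1, hp2⟩ := Fin.ext (by simp only [Fin.val_mk]; omega)
        rw [ht]
        exact hws1
      rw [hval]
      unfold cw
      split_ifs <;> omega
    · have hval : w t = (k'-1)*N + (2 + (t.val - (s+2))) := by
        have ht : t = ⟨s+2+(t.val-(s+2)), by omega⟩ := Fin.ext (by simp only [Fin.val_mk]; omega)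
        conv_lhs => rw [ht]
        exact key2 (t.val-(s+2)) (by omega) _
      rw [hval]
      unfold cw
      split_ifs <;> omega

theorem walks_length_n_minus_one_within_cycle (m n : ℕ) (hm : 1 ≤ m) (hn : 3 ≤ n)
    (k : ℕ) (hk : 1 ≤ k ∧ k ≤ m) (i j : ℕ)
    (hi : i = 1 ∨ ∃ ℓ, 2 ≤ ℓ ∧ ℓ ≤ n ∧ i = (k-1)*(n-1)+ℓ)
    (hj : j = 1 ∨ ∃ ℓ, 2 ≤ ℓ ∧ ℓ ≤ n ∧ j = (k-1)*(n-1)+ℓ) :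
    ((∃ w : Fin (n-1+1) → ℕ, IsWalk m n (n-1) w i j) ↔
      ((i = 1 ∧ j = (k-1)*(n-1)+n) ∨
       (i = (k-1)*(n-1)+2 ∧ j = 1) ∨
       (∃ ℓ, 3 ≤ ℓ ∧ ℓ ≤ n ∧ i = (k-1)*(n-1)+ℓ ∧ j = i - 1))) ∧
    (((i = 1 ∧ j = (k-1)*(n-1)+n) ∨
      (i = (k-1)*(n-1)+2 ∧ j = 1) ∨
      (∃ ℓ, 3 ≤ ℓ ∧ ℓ ≤ n ∧ i = (k-1)*(n-1)+ℓ ∧ j = i - 1)) →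
        ∃! w : Fin (n-1+1) → ℕ, IsWalk m n (n-1) w i j) := by
  obtain ⟨N, rfl⟩ : ∃ N, n = N + 1 := ⟨n - 1, by omega⟩
  have hN : 2 ≤ N := by omega
  obtain ⟨hk1, hkm⟩ := hk
  simp only [Nat.add_sub_cancel] at hi hj ⊢
  have huniq : ((i = 1 ∧ j = (k-1)*N+(N+1)) ∨ (i = (k-1)*N+2 ∧ j = 1) ∨
      (∃ ℓ, 3 ≤ ℓ ∧ ℓ ≤ N+1 ∧ i = (k-1)*N+ℓ ∧ j = i - 1)) →
      ∃! w : Fin (N+1) → ℕ, IsWalk m (N+1) N w i j := by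
    rintro (⟨rfl, rfl⟩ | ⟨rfl, rfl⟩ | ⟨ℓ, hℓ3, hℓN, rfl, rfl⟩)
    · refine ⟨fun t => cw N ((k-1)*N) ((k-1)*N) (N+2) t.val, ?_, ?_⟩
      · have h := ex_cw (m:=m) (N:=N) (k:=k) (k':=k) hN hk1 hkm hk1 hkm
          (ℓ:=N+2) (by omega) (by omega)
        rw [if_pos rfl, if_neg (by omega : ¬(N+2 = 2))] at h
        rw [show N+2-1 = N+1 from by omega] at h
        exact h
      · intro w' hw'
        obtain ⟨k'', h1, h2, hval⟩ := walk_from_hub hN ((k-1)*N) hw'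
        have hlast := hw'.2.1
        have hv := hval (Fin.last N)
        rw [hlast] at hv
        simp only [Fin.val_last] at hv
        have hcw : cw N ((k-1)*N) ((k''-1)*N) (N+2) N = (k''-1)*N + (N+1) := by
          unfold cw; split_ifs <;> omega
        have hj' : (k''-1)*N + (N+1) = (k-1)*N + (N+1) := by omega
        obtain ⟨hk'', -⟩ := repU h1 hk1 (by omega) (by omega) (by omega) (by omega) hj'
        subst hk''
        funext t
        exact hval t
    · refine ⟨fun t => cw N ((k-1)*N) ((k-1)*N) 2 t.val, ?_, ?_⟩
      · have h := ex_cw (m:=m) (N:=N) (k:=k) (k':=k) hN hk1 hkm hk1 hkm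
          (ℓ:=2) (le_refl 2) (by omega)
        rw [if_neg (by omega : ¬(2 = N+2)), if_pos rfl] at h
        exact h
      · intro w' hw'
        obtain ⟨k'', h1, h2, hval⟩ := walk_from_nonhub hN hk1 hkm (le_refl 2) (by omega) hw'
        funext t
        refine (hval t).trans ?_
        exact cw_two (Nat.lt_succ_iff.mp t.isLt)
    · have hj2 : (k-1)*N+ℓ-1 = (k-1)*N+(ℓ-1) := by omega
      refine ⟨fun t => cw N ((k-1)*N) ((k-1)*N) ℓ t.val, ?_, ?_⟩
      · have h := ex_cw (m:=m) (N:=N) (k:=k) (k':=k) hN hk1 hkm hk1 hkm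
          (ℓ:=ℓ) (by omega) (by omega)
        rw [if_neg (by omega : ¬(ℓ = N+2)), if_neg (by omega : ¬(ℓ = 2))] at h
        rw [hj2]
        exact h
      · intro w' hw'
        obtain ⟨k'', h1, h2, hval⟩ := walk_from_nonhub hN hk1 hkm (by omega) (by omega) hw'
        have hlast := hw'.2.1
        have hv := hval (Fin.last N)
        rw [hlast] at hv
        simp only [Fin.val_last] at hv
        have hcw : cw N ((k-1)*N) ((k''-1)*N) ℓ N = (k''-1)*N + (ℓ-1) := by
          unfold cw; split_ifs <;> omega
        have hj' : (k''-1)*N + (ℓ-1) = (k-1)*N + (ℓ-1) := by omega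
        obtain ⟨hk'', -⟩ := repU h1 hk1 (by omega) (by omega) (by omega) (by omega) hj'
        subst hk''
        funext t
        exact hval t
  refine ⟨⟨?_, fun h => (huniq h).exists⟩, huniq⟩
  rintro ⟨w, hw⟩
  rcases hi with rfl | ⟨ℓ, hℓ2, hℓN, rfl⟩
  · obtain ⟨k'', h1, h2, hval⟩ := walk_from_hub hN ((k-1)*N) hw
    have hlast : w (Fin.last N) = j := hw.2.1
    have hv := hval (Fin.last N)
    rw [hlast] at hv
    simp only [Fin.val_last] at hv
    have hcw : cw N ((k-1)*N) ((k''-1)*N) (N+2) N = (k''-1)*N + (N+1) := by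
      unfold cw; split_ifs <;> omega
    rcases hj with rfl | ⟨ℓ', hℓ'2, hℓ'N, rfl⟩
    · exfalso; omega
    · have hj' : (k''-1)*N + (N+1) = (k-1)*N + ℓ' := by omega
      obtain ⟨hk'', hℓ''⟩ := repU h1 hk1 (by omega) (by omega) hℓ'2 hℓ'N hj'
      left
      exact ⟨rfl, by omega⟩
  · obtain ⟨k'', h1, h2, hval⟩ := walk_from_nonhub hN hk1 hkm hℓ2 hℓN hw
    have hlast : w (Fin.last N) = j := hw.2.1
    have hv := hval (Fin.last N)
    rw [hlast] at hv
    simp only [Fin.val_last] at hv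
    by_cases hℓeq : ℓ = 2
    · subst hℓeq
      have hcw : cw N ((k-1)*N) ((k''-1)*N) 2 N = 1 := by
        unfold cw; split_ifs <;> omega
      rcases hj with rfl | ⟨ℓ', hℓ'2, hℓ'N, rfl⟩
      · right; left; exact ⟨rfl, rfl⟩
      · exfalso; omega
    · have hcw : cw N ((k-1)*N) ((k''-1)*N) ℓ N = (k''-1)*N + (ℓ-1) := by
        unfold cw; split_ifs <;> omega
      rcases hj with rfl | ⟨ℓ', hℓ'2, hℓ'N, rfl⟩
      · exfalso; omega
      · have hj' : (k-1)*N + ℓ' = (k''-1)*N + (ℓ-1) := by omega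
        obtain ⟨hk'', hℓ''⟩ := repU hk1 h1 hℓ'2 hℓ'N (by omega) (by omega) hj'
        right; right
        exact ⟨ℓ, by omega, hℓN, rfl, by omega⟩
end

section
/- In the oriented Dutch windmill graph D^m_n, for distinct cycle indices k ≠ r in {1,...,m}, there exists a walk of length n-1 from a vertex i in V^k \ {1} to a vertex j in V^r \ {1} if and only if there exists ℓ in {3,...,n} such that i = (k-1)(n-1)+ℓ and j = (r-1)(n-1)+(ℓ-1); moreover, in such cases this walk is unique. -/
/-! ### Auxiliary lemmas -/

lemma decomp_unique (n : ℕ) (hn : 3 ≤ n) {k₁ k₂ x₁ x₂ : ℕ}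
    (hk₁ : 1 ≤ k₁) (hk₂ : 1 ≤ k₂) (hx₁ : 2 ≤ x₁) (hx₁' : x₁ ≤ n)
    (hx₂ : 2 ≤ x₂) (hx₂' : x₂ ≤ n)
    (h : (k₁-1)*(n-1)+x₁ = (k₂-1)*(n-1)+x₂) : k₁ = k₂ ∧ x₁ = x₂ := by
  rcases Nat.lt_trichotomy k₁ k₂ with h1 | h1 | h1
  · exfalso
    have h2 : (k₁-1)*(n-1) + (n-1) ≤ (k₂-1)*(n-1) := by
      have h3 : (k₁-1)*(n-1) + (n-1) = ((k₁-1)+1)*(n-1) := by ring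
      rw [h3]
      exact Nat.mul_le_mul_right _ (by omega)
    omega
  · subst h1
    exact ⟨rfl, by omega⟩
  · exfalso
    have h2 : (k₂-1)*(n-1) + (n-1) ≤ (k₁-1)*(n-1) := by
      have h3 : (k₂-1)*(n-1) + (n-1) = ((k₂-1)+1)*(n-1) := by ring
      rw [h3]
      exact Nat.mul_le_mul_right _ (by omega)
    omega

lemma label_le (m n : ℕ) {k x : ℕ} (hk1 : 1 ≤ k) (hk2 : k ≤ m) (hx : x ≤ n) :
    (k-1)*(n-1)+x ≤ m*(n-1)+1 := by
  have h1 : (k-1)*(n-1) + (n-1) = ((k-1)+1)*(n-1) := by ring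
  have h2 : ((k-1)+1)*(n-1) ≤ m*(n-1) := Nat.mul_le_mul_right _ (by omega)
  omega

lemma succ_of_mid (m n : ℕ) (hn : 3 ≤ n) {k x b : ℕ} (hk1 : 1 ≤ k) (hk2 : k ≤ m)
    (hx1 : 2 ≤ x) (hx2 : x ≤ n-1)
    (h : windmillEdge m n ((k-1)*(n-1)+x) b) : b = (k-1)*(n-1)+x+1 := by
  rcases h with ⟨k', _, _, ha, _⟩ | ⟨k', i', hk'1, _, hi1, hi2, ha, hb⟩ | ⟨k', hk'1, _, ha, _⟩
  · omega
  · exact hb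
  · obtain ⟨_, hxe⟩ := decomp_unique n hn hk1 hk'1 hx1 (by omega) (by omega) le_rfl ha
    omega

lemma succ_of_top (m n : ℕ) (hn : 3 ≤ n) {k b : ℕ} (hk1 : 1 ≤ k) (hk2 : k ≤ m)
    (h : windmillEdge m n ((k-1)*(n-1)+n) b) : b = 1 := by
  rcases h with ⟨k', _, _, ha, _⟩ | ⟨k', i', hk'1, _, hi1, hi2, ha, hb⟩ | ⟨k', _, _, _, hb⟩
  · omega
  · obtain ⟨_, hxe⟩ := decomp_unique n hn hk1 hk'1 (by omega) le_rfl hi1 (by omega) ha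
    omega
  · exact hb

lemma succ_of_one (m n : ℕ) (hn : 3 ≤ n) {b : ℕ}
    (h : windmillEdge m n 1 b) : ∃ k', 1 ≤ k' ∧ k' ≤ m ∧ b = (k'-1)*(n-1)+2 := by
  rcases h with ⟨k', h1, h2, _, hb⟩ | ⟨k', i', _, _, hi1, _, ha, _⟩ | ⟨k', _, _, ha, _⟩
  · exact ⟨k', h1, h2, hb⟩
  · omega
  · omega

/-- The canonical walk of length `n-1` from `(k-1)(n-1)+ℓ` to `(r-1)(n-1)+(ℓ-1)`. -/
def wSpec (n k r ℓ : ℕ) : Fin (n-1+1) → ℕ := fun t =>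
  if (t:ℕ) ≤ n - ℓ then (k-1)*(n-1)+(ℓ+(t:ℕ))
  else if (t:ℕ) = n - ℓ + 1 then 1
  else (r-1)*(n-1)+((t:ℕ)-(n-ℓ))

lemma wSpec_isWalk (m n : ℕ) (hm : 2 ≤ m) (hn : 3 ≤ n) (k r ℓ : ℕ)
    (hk1 : 1 ≤ k) (hk2 : k ≤ m) (hr1 : 1 ≤ r) (hr2 : r ≤ m)
    (hℓ1 : 3 ≤ ℓ) (hℓ2 : ℓ ≤ n) :
    IsWalk m n (n-1) (wSpec n k r ℓ) ((k-1)*(n-1)+ℓ) ((r-1)*(n-1)+(ℓ-1)) := by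
  refine ⟨?_, ?_, ?_, ?_⟩
  · simp [wSpec]
  · simp only [wSpec, Fin.val_last]
    rw [if_neg (by omega), if_neg (by omega)]
    congr 1
    omega
  · intro t
    have htlt : (t:ℕ) < n-1+1 := t.isLt
    simp only [wSpec]
    split_ifs with h1 h2
    · exact ⟨by omega, label_le m n hk1 hk2 (by omega)⟩
    · exact ⟨le_rfl, by omega⟩
    · exact ⟨by omega, label_le m n hr1 hr2 (by omega)⟩
  · intro t
    have htlt : (t:ℕ) < n-1 := t.isLt
    simp only [wSpec, Fin.coe_castSucc, Fin.val_succ]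
    rcases Nat.lt_trichotomy (t:ℕ) (n-ℓ) with hc | hc | hc
    · rw [if_pos (by omega), if_pos (by omega)]
      exact Or.inr (Or.inl ⟨k, ℓ+(t:ℕ), hk1, hk2, by omega, by omega, rfl, by omega⟩)
    · rw [if_pos (by omega), if_neg (by omega), if_pos (by omega)]
      exact Or.inr (Or.inr ⟨k, hk1, hk2, by omega, rfl⟩)
    · rcases Nat.lt_trichotomy (t:ℕ) (n-ℓ+1) with hc2 | hc2 | hc2
      · omega
      · rw [if_neg (by omega), if_pos hc2, if_neg (by omega), if_neg (by omega)]
        exact Or.inl ⟨r, hr1, hr2, rfl, by omega⟩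
      · rw [if_neg (by omega), if_neg (by omega), if_neg (by omega), if_neg (by omega)]
        exact Or.inr (Or.inl ⟨r, (t:ℕ)-(n-ℓ), hr1, hr2, by omega, by omega, rfl, by omega⟩)

lemma walk_forced (m n : ℕ) (hm : 2 ≤ m) (hn : 3 ≤ n)
    (k r ℓ ℓ' : ℕ) (hk1 : 1 ≤ k) (hk2 : k ≤ m) (hr1 : 1 ≤ r) (hr2 : r ≤ m)
    (hℓ1 : 2 ≤ ℓ) (hℓ2 : ℓ ≤ n) (hd1 : 2 ≤ ℓ') (hd2 : ℓ' ≤ n)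
    (w : Fin (n-1+1) → ℕ)
    (hw : IsWalk m n (n-1) w ((k-1)*(n-1)+ℓ) ((r-1)*(n-1)+ℓ')) :
    3 ≤ ℓ ∧ ℓ' = ℓ - 1 ∧ w = wSpec n k r ℓ := by
  obtain ⟨hw0, hwl, hbd, hstep⟩ := hw
  have hnn : 0 < n-1+1 := Nat.succ_pos _
  set u : ℕ → ℕ := fun t => w ⟨t % (n-1+1), Nat.mod_lt _ hnn⟩ with hu
  have huw : ∀ t : Fin (n-1+1), u (t : ℕ) = w t := by
    intro t
    simp only [hu]
    congr 1
    exact Fin.ext (Nat.mod_eq_of_lt t.isLt)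
  have hu0 : u 0 = (k-1)*(n-1)+ℓ := by
    have h := huw 0
    simp only [Fin.val_zero] at h
    rw [h]; exact hw0
  have hulast : u (n-1) = (r-1)*(n-1)+ℓ' := by
    have h := huw (Fin.last (n-1))
    rw [Fin.val_last] at h
    rw [h]; exact hwl
  have hedge : ∀ t, t < n-1 → windmillEdge m n (u t) (u (t+1)) := by
    intro t ht
    have h := hstep ⟨t, ht⟩
    rw [← huw, ← huw] at h
    exact h
  -- Phase 1: forced values until the hub
  have h1 : ∀ t, t ≤ n - ℓ → u t = (k-1)*(n-1)+(ℓ+t) := by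
    intro t
    induction t with
    | zero => intro _; simpa using hu0
    | succ t ih =>
      intro ht
      have e := hedge t (by omega)
      rw [ih (by omega)] at e
      have hb := succ_of_mid m n hn hk1 hk2 (x := ℓ+t) (by omega) (by omega) e
      omega
  -- Phase 2: ℓ ≥ 3
  have hl3 : 3 ≤ ℓ := by
    by_contra hcon
    have hl2 : ℓ = 2 := by omega
    have ha := h1 (n-ℓ) le_rfl
    have e := hedge (n-ℓ) (by omega)
    rw [ha, show ℓ+(n-ℓ) = n from by omega] at e
    have hb := succ_of_top m n hn hk1 hk2 e
    rw [show n-ℓ+1 = n-1 from by omega] at hb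
    omega
  -- Phase 3: reaching the hub
  have ht0 : u (n-ℓ) = (k-1)*(n-1)+n := by
    have h := h1 (n-ℓ) le_rfl
    rw [show ℓ+(n-ℓ) = n from by omega] at h
    exact h
  have hhub : u (n-ℓ+1) = 1 := by
    have e := hedge (n-ℓ) (by omega)
    rw [ht0] at e
    exact succ_of_top m n hn hk1 hk2 e
  obtain ⟨k'', hk''1, hk''2, hk''b⟩ := succ_of_one m n hn (b := u (n-ℓ+1+1)) (by
    have e := hedge (n-ℓ+1) (by omega)
    rwa [hhub] at e)
  -- Phase 5: forced values after the hub
  have h5 : ∀ s, 2 ≤ s → s ≤ ℓ-1 → u (n-ℓ+s) = (k''-1)*(n-1)+s := by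
    intro s
    induction s with
    | zero => omega
    | succ s ih =>
      intro h2 h3
      rcases Nat.lt_or_ge s 2 with hs | hs
      · have hs1 : s = 1 := by omega
        subst hs1
        rw [show n-ℓ+(1+1) = n-ℓ+1+1 from by omega]
        exact hk''b
      · have e := hedge (n-ℓ+s) (by omega)
        rw [ih (by omega) (by omega)] at e
        have hb := succ_of_mid m n hn hk''1 hk''2 (x := s) hs (by omega) e
        rw [show n-ℓ+(s+1) = n-ℓ+s+1 from by omega, hb]
        omega
  -- Phase 6: endpoint identification
  have hend := h5 (ℓ-1) (by omega) le_rfl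
  rw [show n-ℓ+(ℓ-1) = n-1 from by omega, hulast] at hend
  obtain ⟨hkr2, hll⟩ := decomp_unique n hn hr1 hk''1 hd1 hd2 (by omega) (by omega) hend
  refine ⟨hl3, hll, ?_⟩
  funext t
  rw [← huw t]
  rcases Nat.lt_trichotomy (t:ℕ) (n-ℓ+1) with hcase | hcase | hcase
  · have hv := h1 (t:ℕ) (by omega)
    simp only [wSpec]
    rw [if_pos (by omega)]
    exact hv
  · simp only [wSpec]
    rw [if_neg (by omega), if_pos hcase, hcase]
    exact hhub
  · have htlt : (t:ℕ) < n-1+1 := t.isLt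
    have hs2 : 2 ≤ (t:ℕ) - (n-ℓ) := by omega
    have hsl : (t:ℕ) - (n-ℓ) ≤ ℓ-1 := by omega
    have hv := h5 ((t:ℕ) - (n-ℓ)) hs2 hsl
    rw [show n-ℓ+((t:ℕ)-(n-ℓ)) = (t:ℕ) from by omega, ← hkr2] at hv
    simp only [wSpec]
    rw [if_neg (by omega), if_neg (by omega)]
    exact hv

theorem walks_length_n_minus_one_between_cycles (m n : ℕ) (hm : 2 ≤ m) (hn : 3 ≤ n)
    (k r : ℕ) (hk : 1 ≤ k ∧ k ≤ m) (hr : 1 ≤ r ∧ r ≤ m) (hkr : k ≠ r) (i j : ℕ)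
    (hi : ∃ ℓ, 2 ≤ ℓ ∧ ℓ ≤ n ∧ i = (k-1)*(n-1)+ℓ)
    (hj : ∃ ℓ, 2 ≤ ℓ ∧ ℓ ≤ n ∧ j = (r-1)*(n-1)+ℓ) :
    ((∃ w : Fin (n-1+1) → ℕ, IsWalk m n (n-1) w i j) ↔
      (∃ ℓ, 3 ≤ ℓ ∧ ℓ ≤ n ∧ i = (k-1)*(n-1)+ℓ ∧ j = (r-1)*(n-1)+(ℓ-1))) ∧
    ((∃ ℓ, 3 ≤ ℓ ∧ ℓ ≤ n ∧ i = (k-1)*(n-1)+ℓ ∧ j = (r-1)*(n-1)+(ℓ-1)) →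
      ∃! w : Fin (n-1+1) → ℕ, IsWalk m n (n-1) w i j) := by
  obtain ⟨hk1, hk2⟩ := hk
  obtain ⟨hr1, hr2⟩ := hr
  obtain ⟨ℓi, hi1, hi2, hieq⟩ := hi
  obtain ⟨ℓj, hj1, hj2, hjeq⟩ := hj
  subst hieq hjeq
  constructor
  · constructor
    · rintro ⟨w, hw⟩
      obtain ⟨h3, hE, -⟩ :=
        walk_forced m n hm hn k r ℓi ℓj hk1 hk2 hr1 hr2 hi1 hi2 hj1 hj2 w hw
      exact ⟨ℓi, h3, hi2, rfl, by rw [hE]⟩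
    · rintro ⟨ℓ, h3, hln, hieq2, hjeq2⟩
      have hℓ : ℓ = ℓi := by omega
      subst hℓ
      rw [hjeq2]
      exact ⟨wSpec n k r ℓ, wSpec_isWalk m n hm hn k r ℓ hk1 hk2 hr1 hr2 h3 hln⟩
  · rintro ⟨ℓ, h3, hln, hieq2, hjeq2⟩
    have hℓ : ℓ = ℓi := by omega
    subst hℓ
    have hℓj : ℓj = ℓ - 1 := by omega
    subst hℓj
    refine ⟨wSpec n k r ℓ, wSpec_isWalk m n hm hn k r ℓ hk1 hk2 hr1 hr2 h3 hln, ?_⟩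
    intro w hw
    exact (walk_forced m n hm hn k r ℓ (ℓ-1) hk1 hk2 hr1 hr2 hi1 hi2
      (by omega) (by omega) w hw).2.2
end

section
/- In the oriented Dutch windmill graph D^m_n, for any vertices i, j, there exists a walk of length 2n-1 from i to j if and only if there exists a walk of length n-1 from i to j; and when such walks exist, there are exactly m distinct walks of length 2n-1 from i to j. -/
namespace WindmillAux

/-- Phase of a vertex: 0 for the hub, position along a blade otherwise. -/
def P (n a : ℕ) : ℕ := if a = 1 then 0 else (a-2) % (n-1) + 1

lemma P_le (n a : ℕ) (hn : 3 ≤ n) : P n a ≤ n - 1 := by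
  unfold P; split
  · omega
  · have := Nat.mod_lt (a-2) (y := n-1) (by omega); omega

lemma P_eq_zero_iff {n a : ℕ} : P n a = 0 ↔ a = 1 := by
  unfold P; split <;> simp_all

lemma edge_cases {m n a b : ℕ} (hn : 3 ≤ n) (h : windmillEdge m n a b) :
    (a = 1 ∧ ∃ k, 1 ≤ k ∧ k ≤ m ∧ b = (k-1)*(n-1)+2) ∨
    (2 ≤ a ∧ (a-2) % (n-1) ≤ n-3 ∧ b = a+1) ∨
    (2 ≤ a ∧ (a-2) % (n-1) = n-2 ∧ b = 1) := by
  rcases h with ⟨k, hk1, hkm, ha, hb⟩ | ⟨k, i, hk1, hkm, hi2, hin, ha, hb⟩ |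
    ⟨k, hk1, hkm, ha, hb⟩
  · exact Or.inl ⟨ha, k, hk1, hkm, hb⟩
  · refine Or.inr (Or.inl ⟨by omega, ?_, hb⟩)
    have h2 : a - 2 = (i-2) + (k-1)*(n-1) := by omega
    rw [h2, Nat.add_mul_mod_self_right, Nat.mod_eq_of_lt (by omega)]; omega
  · refine Or.inr (Or.inr ⟨by omega, ?_, hb⟩)
    have h2 : a - 2 = (n-2) + (k-1)*(n-1) := by omega
    rw [h2, Nat.add_mul_mod_self_right, Nat.mod_eq_of_lt (by omega)]

lemma P_step {m n a b : ℕ} (hn : 3 ≤ n) (h : windmillEdge m n a b) :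
    P n b = (P n a + 1) % n := by
  rcases edge_cases hn h with ⟨ha, k, hk1, hkm, hb⟩ | ⟨ha, hq, hb⟩ | ⟨ha, hq, hb⟩
  · subst ha hb
    have hb1 : (k-1)*(n-1)+2 ≠ 1 := by omega
    have h2 : (k-1)*(n-1)+2-2 = 0 + (k-1)*(n-1) := by omega
    unfold P
    rw [if_neg hb1, if_pos rfl, h2, Nat.add_mul_mod_self_right]
    rw [Nat.zero_mod, Nat.mod_eq_of_lt (by omega)]
  · subst hb
    have ha1 : a ≠ 1 := by omega
    have hb1 : a + 1 ≠ 1 := by omega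
    unfold P
    rw [if_neg ha1, if_neg hb1]
    have h2 : a + 1 - 2 = (a-2) + 1 := by omega
    rw [h2, Nat.add_mod, Nat.mod_eq_of_lt (show 1 < n-1 by omega),
      Nat.mod_eq_of_lt (show (a-2) % (n-1) + 1 < n-1 by omega),
      Nat.mod_eq_of_lt (show (a-2) % (n-1) + 1 + 1 < n by omega)]
  · subst hb
    have ha1 : a ≠ 1 := by omega
    unfold P
    rw [if_pos rfl, if_neg ha1, hq]
    have h2 : n - 2 + 1 + 1 = n := by omega
    rw [h2, Nat.mod_self]

lemma walk_phase {m n : ℕ} (hn : 3 ≤ n) (W : ℕ → ℕ) (r : ℕ)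
    (He : ∀ s, s < r → windmillEdge m n (W s) (W (s+1))) :
    ∀ s, s ≤ r → P n (W s) = (P n (W 0) + s) % n := by
  intro s
  induction s with
  | zero =>
    intro _
    rw [Nat.add_zero, Nat.mod_eq_of_lt (by have := P_le n (W 0) hn; omega)]
  | succ s ih =>
    intro hs
    rw [P_step hn (He s (by omega)), ih (by omega), Nat.mod_add_mod, Nat.add_assoc]

lemma det {m n a b b' : ℕ} (hn : 3 ≤ n) (ha : a ≠ 1)
    (h : windmillEdge m n a b) (h' : windmillEdge m n a b') : b = b' := by
  rcases edge_cases hn h with ⟨h1,_⟩|⟨_,hq,hb⟩|⟨_,hq,hb⟩ <;>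
    rcases edge_cases hn h' with ⟨h1',_⟩|⟨_,hq',hb'⟩|⟨_,hq',hb'⟩ <;> omega

lemma force {m n : ℕ} (hn : 3 ≤ n) (W : ℕ → ℕ) (r t k : ℕ)
    (He : ∀ s, s < r → windmillEdge m n (W s) (W (s+1)))
    (h1 : W (t+1) = (k-1)*(n-1)+2) :
    ∀ s, 1 ≤ s → s ≤ n-1 → t + s ≤ r → W (t+s) = (k-1)*(n-1)+1+s := by
  intro s
  induction s with
  | zero => omega
  | succ s ih =>
    intro _ hs hr
    by_cases hs0 : s = 0
    · subst hs0
      have e : t + (0+1) = t + 1 := by omega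
      rw [e, h1]
    · have hW := ih (by omega) (by omega) (by omega)
      have he := He (t+s) (by omega)
      rcases edge_cases hn he with ⟨h1',_⟩|⟨_,hq,hb⟩|⟨_,hq,hb⟩
      · rw [hW] at h1'; omega
      · have e : t + (s+1) = (t+s) + 1 := by omega
        rw [e, hb, hW]; omega
      · exfalso
        rw [hW] at hq
        have e : (k-1)*(n-1)+1+s-2 = (s-1) + (k-1)*(n-1) := by omega
        rw [e, Nat.add_mul_mod_self_right, Nat.mod_eq_of_lt (by omega)] at hq
        omega

lemma prefix_eq {m n : ℕ} (hn : 3 ≤ n) (W U : ℕ → ℕ) (r r' d : ℕ)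
    (HeW : ∀ s, s < r → windmillEdge m n (W s) (W (s+1)))
    (HeU : ∀ s, s < r' → windmillEdge m n (U s) (U (s+1)))
    (h0 : W 0 = U 0)
    (hne : ∀ t, t < d → W t ≠ 1) (hd : d ≤ r) (hd' : d ≤ r') :
    ∀ s, s ≤ d → W s = U s := by
  intro s
  induction s with
  | zero => intro _; exact h0
  | succ s ih =>
    intro hs
    have hWU := ih (by omega)
    have := det hn (hne s (by omega)) (HeW s (by omega))
      (by rw [hWU]; exact HeU s (by omega))
    exact this

lemma unbundle {m n r : ℕ} {w : Fin (r+1) → ℕ} {i j : ℕ} (hw : IsWalk m n r w i j) :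
    ∃ W : ℕ → ℕ, W 0 = i ∧ W r = j ∧ (∀ s, s ≤ r → 1 ≤ W s ∧ W s ≤ m*(n-1)+1) ∧
      (∀ s, s < r → windmillEdge m n (W s) (W (s+1))) ∧
      ∀ t : Fin (r+1), W t.val = w t := by
  obtain ⟨h0, hlast, hrange, hedge⟩ := hw
  refine ⟨fun s => w ⟨s % (r+1), Nat.mod_lt _ (by omega)⟩, ?_, ?_, ?_, ?_, ?_⟩
  · show w ⟨0 % (r+1), Nat.mod_lt _ (by omega)⟩ = i
    have e : (⟨0 % (r+1), Nat.mod_lt _ (by omega)⟩ : Fin (r+1)) = 0 := by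
      ext; simp
    rw [e]; exact h0
  · show w ⟨r % (r+1), Nat.mod_lt _ (by omega)⟩ = j
    have e : (⟨r % (r+1), Nat.mod_lt _ (by omega)⟩ : Fin (r+1)) = Fin.last r := by
      ext; simp [Nat.mod_eq_of_lt]
    rw [e]; exact hlast
  · intro s _; exact hrange _
  · intro s hs
    have e1 : (⟨s % (r+1), Nat.mod_lt _ (by omega)⟩ : Fin (r+1)) =
        Fin.castSucc ⟨s, hs⟩ := by
      ext; simp [Nat.mod_eq_of_lt (by omega : s < r+1)]
    have e2 : (⟨(s+1) % (r+1), Nat.mod_lt _ (by omega)⟩ : Fin (r+1)) =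
        Fin.succ ⟨s, hs⟩ := by
      ext; simp [Nat.mod_eq_of_lt (by omega : s+1 < r+1)]
    show windmillEdge m n (w ⟨s % (r+1), Nat.mod_lt _ (by omega)⟩)
      (w ⟨(s+1) % (r+1), Nat.mod_lt _ (by omega)⟩)
    rw [e1, e2]; exact hedge ⟨s, hs⟩
  · intro t
    show w ⟨t.val % (r+1), Nat.mod_lt _ (by omega)⟩ = w t
    have e : (⟨t.val % (r+1), Nat.mod_lt _ (by omega)⟩ : Fin (r+1)) = t := by
      ext; simp [Nat.mod_eq_of_lt t.isLt]
    rw [e]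

lemma bundle {m n r i j : ℕ} (W : ℕ → ℕ) (h0 : W 0 = i) (hr : W r = j)
    (hrange : ∀ s, s ≤ r → 1 ≤ W s ∧ W s ≤ m*(n-1)+1)
    (hedge : ∀ s, s < r → windmillEdge m n (W s) (W (s+1))) :
    IsWalk m n r (fun t => W t.val) i j := by
  refine ⟨?_, ?_, ?_, ?_⟩
  · show W ((0 : Fin (r+1)).val) = i
    rw [Fin.val_zero]; exact h0
  · show W ((Fin.last r).val) = j
    rw [Fin.val_last]; exact hr
  · intro t; exact hrange t.val (by omega)
  · intro t
    have := hedge t.val t.isLt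
    simpa using this

end WindmillAux

theorem walks_length_two_n_minus_one (m n : ℕ) (hm : 1 ≤ m) (hn : 3 ≤ n)
    (i j : ℕ) (hi : 1 ≤ i ∧ i ≤ m*(n-1)+1) (hj : 1 ≤ j ∧ j ≤ m*(n-1)+1) :
    ((∃ w : Fin (2*n-1+1) → ℕ, IsWalk m n (2*n-1) w i j) ↔
      (∃ w : Fin (n-1+1) → ℕ, IsWalk m n (n-1) w i j)) ∧
    ((∃ w : Fin (n-1+1) → ℕ, IsWalk m n (n-1) w i j) →
      numWalks m n (2*n-1) i j = m) := by
  classical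
  set p := WindmillAux.P n i with hp
  have hple : p ≤ n - 1 := WindmillAux.P_le n i hn
  have hpzero : p = 0 ↔ i = 1 := WindmillAux.P_eq_zero_iff
  set d0 : ℕ := if i = 1 then 0 else n - p with hd0
  have hd0le : d0 ≤ n - 1 := by
    rw [hd0]; split
    · omega
    · rename_i h; have : p ≠ 0 := fun h0 => h (hpzero.mp h0); omega
  have hkey : (p + d0) % n = 0 := by
    rw [hd0]; split
    · rename_i h
      have h0 : p = 0 := hpzero.mpr h
      rw [h0]; simp
    · rename_i h
      have : p ≠ 0 := fun h0 => h (hpzero.mp h0)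
      have e : p + (n - p) = n := by omega
      rw [e, Nat.mod_self]
  have hkey2 : (p + (d0+n)) % n = 0 := by
    rw [← Nat.add_assoc, Nat.add_mod_right]; exact hkey
  have hhub : ∀ (r : ℕ) (W : ℕ → ℕ), W 0 = i →
      (∀ s, s < r → windmillEdge m n (W s) (W (s+1))) →
      ∀ t, t ≤ r → (p + t) % n = 0 → W t = 1 := by
    intro r W h0 He t ht hmod
    have hph := WindmillAux.walk_phase hn W r He t ht
    rw [h0, ← hp, hmod] at hph
    exact WindmillAux.P_eq_zero_iff.mp hph
  have hnonhub : ∀ t, t < d0 → (p + t) % n ≠ 0 := by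
    intro t ht
    have hi1 : i ≠ 1 := by
      intro h; rw [hd0, if_pos h] at ht; omega
    have hp1 : p ≠ 0 := fun h0 => hi1 (hpzero.mp h0)
    rw [hd0, if_neg hi1] at ht
    rw [Nat.mod_eq_of_lt (by omega)]; omega
  -- Forward direction: splice out the inserted cycle.
  have forward : (∃ w : Fin (2*n-1+1) → ℕ, IsWalk m n (2*n-1) w i j) →
      (∃ w : Fin (n-1+1) → ℕ, IsWalk m n (n-1) w i j) := by
    rintro ⟨w, hw⟩
    obtain ⟨W, hW0, hWr, hWrange, hWedge, -⟩ := WindmillAux.unbundle hw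
    have hWd0 : W d0 = 1 := hhub _ W hW0 hWedge d0 (by omega) hkey
    have hWd0n : W (d0+n) = 1 := hhub _ W hW0 hWedge (d0+n) (by omega) hkey2
    refine ⟨_, WindmillAux.bundle (fun s => if s ≤ d0 then W s else W (s+n)) ?_ ?_ ?_ ?_⟩
    · beta_reduce
      rw [if_pos (by omega : (0:ℕ) ≤ d0)]; exact hW0
    · beta_reduce
      by_cases hc : n-1 ≤ d0
      · rw [if_pos hc]
        have hd : d0 = n-1 := by omega
        have h2 : W (n-1+n) = j := by
          have e : n-1+n = 2*n-1 := by omega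
          rw [e]; exact hWr
        have h3 : W (n-1+n) = 1 := by rw [← hd]; exact hWd0n
        have h4 : W (n-1) = 1 := by rw [← hd]; exact hWd0
        rw [h4, ← h3, h2]
      · rw [if_neg hc]
        have e : n-1+n = 2*n-1 := by omega
        rw [e]; exact hWr
    · intro s hs
      beta_reduce
      by_cases h1 : s ≤ d0
      · rw [if_pos h1]; exact hWrange s (by omega)
      · rw [if_neg h1]; exact hWrange (s+n) (by omega)
    · intro s hs
      beta_reduce
      by_cases h1 : s+1 ≤ d0
      · rw [if_pos (by omega : s ≤ d0), if_pos h1]; exact hWedge s (by omega)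
      · rw [if_neg h1]
        by_cases h2 : s ≤ d0
        · have hs' : s = d0 := by omega
          have he := hWedge (d0+n) (by omega)
          rw [hWd0n] at he
          have e : d0+1+n = d0+n+1 := by omega
          rw [if_pos h2, hs', hWd0, e]
          exact he
        · rw [if_neg h2]
          have e : s+1+n = (s+n)+1 := by omega
          rw [e]; exact hWedge (s+n) (by omega)
  -- Counting: there are exactly `m` walks of length `2n-1`.
  have count : (∃ w : Fin (n-1+1) → ℕ, IsWalk m n (n-1) w i j) →
      numWalks m n (2*n-1) i j = m := by
    rintro ⟨u, hu⟩
    obtain ⟨U, hU0, hUr, hUrange, hUedge, -⟩ := WindmillAux.unbundle hu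
    have hUd0 : U d0 = 1 := hhub _ U hU0 hUedge d0 (by omega) hkey
    set Wk : ℕ → ℕ → ℕ := fun k s =>
      if s ≤ d0 then U s else if s < d0 + n then (k-1)*(n-1)+1+(s-d0) else U (s-n)
      with hWkdef
    have ev1 : ∀ k s, s ≤ d0 → Wk k s = U s := by
      intro k s h
      show (if s ≤ d0 then U s else _) = U s
      rw [if_pos h]
    have ev2 : ∀ k s, d0 < s → s < d0+n → Wk k s = (k-1)*(n-1)+1+(s-d0) := by
      intro k s h h'
      show (if s ≤ d0 then U s else if s < d0+n then (k-1)*(n-1)+1+(s-d0) else U (s-n)) = _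
      rw [if_neg (by omega), if_pos h']
    have ev3 : ∀ k s, d0+n ≤ s → Wk k s = U (s-n) := by
      intro k s h
      show (if s ≤ d0 then U s else if s < d0+n then (k-1)*(n-1)+1+(s-d0) else U (s-n)) = _
      rw [if_neg (by omega), if_neg (by omega)]
    have hWkwalk : ∀ k, 1 ≤ k → k ≤ m →
        IsWalk m n (2*n-1) (fun t => Wk k t.val) i j := by
      intro k hk1 hkm
      have hmulm : (k-1)*(n-1) + (n-1) ≤ m*(n-1) := by
        have h1 : (k-1)*(n-1) + (n-1) = ((k-1)+1)*(n-1) := (Nat.succ_mul (k-1) (n-1)).symm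
        have h2 : ((k-1)+1)*(n-1) ≤ m*(n-1) := Nat.mul_le_mul_right _ (by omega)
        omega
      apply WindmillAux.bundle
      · rw [ev1 k 0 (by omega)]; exact hU0
      · rw [ev3 k (2*n-1) (by omega)]
        have e : 2*n-1-n = n-1 := by omega
        rw [e]; exact hUr
      · intro s hs
        by_cases h1 : s ≤ d0
        · rw [ev1 k s h1]; exact hUrange s (by omega)
        · by_cases h2 : s < d0+n
          · rw [ev2 k s (by omega) h2]
            constructor
            · omega
            · omega
          · rw [ev3 k s (by omega)]; exact hUrange (s-n) (by omega)
      · intro s hs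
        by_cases h1 : s+1 ≤ d0
        · rw [ev1 k s (by omega), ev1 k (s+1) h1]; exact hUedge s (by omega)
        · by_cases h2 : s ≤ d0
          · have hs' : s = d0 := by omega
            rw [ev1 k s h2, hs', hUd0, ev2 k (d0+1) (by omega) (by omega)]
            exact Or.inl ⟨k, hk1, hkm, rfl, by omega⟩
          · by_cases h3 : s+1 < d0+n
            · rw [ev2 k s (by omega) (by omega), ev2 k (s+1) (by omega) h3]
              exact Or.inr (Or.inl ⟨k, (s-d0)+1, hk1, hkm, by omega, by omega,
                by omega, by omega⟩)
            · by_cases h4 : s < d0+n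
              · rw [ev2 k s (by omega) h4, ev3 k (s+1) (by omega)]
                have e : s+1-n = d0 := by omega
                rw [e, hUd0]
                exact Or.inr (Or.inr ⟨k, hk1, hkm, by omega, rfl⟩)
              · rw [ev3 k s (by omega), ev3 k (s+1) (by omega)]
                have e : s+1-n = (s-n)+1 := by omega
                rw [e]; exact hUedge (s-n) (by omega)
    have hbij : Function.Bijective (fun k0 : Fin m =>
        (⟨fun t => Wk ((k0:ℕ)+1) t.val,
          hWkwalk ((k0:ℕ)+1) (by omega) (by have := k0.isLt; omega)⟩ :
          {w : Fin (2*n-1+1) → ℕ // IsWalk m n (2*n-1) w i j})) := by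
      constructor
      · intro k0 k0' h
        have h2 := congrArg Subtype.val h
        have h3 : Wk ((k0:ℕ)+1) (d0+1) = Wk ((k0':ℕ)+1) (d0+1) :=
          congrFun h2 ⟨d0+1, by omega⟩
        rw [ev2 _ (d0+1) (by omega) (by omega), ev2 _ (d0+1) (by omega) (by omega)] at h3
        have e1 : (k0:ℕ)+1-1 = (k0:ℕ) := by omega
        have e1' : (k0':ℕ)+1-1 = (k0':ℕ) := by omega
        rw [e1, e1'] at h3
        have h4 : (k0:ℕ)*(n-1) = (k0':ℕ)*(n-1) := by omega
        exact Fin.ext (Nat.eq_of_mul_eq_mul_right (by omega : 0 < n-1) h4)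
      · rintro ⟨w, hw⟩
        obtain ⟨W, hW0, hWr, hWrange, hWedge, hWeq⟩ := WindmillAux.unbundle hw
        have hWd0 : W d0 = 1 := hhub _ W hW0 hWedge d0 (by omega) hkey
        have hWd0n : W (d0+n) = 1 := hhub _ W hW0 hWedge (d0+n) (by omega) hkey2
        have hne : ∀ t, t < d0 → W t ≠ 1 := by
          intro t ht h1
          have hph := WindmillAux.walk_phase hn W _ hWedge t (by omega : t ≤ 2*n-1)
          rw [h1, hW0, ← hp] at hph
          have h0 : WindmillAux.P n 1 = 0 := WindmillAux.P_eq_zero_iff.mpr rfl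
          exact hnonhub t ht (by rw [← hph, h0])
        have hed := hWedge d0 (by omega)
        rw [hWd0] at hed
        rcases WindmillAux.edge_cases hn hed with ⟨-, k, hk1, hkm, hb⟩ |
          ⟨h2,_,_⟩ | ⟨h2,_,_⟩
        · have hS : ∀ s, s ≤ 2*n-1 → Wk k s = W s := by
            intro s hs
            by_cases h1 : s ≤ d0
            · rw [ev1 k s h1]
              exact (WindmillAux.prefix_eq hn W U (2*n-1) (n-1) d0 hWedge hUedge
                (by rw [hW0, hU0]) hne (by omega) (by omega) s h1).symm
            · by_cases h2 : s < d0+n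
              · rw [ev2 k s (by omega) h2]
                have hf := WindmillAux.force hn W (2*n-1) d0 k hWedge hb (s-d0)
                  (by omega) (by omega) (by omega)
                have e : d0 + (s-d0) = s := by omega
                rw [e] at hf
                exact hf.symm
              · rw [ev3 k s (by omega)]
                by_cases h3 : s = d0+n
                · rw [h3]
                  have e : d0+n-n = d0 := by omega
                  rw [e, hUd0, hWd0n]
                · have hd0lt : d0 < n-1 := by omega
                  have hedW := hWedge (d0+n) (by omega)
                  rw [hWd0n] at hedW
                  rcases WindmillAux.edge_cases hn hedW with ⟨-, k2, hk21, hk2m, hb2⟩ |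
                    ⟨h9,_,_⟩ | ⟨h9,_,_⟩
                  · have hedU := hUedge d0 (by omega)
                    rw [hUd0] at hedU
                    rcases WindmillAux.edge_cases hn hedU with ⟨-, k3, hk31, hk3m, hb3⟩ |
                      ⟨h9,_,_⟩ | ⟨h9,_,_⟩
                    · have hWend := WindmillAux.force hn W (2*n-1) (d0+n) k2 hWedge hb2
                        (n-1-d0) (by omega) (by omega) (by omega)
                      have hUend := WindmillAux.force hn U (n-1) d0 k3 hUedge hb3
                        (n-1-d0) (by omega) (by omega) (by omega)
                      have e1 : d0+n+(n-1-d0) = 2*n-1 := by omega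
                      have e2 : d0+(n-1-d0) = n-1 := by omega
                      rw [e1, hWr] at hWend
                      rw [e2, hUr] at hUend
                      have hk23 : k2 = k3 := by
                        have h4 : (k2-1)*(n-1) = (k3-1)*(n-1) := by omega
                        have := Nat.eq_of_mul_eq_mul_right (by omega : 0 < n-1) h4
                        omega
                      have hWs := WindmillAux.force hn W (2*n-1) (d0+n) k2 hWedge hb2
                        (s-(d0+n)) (by omega) (by omega) (by omega)
                      have hUs := WindmillAux.force hn U (n-1) d0 k3 hUedge hb3
                        (s-(d0+n)) (by omega) (by omega) (by omega)
                      have e3 : d0+n+(s-(d0+n)) = s := by omega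
                      have e4 : d0+(s-(d0+n)) = s-n := by omega
                      rw [e3] at hWs
                      rw [e4] at hUs
                      rw [hUs, hWs, hk23]
                    · omega
                    · omega
                  · omega
                  · omega
          refine ⟨⟨k-1, by omega⟩, ?_⟩
          apply Subtype.ext
          funext t
          show Wk ((k-1)+1) t.val = w t
          have ek : (k-1)+1 = k := by omega
          rw [ek, ← hWeq t]
          exact hS t.val (by have := t.isLt; omega)
        · omega
        · omega
    unfold numWalks
    rw [← Nat.card_eq_of_bijective _ hbij]
    simp [Nat.card_eq_fintype_card]
  refine ⟨⟨forward, ?_⟩, count⟩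
  intro h
  have hc := count h
  unfold numWalks at hc
  have hpos : Nat.card {w : Fin (2*n-1+1) → ℕ // IsWalk m n (2*n-1) w i j} ≠ 0 := by
    omega
  obtain ⟨⟨⟨w, hw⟩⟩, -⟩ := Nat.card_ne_zero.mp hpos
  exact ⟨w, hw⟩
end

section
/- In the oriented Dutch windmill graph D^m_n, for any p ≥ 2 and vertices i, j, there exists a walk of length pn-1 from i to j if and only if there exists a walk of length n-1 from i to j; and when such walks exist, the number of walks of length pn-1 from i to j equals m^(p-1). -/
def DWnxt (n a : ℕ) : ℕ := if (a-1) % (n-1) = 0 then 1 else a+1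

def DWtraj (n i : ℕ) (c : ℕ → ℕ) : ℕ → ℕ
  | 0 => i
  | t+1 => if DWtraj n i c t = 1 then (c t)*(n-1)+2 else DWnxt n (DWtraj n i c t)

def DWD (n i : ℕ) : ℕ := if i = 1 then 0 else n - 1 - (i-2) % (n-1)
def DWe (n i : ℕ) : ℕ := if i = 1 then 0 else (i-2) % (n-1) + 1

lemma DWtraj_zero (n i c) : DWtraj n i c 0 = i := rfl
lemma DWtraj_succ (n i c t) : DWtraj n i c (t+1) =
    if DWtraj n i c t = 1 then (c t)*(n-1)+2 else DWnxt n (DWtraj n i c t) := rfl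

lemma modh {b : ℕ} (q : ℕ) {v : ℕ} (hv : v < b) : (q*b+v) % b = v := by
  rw [Nat.mul_comm, Nat.mul_add_mod, Nat.mod_eq_of_lt hv]

lemma divh {b : ℕ} (q : ℕ) {v : ℕ} (hv : v < b) : (q*b+v) / b = q := by
  rw [Nat.mul_comm, Nat.mul_add_div (by omega : 0 < b), Nat.div_eq_of_lt hv, Nat.add_zero]

/-- decomposition of a non-hub vertex -/
lemma DWdecomp {m n a : ℕ} (hm : 1 ≤ m) (hn : 3 ≤ n) (h2 : 2 ≤ a) (hN : a ≤ m*(n-1)+1) :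
    ∃ q rr, a = q*(n-1)+rr+2 ∧ q < m ∧ rr ≤ n-2 ∧ q = (a-2)/(n-1) ∧ rr = (a-2)%(n-1) := by
  refine ⟨(a-2)/(n-1), (a-2)%(n-1), ?_, ?_, ?_, rfl, rfl⟩
  · have h2' := Nat.div_add_mod (a-2) (n-1)
    have hc : (n-1) * ((a-2)/(n-1)) = (a-2)/(n-1) * (n-1) := Nat.mul_comm _ _
    omega
  · rw [Nat.div_lt_iff_lt_mul (by omega : 0 < n-1)]
    have hc : m * (n-1) = (n-1) * m := Nat.mul_comm _ _
    omega
  · have h1 : (a-2) % (n-1) < n-1 := Nat.mod_lt _ (by omega)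
    omega

lemma edge_from_one {m n k : ℕ} (hk : k < m) : windmillEdge m n 1 (k*(n-1)+2) := by
  left
  exact ⟨k+1, by omega, by omega, rfl, by simp⟩

lemma edge_nxt {m n a : ℕ} (hm : 1 ≤ m) (hn : 3 ≤ n) (h2 : 2 ≤ a) (hN : a ≤ m*(n-1)+1) :
    windmillEdge m n a (DWnxt n a) := by
  obtain ⟨q, rr, hd, hdiv, hmod, -, -⟩ := DWdecomp hm hn h2 hN
  by_cases hr : rr = n-2
  · have h4 : (q+1)*(n-1) = q*(n-1)+(n-1) := by ring
    have hx : DWnxt n a = 1 := by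
      have h5 : a - 1 = (q+1)*(n-1) := by omega
      unfold DWnxt
      rw [h5, Nat.mul_mod_left]
      simp
    rw [hx]
    right; right
    refine ⟨q+1, by omega, by omega, ?_, rfl⟩
    simp only [Nat.add_sub_cancel]
    omega
  · have h4 : a - 1 = q*(n-1)+(rr+1) := by omega
    have hx : DWnxt n a = a+1 := by
      unfold DWnxt
      rw [h4, modh q (by omega : rr+1 < n-1)]
      simp
    rw [hx]
    right; left
    refine ⟨q+1, rr+2, by omega, by omega, by omega, by omega, ?_, rfl⟩
    simp only [Nat.add_sub_cancel]
    omega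

lemma edge_char {m n a b : ℕ} (hn : 3 ≤ n) (ha : 1 ≤ a) (he : windmillEdge m n a b) :
    (a = 1 ∧ ∃ k, k < m ∧ b = k*(n-1)+2) ∨ (2 ≤ a ∧ b = DWnxt n a) := by
  rcases he with ⟨k, hk1, hkm, ha1, hb⟩ | ⟨k, i, hk1, hkm, hi2, hin, ha', hb⟩ | ⟨k, hk1, hkm, ha', hb⟩
  · exact Or.inl ⟨ha1, k-1, by omega, hb⟩
  · have h2 : 2 ≤ a := by
      have := Nat.zero_le ((k-1)*(n-1))
      omega
    have h4 : a - 1 = (k-1)*(n-1)+(i-1) := by omega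
    refine Or.inr ⟨h2, ?_⟩
    unfold DWnxt
    rw [h4, modh (k-1) (by omega : i-1 < n-1), if_neg (by omega)]
    omega
  · have h2 : 2 ≤ a := by
      have := Nat.zero_le ((k-1)*(n-1))
      omega
    have h5 : (k-1)*(n-1)+(n-1) = ((k-1)+1)*(n-1) := by ring
    have h6 : (k-1)+1 = k := by omega
    have h4 : a - 1 = k*(n-1) := by rw [h6] at h5; omega
    refine Or.inr ⟨h2, ?_⟩
    unfold DWnxt
    rw [h4, Nat.mul_mod_left, if_pos rfl, hb]

lemma nxt_range {m n a : ℕ} (hn : 3 ≤ n) (h2 : 2 ≤ a) (hN : a ≤ m*(n-1)+1) :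
    1 ≤ DWnxt n a ∧ DWnxt n a ≤ m*(n-1)+1 := by
  unfold DWnxt
  split
  · omega
  · rename_i h
    refine ⟨by omega, ?_⟩
    rcases Nat.lt_or_ge a (m*(n-1)+1) with h' | h'
    · omega
    · exfalso
      have h'' : a - 1 = m*(n-1) := by omega
      rw [h'', Nat.mul_mod_left] at h
      exact h rfl

section traj
variable {m n i : ℕ} {c : ℕ → ℕ}

lemma traj_lt_D (hm : 1 ≤ m) (hn : 3 ≤ n) (hi1 : 1 ≤ i) (hiN : i ≤ m*(n-1)+1) :
    ∀ u, u < DWD n i → DWtraj n i c u = i + u := by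
  intro u
  induction u with
  | zero => intro _; simp [DWtraj_zero]
  | succ u ih =>
    intro hu
    have hne : i ≠ 1 := by
      intro h; rw [h] at hu; simp [DWD] at hu
    have h2 : 2 ≤ i := by omega
    obtain ⟨q, rr, hd, hdiv, hmod, -, hrr⟩ := DWdecomp hm hn h2 hiN
    have hD : DWD n i = n - 1 - rr := by simp [DWD, hne, hrr]
    have htu := ih (by omega)
    rw [DWtraj_succ, htu, if_neg (by omega)]
    have h4 : i + u - 1 = q*(n-1) + (rr+1+u) := by omega
    unfold DWnxt
    rw [h4, modh q (by omega : rr+1+u < n-1), if_neg (by omega)]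
    omega

lemma traj_at_D (hm : 1 ≤ m) (hn : 3 ≤ n) (hi1 : 1 ≤ i) (hiN : i ≤ m*(n-1)+1) :
    DWtraj n i c (DWD n i) = 1 := by
  by_cases hne : i = 1
  · simp [DWD, hne, DWtraj_zero]
  · have h2 : 2 ≤ i := by omega
    obtain ⟨q, rr, hd, hdiv, hmod, -, hrr⟩ := DWdecomp hm hn h2 hiN
    have hD : DWD n i = n - 1 - rr := by simp [DWD, hne, hrr]
    have hD1 : 1 ≤ DWD n i := by omega
    have hDe : DWD n i = (DWD n i - 1) + 1 := by omega
    rw [hDe, DWtraj_succ, traj_lt_D hm hn hi1 hiN _ (by omega), if_neg (by omega)]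
    have h4 : i + (DWD n i - 1) - 1 = (q+1)*(n-1) := by
      have : (q+1)*(n-1) = q*(n-1)+(n-1) := by ring
      omega
    unfold DWnxt
    rw [h4, Nat.mul_mod_left, if_pos rfl]

lemma traj_seg (hn : 3 ≤ n) {T : ℕ} (hT : DWtraj n i c T = 1) :
    (∀ u, 1 ≤ u → u ≤ n-1 → DWtraj n i c (T+u) = (c T)*(n-1)+(u+1)) ∧
    DWtraj n i c (T+n) = 1 := by
  have main : ∀ u, 1 ≤ u → u ≤ n-1 → DWtraj n i c (T+u) = (c T)*(n-1)+(u+1) := by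
    intro u
    induction u with
    | zero => omega
    | succ u ih =>
      intro _ hu2
      by_cases hu0 : u = 0
      · subst hu0
        rw [DWtraj_succ, if_pos hT]
      · have hprev := ih (by omega) (by omega)
        rw [show T + (u+1) = (T+u)+1 by omega, DWtraj_succ, hprev,
          if_neg (by omega)]
        have h4 : (c T)*(n-1)+(u+1) - 1 = (c T)*(n-1)+u := by omega
        unfold DWnxt
        rw [h4, modh (c T) (by omega : u < n-1), if_neg (by omega)]
        omega
  refine ⟨main, ?_⟩
  have hlast := main (n-1) (by omega) le_rfl
  rw [show T + n = (T+(n-1))+1 by omega, DWtraj_succ, hlast, if_neg (by omega)]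
  have h4 : (c T)*(n-1)+(n-1+1) - 1 = ((c T)+1)*(n-1) := by
    have : ((c T)+1)*(n-1) = (c T)*(n-1)+(n-1) := by ring
    omega
  unfold DWnxt
  rw [h4, Nat.mul_mod_left, if_pos rfl]

lemma traj_hub (hm : 1 ≤ m) (hn : 3 ≤ n) (hi1 : 1 ≤ i) (hiN : i ≤ m*(n-1)+1) :
    ∀ q : ℕ, DWtraj n i c (DWD n i + q*n) = 1 := by
  intro q
  induction q with
  | zero => simpa using traj_at_D hm hn hi1 hiN
  | succ q ih =>
    have : DWD n i + (q+1)*n = (DWD n i + q*n) + n := by ring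
    rw [this]
    exact (traj_seg hn ih).2

lemma traj_val (hm : 1 ≤ m) (hn : 3 ≤ n) (hi1 : 1 ≤ i) (hiN : i ≤ m*(n-1)+1)
    (q : ℕ) {u : ℕ} (hu1 : 1 ≤ u) (hu2 : u ≤ n-1) :
    DWtraj n i c (DWD n i + q*n + u) = (c (DWD n i + q*n))*(n-1)+(u+1) :=
  (traj_seg hn (traj_hub hm hn hi1 hiN q)).1 u hu1 hu2

lemma traj_eq_one_iff (hm : 1 ≤ m) (hn : 3 ≤ n) (hi1 : 1 ≤ i) (hiN : i ≤ m*(n-1)+1)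
    (t : ℕ) : DWtraj n i c t = 1 ↔ ∃ q, t = DWD n i + q*n := by
  constructor
  · intro h
    by_cases ht : t < DWD n i
    · exfalso
      have h1 := traj_lt_D (c := c) hm hn hi1 hiN t ht
      have hne : i ≠ 1 := by
        intro hh; rw [hh] at ht; simp [DWD] at ht
      omega
    · have hd := Nat.div_add_mod (t - DWD n i) n
      have hc : n * ((t - DWD n i)/n) = ((t - DWD n i)/n) * n := Nat.mul_comm _ _
      set u := (t - DWD n i) % n with hu
      set q := (t - DWD n i) / n with hq
      by_cases hu0 : u = 0
      · exact ⟨q, by omega⟩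
      · exfalso
        have hun : u < n := Nat.mod_lt _ (by omega)
        have ht' : t = DWD n i + q*n + u := by omega
        rw [ht', traj_val hm hn hi1 hiN q (by omega) (by omega)] at h
        omega
  · rintro ⟨q, rfl⟩
    exact traj_hub hm hn hi1 hiN q

lemma traj_range (hm : 1 ≤ m) (hn : 3 ≤ n) (hi1 : 1 ≤ i) (hiN : i ≤ m*(n-1)+1)
    (hc : ∀ t, c t < m) :
    ∀ t, 1 ≤ DWtraj n i c t ∧ DWtraj n i c t ≤ m*(n-1)+1 := by
  intro t
  induction t with
  | zero => exact ⟨hi1, hiN⟩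
  | succ t ih =>
    rw [DWtraj_succ]
    split
    · have h1 : c t ≤ m - 1 := by have := hc t; omega
      have h2 : (c t)*(n-1) ≤ (m-1)*(n-1) := Nat.mul_le_mul_right _ h1
      have h3 : (m-1)*(n-1) + (n-1) = m*(n-1) := by
        have h5 : ((m-1)+1)*(n-1) = (m-1)*(n-1)+(n-1) := by ring
        have h6 : (m-1)+1 = m := by omega
        rw [h6] at h5
        omega
      omega
    · rename_i hne
      exact nxt_range hn (by omega) ih.2

lemma traj_congr (hm : 1 ≤ m) (hn : 3 ≤ n) (c1 c2 : ℕ → ℕ) (T : ℕ)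
    (h : ∀ t, t < T → DWtraj n i c1 t = 1 → c1 t = c2 t) :
    ∀ t, t ≤ T → DWtraj n i c1 t = DWtraj n i c2 t := by
  intro t
  induction t with
  | zero => intro _; rfl
  | succ t ih =>
    intro ht
    have hih := ih (by omega)
    rw [DWtraj_succ, DWtraj_succ, ← hih]
    by_cases h1 : DWtraj n i c1 t = 1
    · rw [if_pos h1, if_pos h1, h t (by omega) h1]
    · rw [if_neg h1, if_neg h1]

end traj


section walk
variable {m n i j : ℕ} {c : ℕ → ℕ}

lemma traj_isWalk (hm : 1 ≤ m) (hn : 3 ≤ n) (hi1 : 1 ≤ i) (hiN : i ≤ m*(n-1)+1)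
    (hc : ∀ t, c t < m) (r : ℕ) (hj : DWtraj n i c r = j) :
    IsWalk m n r (fun t : Fin (r+1) => DWtraj n i c (t : ℕ)) i j := by
  refine ⟨?_, ?_, ?_, ?_⟩
  · show DWtraj n i c ((0 : Fin (r+1)) : ℕ) = i
    simp [DWtraj_zero]
  · show DWtraj n i c ((Fin.last r : Fin (r+1)) : ℕ) = j
    simpa [Fin.val_last] using hj
  · intro t
    exact traj_range hm hn hi1 hiN hc t
  · intro t
    show windmillEdge m n (DWtraj n i c (t.castSucc : ℕ)) (DWtraj n i c (t.succ : ℕ))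
    rw [Fin.coe_castSucc, Fin.val_succ, DWtraj_succ]
    by_cases h1 : DWtraj n i c (t : ℕ) = 1
    · rw [if_pos h1, h1]
      exact edge_from_one (hc t)
    · rw [if_neg h1]
      have hr := traj_range hm hn hi1 hiN hc (t : ℕ)
      exact edge_nxt hm hn (by omega) hr.2

lemma walk_eq_traj {r : ℕ} {w : Fin (r+1) → ℕ} (hm : 1 ≤ m) (hn : 3 ≤ n)
    (hw : IsWalk m n r w i j) :
    ∀ t (h : t < r+1), w ⟨t, h⟩ =
      DWtraj n i (fun s => if hs : s+1 < r+1 then (w ⟨s+1, hs⟩ - 2)/(n-1) else 0) t := by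
  intro t
  induction t with
  | zero =>
    intro h
    have h0 : (⟨0, h⟩ : Fin (r+1)) = 0 := by ext; simp
    rw [h0, DWtraj_zero]
    exact hw.1
  | succ t ih =>
    intro h
    have ht : t < r+1 := by omega
    have htr : t < r := by omega
    have hih := ih ht
    have hedge := hw.2.2.2 ⟨t, htr⟩
    have hcs : Fin.castSucc (⟨t, htr⟩ : Fin r) = (⟨t, ht⟩ : Fin (r+1)) := rfl
    have hsc : Fin.succ (⟨t, htr⟩ : Fin r) = (⟨t+1, h⟩ : Fin (r+1)) := rfl
    rw [hcs, hsc] at hedge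
    have ha1 : 1 ≤ w ⟨t, ht⟩ := (hw.2.2.1 ⟨t, ht⟩).1
    rw [DWtraj_succ, ← hih]
    rcases edge_char hn ha1 hedge with ⟨h1, k, hk, hb⟩ | ⟨h2, hb⟩
    · rw [if_pos h1, hb]
      simp only [dif_pos h]
      rw [hb, Nat.add_sub_cancel, Nat.mul_div_cancel _ (by omega : 0 < n-1)]
    · rw [if_neg (by omega), hb]

lemma eE_of {n j K u : ℕ} (hn : 3 ≤ n) (hu1 : 1 ≤ u) (hu2 : u ≤ n-1)
    (hj : j = K*(n-1)+(u+1)) : DWe n j = u ∧ (j-2)/(n-1) = K ∧ j ≠ 1 := by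
  have hj2 : 2 ≤ j := by omega
  have h1 : j - 2 = K*(n-1)+(u-1) := by omega
  have hne : j ≠ 1 := by omega
  refine ⟨?_, ?_, hne⟩
  · unfold DWe
    rw [if_neg hne, h1, modh K (by omega : u-1 < n-1)]
    omega
  · rw [h1, divh K (by omega : u-1 < n-1)]

lemma DWe_le {n j : ℕ} (hn : 3 ≤ n) : DWe n j ≤ n-1 := by
  unfold DWe
  split
  · omega
  · have := Nat.mod_lt (j-2) (by omega : 0 < n-1)
    omega

lemma DWD_le {n i : ℕ} (hn : 3 ≤ n) : DWD n i ≤ n-1 := by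
  unfold DWD; split <;> omega

lemma DWe_eq_zero_iff {n j : ℕ} : DWe n j = 0 ↔ j = 1 := by
  unfold DWe; split <;> omega

lemma DWe_sum {n j m : ℕ} (hm : 1 ≤ m) (hn : 3 ≤ n) (h2 : 2 ≤ j) (hjN : j ≤ m*(n-1)+1) :
    j = (j-2)/(n-1)*(n-1) + DWe n j + 1 ∧ 1 ≤ DWe n j ∧ (j-2)/(n-1) < m := by
  obtain ⟨q, rr, hd, hdiv, hmod, hq, hrr⟩ := DWdecomp hm hn h2 hjN
  have he : DWe n j = rr + 1 := by
    unfold DWe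
    rw [if_neg (by omega), ← hrr]
  rw [he, ← hq]
  omega

lemma walk_cond {r : ℕ} (hm : 1 ≤ m) (hn : 3 ≤ n) (hi1 : 1 ≤ i) (hiN : i ≤ m*(n-1)+1)
    (hDr : DWD n i ≤ r)
    (hex : ∃ w : Fin (r+1) → ℕ, IsWalk m n r w i j) :
    DWe n j = (r - DWD n i) % n := by
  obtain ⟨w, hw⟩ := hex
  set cw : ℕ → ℕ := fun s => if hs : s+1 < r+1 then (w ⟨s+1, hs⟩ - 2)/(n-1) else 0 with hcw
  have hwt : w ⟨r, by omega⟩ = DWtraj n i cw r := walk_eq_traj hm hn hw r (by omega)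
  have hlastc : (⟨r, by omega⟩ : Fin (r+1)) = Fin.last r := rfl
  rw [hlastc, hw.2.1] at hwt
  have hd := Nat.div_add_mod (r - DWD n i) n
  have hc : n * ((r-DWD n i)/n) = ((r-DWD n i)/n)*n := Nat.mul_comm _ _
  by_cases hu : (r - DWD n i) % n = 0
  · have hr' : r = DWD n i + ((r-DWD n i)/n)*n := by omega
    rw [hr', traj_hub hm hn hi1 hiN] at hwt
    rw [hwt, hu]
    simp [DWe]
  · have hun : (r - DWD n i) % n < n := Nat.mod_lt _ (by omega)
    have hr' : r = DWD n i + ((r-DWD n i)/n)*n + (r-DWD n i)%n := by omega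
    rw [hr', traj_val hm hn hi1 hiN _ (by omega) (by omega)] at hwt
    exact (eE_of hn (by omega) (by omega) hwt).1

end walk


section final
variable {m n i j : ℕ}

lemma build_walk (hm : 1 ≤ m) (hn : 3 ≤ n) (hi1 : 1 ≤ i) (hiN : i ≤ m*(n-1)+1)
    (hj1 : 1 ≤ j) (hjN : j ≤ m*(n-1)+1) (Q r : ℕ)
    (hr : r = DWD n i + Q*n + DWe n j) :
    ∃ w : Fin (r+1) → ℕ, IsWalk m n r w i j := by
  by_cases hje : j = 1
  · refine ⟨_, traj_isWalk (c := fun _ => 0) hm hn hi1 hiN (fun _ => hm) r ?_⟩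
    have he0 : DWe n j = 0 := DWe_eq_zero_iff.mpr hje
    rw [hr, he0, Nat.add_zero, traj_hub hm hn hi1 hiN, hje]
  · obtain ⟨hsum, he1, hdiv⟩ := DWe_sum hm hn (by omega) hjN
    refine ⟨_, traj_isWalk (c := fun _ => (j-2)/(n-1)) hm hn hi1 hiN (fun t => hdiv) r ?_⟩
    rw [hr, traj_val hm hn hi1 hiN Q he1 (DWe_le hn)]
    show (j-2)/(n-1)*(n-1)+(DWe n j+1) = j
    omega

def DWext (m n D p c0 : ℕ) (c : Fin (p-1) → Fin m) : ℕ → ℕ :=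
  fun t => if h : (t - D)/n < p-1 then (c ⟨(t-D)/n, h⟩ : ℕ) else c0

lemma DWext_hub {m n D p c0 : ℕ} (c : Fin (p-1) → Fin m) (hn : 0 < n) (q : ℕ) :
    DWext m n D p c0 c (D + q*n) = if h : q < p-1 then (c ⟨q, h⟩ : ℕ) else c0 := by
  unfold DWext
  simp only [Nat.add_sub_cancel_left, Nat.mul_div_cancel _ hn]

lemma DWext_lt {m n D p c0 : ℕ} (c : Fin (p-1) → Fin m) (hm : 1 ≤ m) (hc0 : c0 < m) :
    ∀ t, DWext m n D p c0 c t < m := by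
  intro t
  unfold DWext
  split
  · exact (c _).isLt
  · exact hc0

end final


theorem walks_length_pn_minus_one (m n p : ℕ) (hm : 1 ≤ m) (hn : 3 ≤ n) (hp : 2 ≤ p)
    (i j : ℕ) (hi : 1 ≤ i ∧ i ≤ m*(n-1)+1) (hj : 1 ≤ j ∧ j ≤ m*(n-1)+1) :
    ((∃ w : Fin (p*n-1+1) → ℕ, IsWalk m n (p*n-1) w i j) ↔
      (∃ w : Fin (n-1+1) → ℕ, IsWalk m n (n-1) w i j)) ∧
    ((∃ w : Fin (n-1+1) → ℕ, IsWalk m n (n-1) w i j) →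
      numWalks m n (p*n-1) i j = m^(p-1)) := by
  obtain ⟨hi1, hiN⟩ := hi
  obtain ⟨hj1, hjN⟩ := hj
  have hD := DWD_le (i := i) hn
  have hE := DWe_le (j := j) hn
  have hpn1 : (p-1)*n + n = p*n := by
    have h : p = (p-1)+1 := by omega
    calc (p-1)*n + n = ((p-1)+1)*n := by ring
    _ = p*n := by rw [← h]
  have hcond1 : (∃ w : Fin (n-1+1) → ℕ, IsWalk m n (n-1) w i j) ↔
      DWD n i + DWe n j = n-1 := by
    constructor
    · intro hex
      have h := walk_cond hm hn hi1 hiN (by omega) hex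
      rw [Nat.mod_eq_of_lt (by omega : n-1-DWD n i < n)] at h
      omega
    · intro h
      exact build_walk hm hn hi1 hiN hj1 hjN 0 (n-1) (by omega)
  have hcond2 : (∃ w : Fin (p*n-1+1) → ℕ, IsWalk m n (p*n-1) w i j) ↔
      DWD n i + DWe n j = n-1 := by
    constructor
    · intro hex
      have h := walk_cond hm hn hi1 hiN (by omega : DWD n i ≤ p*n-1) hex
      have hmod : (p*n-1 - DWD n i) % n = n-1 - DWD n i := by
        have hsplit : p*n-1 - DWD n i = (p-1)*n + (n-1 - DWD n i) := by omega
        rw [hsplit, modh (p-1) (by omega)]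
      rw [hmod] at h
      omega
    · intro h
      exact build_walk hm hn hi1 hiN hj1 hjN (p-1) (p*n-1) (by omega)
  constructor
  · rw [hcond1, hcond2]
  · intro hex
    have hDE : DWD n i + DWe n j = n-1 := hcond1.mp hex
    set c0 : ℕ := if j = 1 then 0 else (j-2)/(n-1) with hc0
    have hc0m : c0 < m := by
      rw [hc0]
      split
      · omega
      · rename_i hne
        exact (DWe_sum hm hn (by omega) hjN).2.2
    have hre : p*n-1 = DWD n i + (p-1)*n + DWe n j := by omega
    -- endpoint of constructed trajectories
    have hend : ∀ c : Fin (p-1) → Fin m,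
        DWtraj n i (DWext m n (DWD n i) p c0 c) (p*n-1) = j := by
      intro c
      by_cases hje : j = 1
      · have he0 : DWe n j = 0 := DWe_eq_zero_iff.mpr hje
        rw [hre, he0, Nat.add_zero, traj_hub hm hn hi1 hiN, hje]
      · obtain ⟨hsum, he1, hdiv⟩ := DWe_sum hm hn (by omega) hjN
        rw [hre, traj_val hm hn hi1 hiN (p-1) he1 (DWe_le hn)]
        have hv : DWext m n (DWD n i) p c0 c (DWD n i + (p-1)*n) = c0 := by
          rw [DWext_hub c (by omega), dif_neg (lt_irrefl (p-1))]
        rw [hv, hc0, if_neg hje]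
        omega
    have hbnd : ∀ qq : ℕ, qq < p-1 → DWD n i + qq*n + 1 < p*n-1+1 := by
      intro qq hqq
      have h1 : (qq+1)*n ≤ (p-1)*n := Nat.mul_le_mul_right n (by omega)
      have h2 : (qq+1)*n = qq*n+n := by ring
      omega
    have hbij : Function.Bijective
        (fun c : Fin (p-1) → Fin m =>
          (⟨fun t : Fin (p*n-1+1) => DWtraj n i (DWext m n (DWD n i) p c0 c) (t : ℕ),
            traj_isWalk hm hn hi1 hiN (DWext_lt c hm hc0m) (p*n-1) (hend c)⟩ :
            {w : Fin (p*n-1+1) → ℕ // IsWalk m n (p*n-1) w i j})) := by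
      constructor
      · intro c1 c2 hFeq
        funext q
        apply Fin.ext
        have htle := hbnd q q.isLt
        have h := congrFun (congrArg Subtype.val hFeq) ⟨DWD n i + (q:ℕ)*n + 1, htle⟩
        have h' : DWtraj n i (DWext m n (DWD n i) p c0 c1) (DWD n i + (q:ℕ)*n + 1) =
            DWtraj n i (DWext m n (DWD n i) p c0 c2) (DWD n i + (q:ℕ)*n + 1) := h
        rw [traj_val hm hn hi1 hiN (q:ℕ) le_rfl (by omega),
          traj_val hm hn hi1 hiN (q:ℕ) le_rfl (by omega)] at h'
        rw [DWext_hub c1 (by omega), DWext_hub c2 (by omega),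
          dif_pos q.isLt, dif_pos q.isLt] at h'
        have hq1 : (c1 ⟨(q:ℕ), q.isLt⟩ : ℕ) = c1 q := by rw [Fin.eta]
        have hq2 : (c2 ⟨(q:ℕ), q.isLt⟩ : ℕ) = c2 q := by rw [Fin.eta]
        rw [hq1, hq2] at h'
        have hmul : (c1 q : ℕ)*(n-1) = (c2 q : ℕ)*(n-1) := by omega
        exact Nat.eq_of_mul_eq_mul_right (by omega) hmul
      · rintro ⟨w, hw⟩
        set cw : ℕ → ℕ :=
          fun s => if hs : s+1 < p*n-1+1 then (w ⟨s+1, hs⟩ - 2)/(n-1) else 0 with hcw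
        have hwt : ∀ t (h : t < p*n-1+1), w ⟨t, h⟩ = DWtraj n i cw t :=
          walk_eq_traj hm hn hw
        have hwlast : j = DWtraj n i cw (p*n-1) := by
          have h := hwt (p*n-1) (by omega)
          have hlastc : (⟨p*n-1, by omega⟩ : Fin (p*n-1+1)) = Fin.last (p*n-1) := rfl
          rw [hlastc, hw.2.1] at h
          exact h
        have hclt : ∀ q : ℕ, DWD n i + q*n + 1 < p*n-1+1 → cw (DWD n i + q*n) < m := by
          intro q hq
          have hhub := traj_hub (c := cw) hm hn hi1 hiN q
          have hwq : w ⟨DWD n i + q*n, by omega⟩ = 1 := by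
            rw [hwt _ (by omega), hhub]
          have hedge := hw.2.2.2 ⟨DWD n i + q*n, by omega⟩
          have hcs : Fin.castSucc (⟨DWD n i + q*n, by omega⟩ : Fin (p*n-1)) =
              (⟨DWD n i + q*n, by omega⟩ : Fin (p*n-1+1)) := rfl
          have hsc : Fin.succ (⟨DWD n i + q*n, by omega⟩ : Fin (p*n-1)) =
              (⟨DWD n i + q*n + 1, hq⟩ : Fin (p*n-1+1)) := rfl
          rw [hcs, hsc] at hedge
          rcases edge_char hn (by rw [hwq]) hedge with ⟨h1, k, hk, hb⟩ | ⟨h2, _⟩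
          · have : cw (DWD n i + q*n) = k := by
              rw [hcw]
              simp only
              rw [dif_pos hq, hb, Nat.add_sub_cancel, Nat.mul_div_cancel _ (by omega : 0 < n-1)]
            omega
          · rw [hwq] at h2; omega
        refine ⟨fun q => ⟨cw (DWD n i + (q:ℕ)*n), hclt _ (hbnd _ q.isLt)⟩, ?_⟩
        apply Subtype.ext
        funext t
        show DWtraj n i (DWext m n (DWD n i) p c0 _) (t : ℕ) = w t
        have hwtt : w t = DWtraj n i cw (t : ℕ) := hwt (t : ℕ) t.isLt
        rw [hwtt]
        have hagree : ∀ s, s < p*n-1 →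
            DWtraj n i (DWext m n (DWD n i) p c0
              (fun q => ⟨cw (DWD n i + (q:ℕ)*n), hclt _ (hbnd _ q.isLt)⟩)) s = 1 →
            DWext m n (DWD n i) p c0
              (fun q => ⟨cw (DWD n i + (q:ℕ)*n), hclt _ (hbnd _ q.isLt)⟩) s = cw s := by
          intro s hs h1
          obtain ⟨q, rfl⟩ := (traj_eq_one_iff hm hn hi1 hiN s).mp h1
          rw [DWext_hub _ (by omega : 0 < n)]
          by_cases hql : q < p-1
          · rw [dif_pos hql]
          · rw [dif_neg hql]
            have hqlt : q < p := by
              by_contra hge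
              have := Nat.mul_le_mul_right n (by omega : p ≤ q)
              omega
            have hqe : q = p-1 := by omega
            rw [hqe] at hs
            have he1 : 1 ≤ DWe n j := by omega
            have hjne : j ≠ 1 := by
              intro h
              have h0 : DWe n j = 0 := DWe_eq_zero_iff.mpr h
              omega
            have hval := traj_val (c := cw) hm hn hi1 hiN (p-1) he1 (DWe_le hn)
            have hwl2 := hwlast
            rw [hre, hval] at hwl2
            have hK := (eE_of hn he1 (DWe_le hn) hwl2).2.1
            rw [hqe, hc0, if_neg hjne, hK]
        exact traj_congr hm hn _ cw (p*n-1) hagree (t : ℕ) (by omega)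
    have hcard : Nat.card (Fin (p-1) → Fin m) = m^(p-1) := by
      simp only [Nat.card_eq_fintype_card, Fintype.card_fun, Fintype.card_fin]
    calc numWalks m n (p*n-1) i j
        = Nat.card {w : Fin (p*n-1+1) → ℕ // IsWalk m n (p*n-1) w i j} := rfl
      _ = m^(p-1) := by rw [← Nat.card_eq_of_bijective _ hbij, hcard]
end

section
/- For all vertices i, j of the oriented Dutch windmill graph D^m_n, the number of walks of length 2n-1 from i to j equals m times the number of walks of length n-1 from i to j. -/
def nextv (n a : ℕ) : ℕ := if (n-1) ∣ (a-1) then 1 else a+1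

theorem wm_edge_one_iff {m n : ℕ} (hn : 3 ≤ n) {b : ℕ} :
    windmillEdge m n 1 b ↔ ∃ k, 1 ≤ k ∧ k ≤ m ∧ b = (k-1)*(n-1)+2 := by
  constructor
  · rintro (⟨k,h1,h2,h3,h4⟩|⟨k,i,h1,h2,h3,h4,h5,h6⟩|⟨k,h1,h2,h3⟩)
    · exact ⟨k,h1,h2,h4⟩
    · omega
    · omega
  · rintro ⟨k,h1,h2,h3⟩; exact Or.inl ⟨k,h1,h2,rfl,h3⟩

theorem wm_edge_one {m n k : ℕ} (hk1 : 1 ≤ k) (hk2 : k ≤ m) :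
    windmillEdge m n 1 ((k-1)*(n-1)+2) := Or.inl ⟨k, hk1, hk2, rfl, rfl⟩

theorem wm_edge_mid {m n k i : ℕ} (hk1 : 1 ≤ k) (hk2 : k ≤ m) (hi1 : 2 ≤ i) (hi2 : i ≤ n-1) :
    windmillEdge m n ((k-1)*(n-1)+i) ((k-1)*(n-1)+i+1) :=
  Or.inr (Or.inl ⟨k, i, hk1, hk2, hi1, hi2, rfl, rfl⟩)

theorem wm_edge_last {m n k : ℕ} (hk1 : 1 ≤ k) (hk2 : k ≤ m) :
    windmillEdge m n ((k-1)*(n-1)+n) 1 := Or.inr (Or.inr ⟨k, hk1, hk2, rfl, rfl⟩)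

theorem wm_edge_step {m n a b : ℕ} (hn : 3 ≤ n) (ha : 2 ≤ a)
    (h : windmillEdge m n a b) : b = nextv n a := by
  rcases h with ⟨k,h1,h2,h3,h4⟩|⟨k,i,h1,h2,h3,h4,h5,h6⟩|⟨k,h1,h2,h3⟩
  · omega
  · have hd : ¬ (n-1) ∣ (a-1) := by
      intro hdvd
      have h7 : a - 1 = (k-1)*(n-1) + (i-1) := by omega
      rw [h7] at hdvd
      have h8 := (Nat.dvd_add_right (dvd_mul_left (n-1) (k-1))).mp hdvd
      have h9 := Nat.le_of_dvd (by omega) h8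
      omega
    rw [nextv, if_neg hd]; omega
  · obtain ⟨h3, h4⟩ := h3
    have e : a - 1 = (n-1) * k := by
      obtain ⟨k', rfl⟩ : ∃ k', k = k'+1 := ⟨k-1, by omega⟩
      have h5 : (n-1) * (k'+1) = k' * (n-1) + (n-1) := by rw [Nat.mul_succ, Nat.mul_comm]
      simp only [Nat.add_sub_cancel] at h3
      omega
    rw [nextv, if_pos ⟨k, e⟩]; omega

theorem repr_dvd {n k i a : ℕ} (hn : 3 ≤ n) (hk : 1 ≤ k) (hi1 : 2 ≤ i) (hi2 : i ≤ n)
    (ha : a = (k-1)*(n-1)+i) : ((n-1) ∣ (a-1)) ↔ i = n := by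
  constructor
  · intro hdvd; by_contra hne
    have h7 : a - 1 = (k-1)*(n-1) + (i-1) := by omega
    rw [h7] at hdvd
    have h8 := (Nat.dvd_add_right (dvd_mul_left (n-1) (k-1))).mp hdvd
    have h9 := Nat.le_of_dvd (by omega) h8
    omega
  · intro hin
    obtain ⟨k', rfl⟩ : ∃ k', k = k'+1 := ⟨k-1, by omega⟩
    refine ⟨k'+1, ?_⟩
    have h4 : (n-1) * (k'+1) = k' * (n-1) + (n-1) := by rw [Nat.mul_succ, Nat.mul_comm]
    simp only [Nat.add_sub_cancel] at ha
    omega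

theorem wm_succ {m n a b k i : ℕ} (hn : 3 ≤ n) (hk : 1 ≤ k)
    (hi1 : 2 ≤ i) (hi2 : i ≤ n) (ha : a = (k-1)*(n-1)+i)
    (h : windmillEdge m n a b) : b = if i = n then 1 else a + 1 := by
  have hb := wm_edge_step hn (by omega) h
  rw [hb, nextv]
  rcases eq_or_ne i n with hi | hi
  · rw [if_pos ((repr_dvd hn hk hi1 hi2 ha).mpr hi), if_pos hi]
  · rw [if_neg (fun hd => hi ((repr_dvd hn hk hi1 hi2 ha).mp hd)), if_neg hi]

theorem wm_repr {m n v : ℕ} (hn : 3 ≤ n) (h1 : 2 ≤ v) (h2 : v ≤ m*(n-1)+1) :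
    ∃ k i, 1 ≤ k ∧ k ≤ m ∧ 2 ≤ i ∧ i ≤ n ∧ v = (k-1)*(n-1)+i := by
  have hpos : 0 < n - 1 := by omega
  obtain ⟨q, c, hqc, hclt⟩ : ∃ q c, (n-1)*q + c = v - 2 ∧ c < n-1 :=
    ⟨(v-2)/(n-1), (v-2)%(n-1), Nat.div_add_mod _ _, Nat.mod_lt _ hpos⟩
  have hcomm : q * (n-1) = (n-1) * q := Nat.mul_comm _ _
  have hqm : q < m := by
    by_contra hqm
    have h3 : m ≤ q := by omega
    have h4 : m * (n-1) ≤ q * (n-1) := Nat.mul_le_mul_right _ h3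
    omega
  refine ⟨q+1, c+2, by omega, by omega, by omega, by omega, ?_⟩
  have h3 : q+1-1 = q := by omega
  rw [h3]
  omega

theorem wm_hits {m n r : ℕ} (hn : 3 ≤ n) {w : ℕ → ℕ}
    (hb : ∀ t, t ≤ r → 1 ≤ w t ∧ w t ≤ m*(n-1)+1)
    (he : ∀ t, t < r → windmillEdge m n (w t) (w (t+1))) :
    ∀ D t, t + D ≤ r →
      (w t = 1 ∨ ∃ k i, 1 ≤ k ∧ k ≤ m ∧ 2 ≤ i ∧ i ≤ n ∧ w t = (k-1)*(n-1)+i ∧ n+1-i ≤ D) →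
      ∃ s, s ≤ D ∧ w (t+s) = 1 := by
  intro D
  induction D with
  | zero =>
    rintro t ht (h1 | ⟨k,i,hk1,hk2,hi1,hi2,hv,hD⟩)
    · exact ⟨0, le_refl 0, h1⟩
    · omega
  | succ D ih =>
    rintro t ht (h1 | ⟨k,i,hk1,hk2,hi1,hi2,hv,hD⟩)
    · exact ⟨0, by omega, h1⟩
    · have hedge := he t (by omega)
      have hsucc := wm_succ hn hk1 hi1 hi2 hv hedge
      rcases eq_or_ne i n with rfl | hin
      · rw [if_pos rfl] at hsucc
        exact ⟨1, by omega, hsucc⟩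
      · rw [if_neg hin] at hsucc
        obtain ⟨s, hs1, hs2⟩ := ih (t+1) (by omega)
          (Or.inr ⟨k, i+1, hk1, hk2, by omega, by omega, by omega, by omega⟩)
        refine ⟨s+1, by omega, ?_⟩
        rw [show t+(s+1) = t+1+s by omega]
        exact hs2

theorem wm_exists_one {m n r : ℕ} (hn : 3 ≤ n) (hr : n-1 ≤ r) {w : ℕ → ℕ}
    (hb : ∀ t, t ≤ r → 1 ≤ w t ∧ w t ≤ m*(n-1)+1)
    (he : ∀ t, t < r → windmillEdge m n (w t) (w (t+1))) :
    ∃ s, s ≤ n-1 ∧ w s = 1 := by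
  have h := wm_hits hn hb he (n-1) 0 (by omega)
  rcases eq_or_ne (w 0) 1 with h1 | h1
  · obtain ⟨s, hs1, hs2⟩ := h (Or.inl h1)
    exact ⟨s, hs1, by simpa using hs2⟩
  · obtain ⟨hb1, hb2⟩ := hb 0 (by omega)
    obtain ⟨k, i, hk1, hk2, hi1, hi2, hv⟩ := wm_repr (m := m) hn (by omega) hb2
    obtain ⟨s, hs1, hs2⟩ := h (Or.inr ⟨k, i, hk1, hk2, hi1, hi2, hv, by omega⟩)
    exact ⟨s, hs1, by simpa using hs2⟩

theorem wm_blade {m n r d k : ℕ} (hn : 3 ≤ n) (hk1 : 1 ≤ k)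
    {w : ℕ → ℕ} (he : ∀ t, t < r → windmillEdge m n (w t) (w (t+1)))
    (hdn : d + n ≤ r) (h2 : w (d+1) = (k-1)*(n-1)+2) :
    (∀ s, 1 ≤ s → s ≤ n-1 → w (d+s) = (k-1)*(n-1)+s+1) ∧ w (d+n) = 1 := by
  have main : ∀ s, 1 ≤ s → s ≤ n-1 → w (d+s) = (k-1)*(n-1)+s+1 := by
    intro s
    induction s with
    | zero => intro h1 _; omega
    | succ s ih =>
      intro _ hs
      rcases Nat.eq_zero_or_pos s with rfl | hspos
      · have e : d + (0+1) = d+1 := by omega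
        rw [e]; omega
      · have hw := ih (by omega) (by omega)
        have hedge := he (d+s) (by omega)
        have hstep := wm_succ hn hk1 (show 2 ≤ s+1 by omega) (show s+1 ≤ n by omega)
          (show w (d+s) = (k-1)*(n-1)+(s+1) by omega) hedge
        rw [if_neg (show s+1 ≠ n by omega)] at hstep
        have hidx : w (d+(s+1)) = w (d+s) + 1 := by
          rw [show d+(s+1) = d+s+1 by omega]; exact hstep
        omega
  refine ⟨main, ?_⟩
  have hw := main (n-1) (by omega) le_rfl
  have hedge := he (d+(n-1)) (by omega)
  have hstep := wm_succ hn hk1 (show 2 ≤ n from by omega) le_rfl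
    (show w (d+(n-1)) = (k-1)*(n-1)+n by omega) hedge
  rw [if_pos rfl] at hstep
  rw [show d+n = d+(n-1)+1 by omega]
  exact hstep

def WalkN (m n r i j : ℕ) (w : ℕ → ℕ) : Prop :=
  w 0 = i ∧ w r = j ∧ (∀ t, t ≤ r → 1 ≤ w t ∧ w t ≤ m*(n-1)+1) ∧
  (∀ t, t < r → windmillEdge m n (w t) (w (t+1))) ∧ (∀ t, r < t → w t = 0)

def extFn (r : ℕ) (w : Fin (r+1) → ℕ) : ℕ → ℕ :=
  fun t => if h : t ≤ r then w ⟨t, by omega⟩ else 0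

theorem extFn_le {r : ℕ} {w : Fin (r+1) → ℕ} {t : ℕ} (h : t ≤ r) :
    extFn r w t = w ⟨t, by omega⟩ := dif_pos h

theorem extFn_gt {r : ℕ} {w : Fin (r+1) → ℕ} {t : ℕ} (h : r < t) :
    extFn r w t = 0 := dif_neg (by omega)

def walkEquiv (m n r i j : ℕ) :
    {w : Fin (r+1) → ℕ // IsWalk m n r w i j} ≃ {w : ℕ → ℕ // WalkN m n r i j w} where
  toFun w := ⟨extFn r w.1, by
    obtain ⟨w, h0, hl, hb, he⟩ := w
    refine ⟨?_, ?_, ?_, ?_, ?_⟩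
    · rw [extFn_le (Nat.zero_le r)]
      rw [show (⟨0, by omega⟩ : Fin (r+1)) = 0 from by ext; simp]
      exact h0
    · rw [extFn_le (le_refl r)]
      rw [show (⟨r, by omega⟩ : Fin (r+1)) = Fin.last r from by ext; simp [Fin.last]]
      exact hl
    · intro t ht; rw [extFn_le ht]; exact hb _
    · intro t ht
      rw [extFn_le (show t ≤ r by omega), extFn_le (show t+1 ≤ r by omega)]
      exact he ⟨t, ht⟩
    · intro t ht; rw [extFn_gt ht]⟩
  invFun w := ⟨fun t => w.1 t.val, by
    obtain ⟨w, h0, hl, hb, he, hz⟩ := w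
    refine ⟨by simpa using h0, by simpa using hl, ?_, ?_⟩
    · intro t; exact hb t.val (by omega)
    · intro t; exact he t.val t.isLt⟩
  left_inv w := by
    apply Subtype.ext; funext t
    show extFn r w.1 t.val = w.1 t
    rw [extFn_le (show t.val ≤ r by omega)]
  right_inv w := by
    apply Subtype.ext; funext t
    show extFn r _ t = w.1 t
    by_cases h : t ≤ r
    · rw [extFn_le h]
    · rw [extFn_gt (by omega)]; exact (w.2.2.2.2.2 t (by omega)).symm

def Fraw (n k d : ℕ) (w : ℕ → ℕ) : ℕ → ℕ := fun t =>
  if t ≤ d then w t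
  else if t ≤ d + n then (if t = d + n then 1 else (k-1)*(n-1)+(t-d)+1)
  else if t ≤ 2*n-1 then w (t - n) else 0

theorem Fraw_low {n k d t : ℕ} {w : ℕ → ℕ} (h : t ≤ d) : Fraw n k d w t = w t := if_pos h

theorem Fraw_mid {n k d t : ℕ} {w : ℕ → ℕ} (h1 : d < t) (h2 : t < d + n) :
    Fraw n k d w t = (k-1)*(n-1)+(t-d)+1 := by
  rw [Fraw, if_neg (by omega), if_pos (by omega), if_neg (by omega)]

theorem Fraw_dn {n k d : ℕ} {w : ℕ → ℕ} (h : 1 ≤ n) : Fraw n k d w (d+n) = 1 := by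
  rw [Fraw, if_neg (by omega), if_pos le_rfl, if_pos rfl]

theorem Fraw_hi {n k d t : ℕ} {w : ℕ → ℕ} (h1 : d + n < t) (h2 : t ≤ 2*n-1) :
    Fraw n k d w t = w (t - n) := by
  rw [Fraw, if_neg (by omega), if_neg (by omega), if_pos h2]

theorem Fraw_top {n k d t : ℕ} {w : ℕ → ℕ} (h : 2*n-1 < t) (hd : d + n ≤ 2*n-1) :
    Fraw n k d w t = 0 := by
  rw [Fraw, if_neg (by omega), if_neg (by omega), if_neg (by omega)]

theorem Fraw_isWalk {m n i j k d : ℕ} (hn : 3 ≤ n) (hk1 : 1 ≤ k) (hk2 : k ≤ m)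
    {w : ℕ → ℕ} (hw : WalkN m n (n-1) i j w) (hd : d ≤ n-1) (hd1 : w d = 1) :
    WalkN m n (2*n-1) i j (Fraw n k d w) := by
  obtain ⟨h0, hl, hb, he, hz⟩ := hw
  have hbound : (k-1)*(n-1)+n ≤ m*(n-1)+1 := by
    have e1 : ((k-1)+1)*(n-1) = (k-1)*(n-1)+(n-1) := add_one_mul _ _
    have e2 : ((k-1)+1) * (n-1) ≤ m * (n-1) := Nat.mul_le_mul_right _ (by omega)
    omega
  refine ⟨?_, ?_, ?_, ?_, ?_⟩
  · rw [Fraw_low (Nat.zero_le d)]; exact h0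
  · rcases eq_or_lt_of_le hd with heq | hlt
    · rw [show 2*n-1 = d+n by omega, Fraw_dn (by omega)]
      rw [heq] at hd1
      omega
    · rw [Fraw_hi (by omega) le_rfl, show 2*n-1-n = n-1 by omega]
      exact hl
  · intro t ht
    rcases le_or_gt t d with h | h
    · rw [Fraw_low h]; exact hb t (by omega)
    · rcases lt_or_ge t (d+n) with h2 | h2
      · rw [Fraw_mid h h2]
        constructor
        · omega
        · omega
      · rcases eq_or_lt_of_le h2 with h3 | h3
        · rw [← h3, Fraw_dn (by omega)]
          constructor
          · omega
          · omega
        · rw [Fraw_hi h3 ht]; exact hb (t-n) (by omega)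
  · intro t ht
    by_cases h1 : t+1 ≤ d
    · rw [Fraw_low (by omega), Fraw_low h1]; exact he t (by omega)
    · by_cases h2 : t = d
      · subst h2
        rw [Fraw_low le_rfl, hd1, Fraw_mid (by omega) (by omega)]
        rw [show t+1-t = 1 by omega]
        exact wm_edge_one hk1 hk2
      · by_cases h3 : t+1 < d+n
        · rw [Fraw_mid (by omega) (by omega), Fraw_mid (by omega) h3]
          have hmid := wm_edge_mid (m := m) (n := n) (i := t-d+1) hk1 hk2 (by omega) (by omega)
          rw [show (k-1)*(n-1)+(t-d)+1 = (k-1)*(n-1)+(t-d+1) by omega,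
              show (k-1)*(n-1)+(t+1-d)+1 = (k-1)*(n-1)+(t-d+1)+1 by omega]
          exact hmid
        · by_cases h4 : t+1 = d+n
          · rw [Fraw_mid (by omega) (by omega), h4, Fraw_dn (by omega)]
            rw [show (k-1)*(n-1)+(t-d)+1 = (k-1)*(n-1)+n by omega]
            exact wm_edge_last hk1 hk2
          · by_cases h5 : t = d+n
            · subst h5
              rw [Fraw_dn (by omega), Fraw_hi (by omega) (by omega)]
              rw [show d+n+1-n = d+1 by omega]
              have hed := he d (by omega)
              rw [hd1] at hed
              exact hed
            · rw [Fraw_hi (by omega) (by omega), Fraw_hi (by omega) (by omega)]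
              rw [show t+1-n = (t-n)+1 by omega]
              exact he (t-n) (by omega)
  · intro t ht
    exact Fraw_top ht (by omega)

theorem walkN_exists_one {m n r i j : ℕ} (hn : 3 ≤ n) (hr : n-1 ≤ r) {w : ℕ → ℕ}
    (hw : WalkN m n r i j w) : ∃ s, w s = 1 := by
  obtain ⟨s, _, h⟩ := wm_exists_one hn hr hw.2.2.1 hw.2.2.2.1
  exact ⟨s, h⟩

theorem walkN_find_le {m n i j : ℕ} (hn : 3 ≤ n) {w : ℕ → ℕ}
    (hw : WalkN m n (n-1) i j w) :
    Nat.find (walkN_exists_one hn le_rfl hw) ≤ n-1 := by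
  obtain ⟨s, hs, h1⟩ := wm_exists_one hn le_rfl hw.2.2.1 hw.2.2.2.1
  exact le_trans (Nat.find_min' _ h1) hs

noncomputable def Fmap (m n i j : ℕ) (hn : 3 ≤ n)
    (p : Fin m × {w : ℕ → ℕ // WalkN m n (n-1) i j w}) :
    {w : ℕ → ℕ // WalkN m n (2*n-1) i j w} :=
  ⟨Fraw n (p.1.val+1) (Nat.find (walkN_exists_one hn le_rfl p.2.2)) p.2.1,
   Fraw_isWalk hn (by omega) (by have := p.1.isLt; omega) p.2.2
     (walkN_find_le hn p.2.2) (Nat.find_spec (walkN_exists_one hn le_rfl p.2.2))⟩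

theorem Fmap_injective (m n i j : ℕ) (hn : 3 ≤ n) :
    Function.Injective (Fmap m n i j hn) := by
  rintro ⟨k, w, hw⟩ ⟨k', w', hw'⟩ heq
  have hEQ : Fraw n (k.val+1) (Nat.find (walkN_exists_one hn le_rfl hw)) w
      = Fraw n (k'.val+1) (Nat.find (walkN_exists_one hn le_rfl hw')) w' :=
    congrArg Subtype.val heq
  set d := Nat.find (walkN_exists_one hn le_rfl hw) with hdd
  set d' := Nat.find (walkN_exists_one hn le_rfl hw') with hdd'
  have hd1 : w d = 1 := Nat.find_spec (walkN_exists_one hn le_rfl hw)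
  have hd1' : w' d' = 1 := Nat.find_spec (walkN_exists_one hn le_rfl hw')
  have hdle : d ≤ n-1 := walkN_find_le hn hw
  have hdle' : d' ≤ n-1 := walkN_find_le hn hw'
  -- d = d'
  have hdeq : d = d' := by
    rcases lt_trichotomy d d' with h | h | h
    · exfalso
      have e1 : Fraw n (k.val+1) d w d = 1 := by rw [Fraw_low le_rfl]; exact hd1
      have e2 : Fraw n (k'.val+1) d' w' d = w' d := Fraw_low (by omega)
      rw [hEQ, e2] at e1
      exact Nat.find_min (walkN_exists_one hn le_rfl hw') h e1
    · exact h
    · exfalso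
      have e1 : Fraw n (k'.val+1) d' w' d' = 1 := by rw [Fraw_low le_rfl]; exact hd1'
      have e2 : Fraw n (k.val+1) d w d' = w d' := Fraw_low (by omega)
      rw [← hEQ, e2] at e1
      exact Nat.find_min (walkN_exists_one hn le_rfl hw) h e1
  clear_value d d'
  subst hdeq
  -- k = k'
  have hkv : k.val = k'.val := by
    have hv := congrFun hEQ (d+1)
    rw [Fraw_mid (by omega) (by omega), Fraw_mid (by omega) (by omega)] at hv
    rw [show d+1-d = 1 by omega] at hv
    simp only [Nat.add_sub_cancel] at hv
    have hmul : k.val * (n-1) = k'.val * (n-1) := by omega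
    exact Nat.eq_of_mul_eq_mul_right (by omega) hmul
  -- w = w'
  have hweq : w = w' := by
    funext t
    by_cases c1 : t ≤ d
    · have e1 := congrFun hEQ t
      rw [Fraw_low c1, Fraw_low c1] at e1
      exact e1
    · by_cases c2 : t ≤ n-1
      · have e1 := congrFun hEQ (t+n)
        rw [Fraw_hi (by omega) (by omega), Fraw_hi (by omega) (by omega)] at e1
        rw [show t+n-n = t by omega] at e1
        exact e1
      · rw [hw.2.2.2.2 t (by omega), hw'.2.2.2.2 t (by omega)]
  simp only [Prod.mk.injEq, Subtype.mk.injEq]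
  exact ⟨Fin.ext hkv, hweq⟩

theorem Fmap_surjective (m n i j : ℕ) (hn : 3 ≤ n) :
    Function.Surjective (Fmap m n i j hn) := by
  rintro ⟨W, hW⟩
  have hW' := hW
  obtain ⟨h0, hl, hb, he, hz⟩ := hW'
  obtain ⟨s0, hs0, hs01⟩ := wm_exists_one (r := 2*n-1) hn (by omega) hb he
  have hexW : ∃ s, W s = 1 := ⟨s0, hs01⟩
  set d := Nat.find hexW with hdd
  have hd1 : W d = 1 := Nat.find_spec hexW
  have hdle : d ≤ n-1 := le_trans (Nat.find_min' hexW hs01) hs0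
  have hdmin : ∀ s, s < d → W s ≠ 1 := fun s hs => Nat.find_min hexW hs
  have hedge := he d (by omega)
  rw [hd1] at hedge
  obtain ⟨k, hk1, hk2, hkv⟩ := (wm_edge_one_iff hn).mp hedge
  obtain ⟨bl1, bl2⟩ := wm_blade hn hk1 he (show d+n ≤ 2*n-1 by omega) hkv
  -- the short walk
  set w : ℕ → ℕ := fun t => if t ≤ d then W t else if t ≤ n-1 then W (t+n) else 0 with hwdef
  have hw_low : ∀ t, t ≤ d → w t = W t := fun t h => if_pos h
  have hw_high : ∀ t, d < t → t ≤ n-1 → w t = W (t+n) := by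
    intro t h1 h2
    show (if t ≤ d then W t else if t ≤ n-1 then W (t+n) else 0) = W (t+n)
    rw [if_neg (by omega), if_pos h2]
  have hw_top : ∀ t, n-1 < t → w t = 0 := by
    intro t h1
    show (if t ≤ d then W t else if t ≤ n-1 then W (t+n) else 0) = 0
    rw [if_neg (by omega), if_neg (by omega)]
  have hww : WalkN m n (n-1) i j w := by
    refine ⟨?_, ?_, ?_, ?_, hw_top⟩
    · rw [hw_low 0 (by omega)]; exact h0
    · rcases eq_or_lt_of_le hdle with heq | hlt
      · rw [hw_low (n-1) (by omega)]
        have e1 : W (d+n) = j := by rw [show d+n = 2*n-1 by omega]; exact hl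
        rw [← heq, hd1]
        omega
      · rw [hw_high (n-1) hlt le_rfl, show n-1+n = 2*n-1 by omega]
        exact hl
    · intro t ht
      by_cases h : t ≤ d
      · rw [hw_low t h]; exact hb t (by omega)
      · rw [hw_high t (by omega) ht]; exact hb (t+n) (by omega)
    · intro t ht
      by_cases c1 : t+1 ≤ d
      · rw [hw_low t (by omega), hw_low (t+1) c1]
        exact he t (by omega)
      · by_cases c2 : t = d
        · rw [c2]
          rw [hw_low d le_rfl, hd1, hw_high (d+1) (by omega) (by omega)]
          have hed := he (d+n) (by omega)
          rw [bl2] at hed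
          rw [show d+1+n = d+n+1 by omega]
          exact hed
        · rw [hw_high t (by omega) (by omega), hw_high (t+1) (by omega) (by omega)]
          rw [show t+1+n = t+n+1 by omega]
          exact he (t+n) (by omega)
  -- first hit of w is d
  have hfind : Nat.find (walkN_exists_one hn le_rfl hww) = d := by
    have hle : Nat.find (walkN_exists_one hn le_rfl hww) ≤ d :=
      Nat.find_min' _ (by rw [hw_low d le_rfl]; exact hd1)
    rcases eq_or_lt_of_le hle with heq | hlt
    · exact heq
    · exfalso
      have hsp := Nat.find_spec (walkN_exists_one hn le_rfl hww)
      rw [hw_low _ (by omega)] at hsp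
      exact hdmin _ hlt hsp
  refine ⟨⟨⟨k-1, by omega⟩, ⟨w, hww⟩⟩, ?_⟩
  apply Subtype.ext
  show Fraw n ((k-1)+1) (Nat.find (walkN_exists_one hn le_rfl hww)) w = W
  rw [show (k-1)+1 = k by omega, hfind]
  funext t
  by_cases c1 : t ≤ d
  · rw [Fraw_low c1]; exact hw_low t c1
  · by_cases c2 : t < d+n
    · rw [Fraw_mid (by omega) c2]
      have hbl := bl1 (t-d) (by omega) (by omega)
      rw [show d+(t-d) = t by omega] at hbl
      omega
    · by_cases c3 : t = d+n
      · rw [c3, Fraw_dn (by omega)]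
        exact bl2.symm
      · by_cases c4 : t ≤ 2*n-1
        · rw [Fraw_hi (by omega) c4]
          rw [hw_high (t-n) (by omega) (by omega), show t-n+n = t by omega]
        · rw [Fraw_top (by omega) (by omega)]
          exact (hz t (by omega)).symm

theorem numWalks_two_n_minus_one_eq_m_mul (m n : ℕ) (hm : 1 ≤ m) (hn : 3 ≤ n)
    (i j : ℕ) (hi : 1 ≤ i ∧ i ≤ m*(n-1)+1) (hj : 1 ≤ j ∧ j ≤ m*(n-1)+1) :
    numWalks m n (2*n-1) i j = m * numWalks m n (n-1) i j := by
  have hbij : Function.Bijective (Fmap m n i j hn) :=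
    ⟨Fmap_injective m n i j hn, Fmap_surjective m n i j hn⟩
  have hcard := Nat.card_congr (Equiv.ofBijective _ hbij)
  rw [Nat.card_prod] at hcard
  have hfm : Nat.card (Fin m) = m := by simp
  rw [hfm] at hcard
  rw [numWalks, numWalks, Nat.card_congr (walkEquiv m n (2*n-1) i j),
      Nat.card_congr (walkEquiv m n (n-1) i j), ← hcard]
end

section
/- For all p ≥ 2 and vertices i, j of the oriented Dutch windmill graph D^m_n, the number of walks of length pn-1 from i to j equals m^(p-1) times the number of walks of length n-1 from i to j. -/
namespace DW

/-- distance to the hub (vertex 1). -/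
def phi (n v : ℕ) : ℕ := if v ≤ 1 then 0 else n - 1 - (v - 2) % (n - 1)

/-- vertices of the standard cycle through blade `k`. -/
def cyc (n k s : ℕ) : ℕ := if s = 0 ∨ s = n then 1 else (k-1)*(n-1) + s + 1

/-- the blade a non-hub vertex belongs to. -/
def bl (n v : ℕ) : ℕ := (v - 2) / (n - 1) + 1

lemma rep_mod (hn : 3 ≤ n) {k t : ℕ} (h2 : 2 ≤ t) (htn : t ≤ n) :
    ((k-1)*(n-1) + t - 2) % (n-1) = t - 2 := by
  have h1 : (k-1)*(n-1) + t - 2 = (t-2) + (k-1)*(n-1) := by omega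
  rw [h1, Nat.add_mul_mod_self_right, Nat.mod_eq_of_lt (by omega)]

lemma rep_div (hn : 3 ≤ n) {k t : ℕ} (h2 : 2 ≤ t) (htn : t ≤ n) :
    ((k-1)*(n-1) + t - 2) / (n-1) = k - 1 := by
  have h1 : (k-1)*(n-1) + t - 2 = (t-2) + (k-1)*(n-1) := by omega
  rw [h1, Nat.add_mul_div_right _ _ (by omega : 0 < n - 1),
    Nat.div_eq_of_lt (by omega)]
  omega

lemma phi_rep (hn : 3 ≤ n) {k t : ℕ} (h2 : 2 ≤ t) (htn : t ≤ n) :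
    phi n ((k-1)*(n-1) + t) = n + 1 - t := by
  have h := rep_mod hn (k := k) h2 htn
  unfold phi
  rw [if_neg (by omega)]
  omega

lemma bl_rep (hn : 3 ≤ n) {k t : ℕ} (hk : 1 ≤ k) (h2 : 2 ≤ t) (htn : t ≤ n) :
    bl n ((k-1)*(n-1) + t) = k := by
  have h := rep_div hn (k := k) h2 htn
  unfold bl; omega

lemma phi_le (n v : ℕ) : phi n v ≤ n - 1 := by
  unfold phi; split <;> omega

lemma phi_pos {n v : ℕ} (hn : 3 ≤ n) (hv : 2 ≤ v) : 1 ≤ phi n v := by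
  unfold phi
  rw [if_neg (by omega)]
  have : (v - 2) % (n - 1) < n - 1 := Nat.mod_lt _ (by omega)
  omega

lemma edge_cases {m n a b : ℕ} (hn : 3 ≤ n) (h : windmillEdge m n a b) :
    (a = 1 ∧ ∃ k, 1 ≤ k ∧ k ≤ m ∧ b = (k-1)*(n-1)+2) ∨
    (2 ≤ a ∧ 2 ≤ phi n a ∧ b = a + 1 ∧ phi n b = phi n a - 1) ∨
    (2 ≤ a ∧ phi n a = 1 ∧ b = 1) := by
  rcases h with ⟨k, hk1, hkm, ha, hb⟩ | ⟨k, t, hk1, hkm, ht2, htn, ha, hb⟩ |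
    ⟨k, hk1, hkm, ha, hb⟩
  · exact Or.inl ⟨ha, k, hk1, hkm, hb⟩
  · right; left
    have hpa := phi_rep hn (k := k) ht2 (by omega)
    have hpb := phi_rep hn (k := k) (t := t+1) (by omega) (by omega)
    subst ha
    have hb' : b = (k-1)*(n-1) + (t+1) := by omega
    refine ⟨by omega, by omega, by omega, ?_⟩
    rw [hb', hpa, hpb]; omega
  · right; right
    have hpa := phi_rep hn (k := k) (t := n) (by omega) le_rfl
    subst ha
    exact ⟨by omega, by omega, hb⟩


/-- ℕ-indexed version of `IsWalk`, with a fixed tail. -/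
def NWalk (m n r : ℕ) (w : ℕ → ℕ) (i j : ℕ) : Prop :=
  w 0 = i ∧ w r = j ∧ (∀ t ≤ r, 1 ≤ w t ∧ w t ≤ m*(n-1)+1) ∧
  (∀ t < r, windmillEdge m n (w t) (w (t+1))) ∧ (∀ t, r ≤ t → w t = j)

lemma hub_time {m n r i j : ℕ} (hn : 3 ≤ n) {w : ℕ → ℕ}
    (hw : NWalk m n r w i j) (hr : phi n (w 0) ≤ r) :
    w (phi n (w 0)) = 1 := by
  obtain ⟨-, -, hb, he, -⟩ := hw
  set t₀ := phi n (w 0) with ht₀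
  have key : ∀ s ≤ t₀, (2 ≤ w s ∧ phi n (w s) = t₀ - s) ∨ (s = t₀ ∧ w s = 1) := by
    intro s
    induction s with
    | zero =>
      intro _
      by_cases h1 : w 0 = 1
      · right
        refine ⟨?_, h1⟩
        rw [ht₀, h1]
        simp [phi]
      · left
        have := (hb 0 (by omega)).1
        exact ⟨by omega, by omega⟩
    | succ s ih =>
      intro hs
      rcases ih (by omega) with ⟨hws, hphi⟩ | ⟨hst, -⟩
      · have hsr : s < r := by omega
        rcases edge_cases hn (he s hsr) with ⟨h1, -⟩ | ⟨-, h2, hb', hphi'⟩ |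
          ⟨-, h1, hb'⟩
        · omega
        · left
          refine ⟨by omega, by omega⟩
        · right
          refine ⟨by omega, hb'⟩
      · omega
  rcases key t₀ le_rfl with ⟨hws, hphi⟩ | ⟨-, h1⟩
  · have : w t₀ ≤ 1 := by
      by_contra h
      have := phi_pos hn (v := w t₀) (by omega)
      omega
    omega
  · exact h1

lemma hub_run {m n r i j : ℕ} (hn : 3 ≤ n) {w : ℕ → ℕ}
    (hw : NWalk m n r w i j) {t : ℕ} (ht : w t = 1) (htr : t + n ≤ r) :
    (1 ≤ bl n (w (t+1)) ∧ bl n (w (t+1)) ≤ m) ∧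
    ∀ s ≤ n, w (t+s) = cyc n (bl n (w (t+1))) s := by
  obtain ⟨-, -, hb, he, -⟩ := hw
  have h0 : windmillEdge m n (w t) (w (t+1)) := he t (by omega)
  rcases edge_cases hn h0 with ⟨-, k, hk1, hkm, hb1⟩ | ⟨h2, -⟩ | ⟨h2, -⟩
  · -- w (t+1) = (k-1)*(n-1)+2
    have hbl : bl n (w (t+1)) = k := by rw [hb1]; exact bl_rep hn hk1 le_rfl (by omega)
    -- the forced run along blade k
    have run : ∀ s, s ≤ n - 2 → w (t+1+s) = (k-1)*(n-1) + (s+2) := by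
      intro s
      induction s with
      | zero => intro _; simpa using hb1
      | succ s ih =>
        intro hs
        have hws := ih (by omega)
        have hedge : windmillEdge m n (w (t+1+s)) (w (t+1+s+1)) :=
          he (t+1+s) (by omega)
        have hphi : phi n (w (t+1+s)) = n + 1 - (s+2) := by
          rw [hws]; exact phi_rep hn (by omega) (by omega)
        rcases edge_cases hn hedge with ⟨h1, -⟩ | ⟨-, -, hb', -⟩ | ⟨-, h1, -⟩
        · omega
        · have : t+1+(s+1) = t+1+s+1 := by omega
          rw [this, hb', hws]; omega
        · omega
    have hlast : w (t+n) = 1 := by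
      have hws := run (n-2) le_rfl
      have hedge : windmillEdge m n (w (t+1+(n-2))) (w (t+1+(n-2)+1)) :=
        he (t+1+(n-2)) (by omega)
      have hphi : phi n (w (t+1+(n-2))) = 1 := by
        rw [hws]
        have := phi_rep hn (k := k) (t := n) (by omega) le_rfl
        have heq : (k-1)*(n-1) + (n-2+2) = (k-1)*(n-1) + n := by omega
        rw [heq, this]; omega
      rcases edge_cases hn hedge with ⟨h1, -⟩ | ⟨-, h2', -⟩ | ⟨-, -, hb'⟩
      · omega
      · omega
      · have : t + n = t+1+(n-2)+1 := by omega
        rw [this, hb']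
    rw [hbl]
    refine ⟨⟨hk1, hkm⟩, ?_⟩
    intro s hs
    rcases Nat.eq_zero_or_pos s with h | h
    · subst h; simpa [cyc] using ht
    rcases Nat.lt_or_ge s n with h' | h'
    · have := run (s-1) (by omega)
      have heq : t+1+(s-1) = t+s := by omega
      rw [heq] at this
      rw [this]
      unfold cyc
      rw [if_neg (by omega)]
      omega
    · have hsn : s = n := by omega
      subst hsn
      simpa [cyc] using hlast
  · omega
  · omega

/-- insert a cycle around blade `k` at time `t₀`. -/
def fIns (n k t₀ : ℕ) (w : ℕ → ℕ) : ℕ → ℕ := fun s =>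
  if s ≤ t₀ then w s else if s ≤ t₀ + n then cyc n k (s - t₀) else w (s - n)

/-- delete the cycle starting at time `t₀`. -/
def gDel (n t₀ : ℕ) (w : ℕ → ℕ) : ℕ → ℕ := fun s =>
  if s ≤ t₀ then w s else w (s + n)

lemma fIns_low {n k t₀ s : ℕ} (w : ℕ → ℕ) (hs : s ≤ t₀) :
    fIns n k t₀ w s = w s := if_pos hs

lemma fIns_mid {n k t₀ s : ℕ} (w : ℕ → ℕ) (h1 : t₀ ≤ s) (h2 : s ≤ t₀ + n)
    (hw : w t₀ = 1) : fIns n k t₀ w s = cyc n k (s - t₀) := by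
  unfold fIns
  by_cases h : s ≤ t₀
  · have : s = t₀ := by omega
    subst this
    simp [hw, cyc]
  · rw [if_neg h, if_pos h2]

lemma fIns_high {n k t₀ s : ℕ} (w : ℕ → ℕ) (hn : 1 ≤ n) (h : t₀ + n ≤ s)
    (hw : w t₀ = 1) : fIns n k t₀ w s = w (s - n) := by
  unfold fIns
  rw [if_neg (by omega)]
  by_cases h2 : s ≤ t₀ + n
  · have : s = t₀ + n := by omega
    subst this
    simp [cyc, hw]
  · rw [if_neg h2]

lemma gDel_low {n t₀ s : ℕ} (w : ℕ → ℕ) (hs : s ≤ t₀) :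
    gDel n t₀ w s = w s := if_pos hs

lemma gDel_high {n t₀ s : ℕ} (w : ℕ → ℕ) (h : t₀ ≤ s)
    (hww : w (t₀ + n) = w t₀) : gDel n t₀ w s = w (s + n) := by
  unfold gDel
  by_cases h2 : s ≤ t₀
  · have : s = t₀ := by omega
    subst this
    rw [if_pos le_rfl, hww]
  · rw [if_neg h2]

lemma cyc_bound {m n k : ℕ} (hn : 3 ≤ n) (hk1 : 1 ≤ k) (hkm : k ≤ m)
    {s : ℕ} (hs : s ≤ n) : 1 ≤ cyc n k s ∧ cyc n k s ≤ m*(n-1)+1 := by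
  unfold cyc
  split
  · omega
  · have h1 : (k-1)*(n-1) ≤ (m-1)*(n-1) := Nat.mul_le_mul_right _ (by omega)
    have h2 : m*(n-1) = (m-1)*(n-1) + (n-1) := by
      obtain ⟨m', rfl⟩ : ∃ m', m = m' + 1 := ⟨m - 1, by omega⟩
      simp [Nat.succ_mul]
    omega

lemma cyc_edge {m n k s : ℕ} (hn : 3 ≤ n) (hk1 : 1 ≤ k) (hkm : k ≤ m)
    (hs : s < n) : windmillEdge m n (cyc n k s) (cyc n k (s+1)) := by
  rcases Nat.eq_zero_or_pos s with h | h
  · subst h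
    left
    refine ⟨k, hk1, hkm, by simp [cyc], ?_⟩
    unfold cyc
    rw [if_neg (by omega)]
  rcases Nat.lt_or_ge s (n-1) with h' | h'
  · right; left
    refine ⟨k, s+1, hk1, hkm, by omega, by omega, ?_, ?_⟩
    · unfold cyc; rw [if_neg (by omega)]; omega
    · unfold cyc; rw [if_neg (by omega), if_neg (by omega)]; omega
  · right; right
    have hsn : s = n - 1 := by omega
    subst hsn
    refine ⟨k, hk1, hkm, ?_, ?_⟩
    · unfold cyc; rw [if_neg (by omega)]; omega
    · unfold cyc; rw [if_pos (by omega)]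

lemma fIns_walk {m n r i j k : ℕ} (hn : 3 ≤ n) (hr : n - 1 ≤ r)
    (hk1 : 1 ≤ k) (hkm : k ≤ m) {w : ℕ → ℕ} (hw : NWalk m n r w i j) :
    NWalk m n (r+n) (fIns n k (phi n (w 0)) w) i j := by
  set t₀ := phi n (w 0) with ht₀def
  have ht₀ : t₀ ≤ n - 1 := phi_le n (w 0)
  have ht₀r : t₀ ≤ r := le_trans ht₀ hr
  have hhub : w t₀ = 1 := hub_time hn hw ht₀r
  obtain ⟨h0, hrj, hb, he, htl⟩ := hw
  refine ⟨?_, ?_, ?_, ?_, ?_⟩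
  · rw [fIns_low w (Nat.zero_le _)]; exact h0
  · rw [fIns_high w (by omega) (by omega) hhub]
    simpa using hrj
  · intro t htr
    rcases Nat.lt_or_ge t₀ t with h | h
    · rcases Nat.lt_or_ge (t₀ + n) t with h' | h'
      · rw [fIns_high w (by omega) (by omega) hhub]
        exact hb _ (by omega)
      · rw [fIns_mid w (by omega) h' hhub]
        exact cyc_bound hn hk1 hkm (by omega)
    · rw [fIns_low w h]
      exact hb _ (by omega)
  · intro t htr
    rcases Nat.lt_or_ge t (t₀ + n) with h | h
    · rcases Nat.lt_or_ge t t₀ with h' | h'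
      · rw [fIns_low w (by omega), fIns_low w (by omega)]
        exact he t (by omega)
      · rw [fIns_mid w (by omega) (by omega) hhub,
          fIns_mid w (by omega) (by omega) hhub]
        have : t + 1 - t₀ = (t - t₀) + 1 := by omega
        rw [this]
        exact cyc_edge hn hk1 hkm (by omega)
    · rw [fIns_high w (by omega) (by omega) hhub,
        fIns_high w (by omega) (by omega) hhub]
      have : t + 1 - n = (t - n) + 1 := by omega
      rw [this]
      exact he (t - n) (by omega)
  · intro t htr
    rw [fIns_high w (by omega) (by omega) hhub]
    exact htl _ (by omega)

lemma gDel_walk {m n r i j : ℕ} (hn : 3 ≤ n) (hr : n - 1 ≤ r)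
    {w : ℕ → ℕ} (hw : NWalk m n (r+n) w i j) :
    NWalk m n r (gDel n (phi n (w 0)) w) i j := by
  set t₀ := phi n (w 0) with ht₀def
  have ht₀ : t₀ ≤ n - 1 := phi_le n (w 0)
  have hhub : w t₀ = 1 := hub_time hn hw (by omega)
  obtain ⟨-, hcyc⟩ := hub_run hn hw hhub (by omega)
  have hback : w (t₀ + n) = w t₀ := by
    rw [hcyc n le_rfl, hhub]; simp [cyc]
  obtain ⟨h0, hrj, hb, he, htl⟩ := hw
  refine ⟨?_, ?_, ?_, ?_, ?_⟩
  · rw [gDel_low w (Nat.zero_le _)]; exact h0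
  · rw [gDel_high w (by omega) hback]; exact hrj
  · intro t htr
    rcases Nat.lt_or_ge t₀ t with h | h
    · rw [gDel_high w (by omega) hback]
      exact hb _ (by omega)
    · rw [gDel_low w h]
      exact hb _ (by omega)
  · intro t htr
    rcases Nat.lt_or_ge t t₀ with h | h
    · rw [gDel_low w (by omega), gDel_low w (by omega)]
      exact he t (by omega)
    · rw [gDel_high w (by omega) hback, gDel_high w (by omega) hback]
      have : t + 1 + n = t + n + 1 := by omega
      rw [this]
      exact he (t + n) (by omega)
  · intro t htr
    rw [gDel_high w (by omega) hback]
    exact htl _ (by omega)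

lemma fIns_zero {n k t₀ : ℕ} (w : ℕ → ℕ) : fIns n k t₀ w 0 = w 0 :=
  fIns_low w (Nat.zero_le _)

lemma gDel_zero {n t₀ : ℕ} (w : ℕ → ℕ) : gDel n t₀ w 0 = w 0 :=
  gDel_low w (Nat.zero_le _)

lemma gDel_fIns {n k t₀ : ℕ} (hn : 1 ≤ n) {w : ℕ → ℕ} (hhub : w t₀ = 1) :
    gDel n t₀ (fIns n k t₀ w) = w := by
  funext s
  unfold gDel
  by_cases h : s ≤ t₀
  · rw [if_pos h, fIns_low w h]
  · rw [if_neg h, fIns_high w hn (by omega) hhub]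
    congr 1
    omega

lemma fIns_gDel {m n r i j : ℕ} (hn : 3 ≤ n) (hr : n - 1 ≤ r)
    {w : ℕ → ℕ} (hw : NWalk m n (r+n) w i j) :
    fIns n (bl n (w (phi n (w 0) + 1))) (phi n (w 0))
      (gDel n (phi n (w 0)) w) = w := by
  set t₀ := phi n (w 0) with ht₀def
  have ht₀ : t₀ ≤ n - 1 := phi_le n (w 0)
  have hhub : w t₀ = 1 := hub_time hn hw (by omega)
  obtain ⟨-, hcyc⟩ := hub_run hn hw hhub (by omega)
  have hback : w (t₀ + n) = w t₀ := by
    rw [hcyc n le_rfl, hhub]; simp [cyc]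
  have hhub' : gDel n t₀ w t₀ = 1 := by rw [gDel_low w le_rfl]; exact hhub
  funext s
  rcases Nat.lt_or_ge t₀ s with h | h
  · rcases Nat.lt_or_ge (t₀ + n) s with h' | h'
    · rw [fIns_high _ (by omega) (by omega) hhub',
        gDel_high w (by omega) hback]
      congr 1
      omega
    · rw [fIns_mid _ (by omega) h' hhub']
      have := hcyc (s - t₀) (by omega)
      rw [show t₀ + (s - t₀) = s by omega] at this
      exact this.symm
  · rw [fIns_low _ h, gDel_low w h]

lemma bl_fIns {n k t₀ : ℕ} (hn : 3 ≤ n) (hk1 : 1 ≤ k) {w : ℕ → ℕ}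
    (hhub : w t₀ = 1) : bl n (fIns n k t₀ w (t₀ + 1)) = k := by
  rw [fIns_mid w (by omega) (by omega) hhub]
  have h1 : t₀ + 1 - t₀ = 1 := by omega
  rw [h1]
  have hc : cyc n k 1 = (k-1)*(n-1) + 2 := by
    unfold cyc; rw [if_neg (by omega)]
  rw [hc]
  exact bl_rep hn hk1 le_rfl (by omega)

/-- The key bijection: walks of length `r+n` correspond to a blade choice plus
a walk of length `r`, provided `r ≥ n-1`. -/
noncomputable def stepEquiv (m n r i j : ℕ) (hn : 3 ≤ n) (hr : n - 1 ≤ r) :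
    {w : ℕ → ℕ // NWalk m n (r+n) w i j} ≃
      Fin m × {w : ℕ → ℕ // NWalk m n r w i j} where
  toFun w :=
    ⟨⟨bl n (w.1 (phi n (w.1 0) + 1)) - 1, by
        have hhub : w.1 (phi n (w.1 0)) = 1 :=
          hub_time hn w.2 (by have := phi_le n (w.1 0); omega)
        have := (hub_run hn w.2 hhub
          (by have := phi_le n (w.1 0); omega)).1
        omega⟩,
      ⟨gDel n (phi n (w.1 0)) w.1, gDel_walk hn hr w.2⟩⟩
  invFun kw :=
    ⟨fIns n (kw.1.1 + 1) (phi n (kw.2.1 0)) kw.2.1,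
      fIns_walk hn hr (by omega) kw.1.2 kw.2.2⟩
  left_inv := by
    rintro ⟨w, hw⟩
    have hhub : w (phi n (w 0)) = 1 :=
      hub_time hn hw (by have := phi_le n (w 0); omega)
    have hblk := (hub_run hn hw hhub (by have := phi_le n (w 0); omega)).1
    apply Subtype.ext
    simp only
    rw [gDel_zero]
    rw [show bl n (w (phi n (w 0) + 1)) - 1 + 1 = bl n (w (phi n (w 0) + 1))
      by omega]
    exact fIns_gDel hn hr hw
  right_inv := by
    rintro ⟨k, w, hw⟩
    have hhub : w (phi n (w 0)) = 1 :=
      hub_time hn hw (by have := phi_le n (w 0); omega)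
    have hz : fIns n (k.1 + 1) (phi n (w 0)) w 0 = w 0 := fIns_zero w
    ext
    · simp only
      rw [hz, bl_fIns hn (by omega) hhub]
      omega
    · simp only
      rw [hz]
      exact congrFun (gDel_fIns (by omega) hhub) _

/-- Bridge between the `Fin`-indexed and `ℕ`-indexed walk descriptions. -/
def finEquiv (m n r i j : ℕ) :
    {w : Fin (r+1) → ℕ // IsWalk m n r w i j} ≃
      {w : ℕ → ℕ // NWalk m n r w i j} where
  toFun w :=
    ⟨fun s => w.1 ⟨min s r, by omega⟩, by
      obtain ⟨h0, hl, hb, he⟩ := w.2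
      refine ⟨?_, ?_, ?_, ?_, ?_⟩
      · beta_reduce
        have e : (⟨min 0 r, by omega⟩ : Fin (r+1)) = 0 := by
          apply Fin.ext; simp
        rw [e]; exact h0
      · beta_reduce
        have e : (⟨min r r, by omega⟩ : Fin (r+1)) = Fin.last r := by
          apply Fin.ext; simp [Fin.val_last]
        rw [e]; exact hl
      · intro t _; exact hb _
      · intro t htr
        beta_reduce
        have e1 : (⟨min t r, by omega⟩ : Fin (r+1)) =
            (⟨t, htr⟩ : Fin r).castSucc := by
          apply Fin.ext; simp; omega
        have e2 : (⟨min (t+1) r, by omega⟩ : Fin (r+1)) =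
            (⟨t, htr⟩ : Fin r).succ := by
          apply Fin.ext; simp; omega
        rw [e1, e2]; exact he _
      · intro t htr
        beta_reduce
        have e : (⟨min t r, by omega⟩ : Fin (r+1)) = Fin.last r := by
          apply Fin.ext; simp [Fin.val_last]; omega
        rw [e]; exact hl⟩
  invFun w :=
    ⟨fun s => w.1 s.1, by
      obtain ⟨h0, hr', hb, he, htl⟩ := w.2
      refine ⟨?_, ?_, ?_, ?_⟩
      · simpa using h0
      · simpa [Fin.val_last] using hr'
      · intro t; exact hb t.1 (by omega)
      · intro t
        have e1 : (t.castSucc : ℕ) = t.1 := rfl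
        have e2 : (t.succ : ℕ) = t.1 + 1 := rfl
        simp only [e1, e2]
        exact he t.1 t.isLt⟩
  left_inv w := by
    apply Subtype.ext
    funext s
    have hs : (s : ℕ) ≤ r := by have := s.isLt; omega
    exact congrArg w.1 (Fin.ext (Nat.min_eq_left hs))
  right_inv w := by
    apply Subtype.ext
    funext s
    show w.1 (min s r) = w.1 s
    rcases Nat.lt_or_ge s (r+1) with h | h
    · rw [Nat.min_eq_left (by omega)]
    · rw [Nat.min_eq_right (by omega), w.2.2.1, w.2.2.2.2.2 s (by omega)]

lemma numWalks_eq (m n r i j : ℕ) :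
    numWalks m n r i j = Nat.card {w : ℕ → ℕ // NWalk m n r w i j} :=
  Nat.card_congr (finEquiv m n r i j)

lemma card_step (m n r i j : ℕ) (hn : 3 ≤ n) (hr : n - 1 ≤ r) :
    Nat.card {w : ℕ → ℕ // NWalk m n (r+n) w i j} =
      m * Nat.card {w : ℕ → ℕ // NWalk m n r w i j} := by
  rw [Nat.card_congr (stepEquiv m n r i j hn hr), Nat.card_prod,
    Nat.card_eq_fintype_card, Fintype.card_fin]

lemma card_iter (m n i j : ℕ) (hn : 3 ≤ n) (q : ℕ) :
    Nat.card {w : ℕ → ℕ // NWalk m n (n - 1 + q*n) w i j} =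
      m^q * Nat.card {w : ℕ → ℕ // NWalk m n (n-1) w i j} := by
  induction q with
  | zero => simp
  | succ q ih =>
    have e : n - 1 + (q+1)*n = (n - 1 + q*n) + n := by
      rw [add_mul, one_mul]; omega
    rw [e, card_step m n _ i j hn (by omega), ih, pow_succ]
    ring

end DW

theorem numWalks_pn_minus_one_eq_pow_mul (m n p : ℕ) (hm : 1 ≤ m) (hn : 3 ≤ n)
    (hp : 2 ≤ p)
    (i j : ℕ) (hi : 1 ≤ i ∧ i ≤ m*(n-1)+1) (hj : 1 ≤ j ∧ j ≤ m*(n-1)+1) :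
    numWalks m n (p*n-1) i j = m^(p-1) * numWalks m n (n-1) i j := by
  obtain ⟨q, rfl⟩ : ∃ q, p = q + 1 := ⟨p - 1, by omega⟩
  have e : (q+1)*n - 1 = n - 1 + q*n := by
    rw [add_mul, one_mul]; omega
  rw [DW.numWalks_eq, DW.numWalks_eq, e, DW.card_iter m n i j hn q]
  simp
end

section
/- For every vertex i ≠ 1 of the oriented Dutch windmill graph D^m_n, there exists exactly one closed walk of length n from i to itself. -/
lemma windmill_mod (n K r : ℕ) (hr : r < n-1) :
    (K*(n-1)+r) % (n-1) = r := by
  rw [Nat.mul_add_mod', Nat.mod_eq_of_lt hr]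

lemma windmill_decomp (m n a : ℕ) (hn : 3 ≤ n) (ha : 2 ≤ a)
    (ha2 : a ≤ m*(n-1)+1) :
    ∃ K Q, Q < n-1 ∧ K < m ∧ K*(n-1)+Q+2 = a ∧ (a-2)%(n-1) = Q := by
  refine ⟨(a-2)/(n-1), (a-2)%(n-1), Nat.mod_lt _ (by omega),
    (Nat.div_lt_iff_lt_mul (by omega : 0 < n-1)).mpr (by omega), ?_, rfl⟩
  have := Nat.div_add_mod (a-2) (n-1)
  rw [mul_comm]; omega

lemma edge_succ (m n a b : ℕ) (hm : 1 ≤ m) (hn : 3 ≤ n) (ha : 2 ≤ a)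
    (ha2 : a ≤ m*(n-1)+1) :
    windmillEdge m n a b ↔ b = (if (a-2) % (n-1) = n-2 then 1 else a+1) := by
  constructor
  · rintro (⟨k,hk1,hk2,rfl,rfl⟩ | ⟨k,i0,hk1,hk2,hi1,hi2,rfl,rfl⟩ | ⟨k,hk1,hk2,rfl,rfl⟩)
    · omega
    · have h2 : (k-1)*(n-1)+i0-2 = (k-1)*(n-1)+(i0-2) := by omega
      rw [h2, windmill_mod n (k-1) (i0-2) (by omega), if_neg (by omega)]
    · have h2 : (k-1)*(n-1)+n-2 = (k-1)*(n-1)+(n-2) := by omega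
      rw [h2, windmill_mod n (k-1) (n-2) (by omega), if_pos rfl]
  · intro hb
    obtain ⟨K, Q, hQ, hK, hd, hmod⟩ := windmill_decomp m n a hn ha ha2
    rw [hmod] at hb
    by_cases hQn : Q = n-2
    · right; right
      refine ⟨K+1, by omega, by omega, ?_, hb.trans (if_pos hQn)⟩
      have h1 : K+1-1 = K := by omega
      rw [h1]; omega
    · right; left
      refine ⟨K+1, Q+2, by omega, by omega, by omega, by omega, ?_, ?_⟩
      · have h1 : K+1-1 = K := by omega
        rw [h1]; omega
      · rw [hb, if_neg hQn]

lemma edge_one (m n b : ℕ) (hn : 3 ≤ n) :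
    windmillEdge m n 1 b ↔ ∃ k, 1 ≤ k ∧ k ≤ m ∧ b = (k-1)*(n-1)+2 := by
  constructor
  · rintro (⟨k,hk1,hk2,_,rfl⟩ | ⟨k,i0,hk1,hk2,hi1,hi2,ha,rfl⟩ | ⟨k,hk1,hk2,ha,rfl⟩)
    · exact ⟨k, hk1, hk2, rfl⟩
    · omega
    · omega
  · rintro ⟨k,h1,h2,rfl⟩
    exact Or.inl ⟨k,h1,h2,rfl,rfl⟩

/-- The explicit closed walk through vertex `i = K*(n-1)+Q+2`. -/
def windmillW (n K Q i t : ℕ) : ℕ :=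
  if t+Q+2 ≤ n then i+t else if t+Q+1 = n then 1 else K*(n-1)+(t+Q+1-n)+1

lemma windmill_bound (m n i K Q : ℕ) (hm : 1 ≤ m) (hn : 3 ≤ n)
    (hQ : Q < n-1) (hK : K < m) (hiKQ : K*(n-1)+Q+2 = i) :
    ∀ t, t ≤ n → 1 ≤ windmillW n K Q i t ∧ windmillW n K Q i t ≤ m*(n-1)+1 := by
  have hmul : (K+1)*(n-1) ≤ m*(n-1) := Nat.mul_le_mul_right _ (by omega)
  have hmul2 : (K+1)*(n-1) = K*(n-1)+(n-1) := by ring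
  intro t ht
  unfold windmillW
  by_cases h1 : t + Q + 2 ≤ n
  · rw [if_pos h1]; omega
  · rw [if_neg h1]
    by_cases h2 : t + Q + 1 = n
    · rw [if_pos h2]; omega
    · rw [if_neg h2]; omega

lemma windmill_edge_step (m n i K Q : ℕ) (hm : 1 ≤ m) (hn : 3 ≤ n)
    (hQ : Q < n-1) (hK : K < m) (hiKQ : K*(n-1)+Q+2 = i) :
    ∀ t, t < n → windmillEdge m n (windmillW n K Q i t) (windmillW n K Q i (t+1)) := by
  have hmul : (K+1)*(n-1) ≤ m*(n-1) := Nat.mul_le_mul_right _ (by omega)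
  have hmul2 : (K+1)*(n-1) = K*(n-1)+(n-1) := by ring
  have hW1 : ∀ t, t+Q+2 ≤ n → windmillW n K Q i t = i+t := by
    intro t ht; unfold windmillW; rw [if_pos ht]
  have hW2 : ∀ t, t+Q+1 = n → windmillW n K Q i t = 1 := by
    intro t ht; unfold windmillW; rw [if_neg (by omega), if_pos ht]
  have hW3 : ∀ t, n < t+Q+1 → windmillW n K Q i t = K*(n-1)+(t+Q+1-n)+1 := by
    intro t ht; unfold windmillW; rw [if_neg (by omega), if_neg (by omega)]
  intro t ht
  by_cases h1 : t + Q + 2 ≤ n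
  · rw [hW1 t h1]
    have ha2 : i + t ≤ m*(n-1)+1 := by omega
    rw [edge_succ m n (i+t) _ hm hn (by omega) ha2]
    have hmod2 : (i+t-2) % (n-1) = Q+t := by
      have h3 : i+t-2 = K*(n-1)+(Q+t) := by omega
      rw [h3, windmill_mod n K (Q+t) (by omega)]
    rw [hmod2]
    by_cases h4 : Q + t = n-2
    · rw [if_pos h4, hW2 (t+1) (by omega)]
    · rw [if_neg h4, hW1 (t+1) (by omega)]
      omega
  · by_cases h2 : t + Q + 1 = n
    · rw [hW2 t h2, edge_one m n _ hn]
      refine ⟨K+1, by omega, by omega, ?_⟩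
      rw [hW3 (t+1) (by omega)]
      have h1 : K+1-1 = K := by omega
      rw [h1]; omega
    · rw [hW3 t (by omega)]
      have hr1 : 1 ≤ t + Q + 1 - n := by omega
      have hrQ : t + Q + 1 - n ≤ Q := by omega
      rw [edge_succ m n _ _ hm hn (by omega) (by omega)]
      have hmod2 : (K*(n-1)+(t+Q+1-n)+1-2) % (n-1) = t+Q+1-n - 1 := by
        have h3 : K*(n-1)+(t+Q+1-n)+1-2 = K*(n-1)+(t+Q+1-n-1) := by omega
        rw [h3, windmill_mod n K (t+Q+1-n-1) (by omega)]
      rw [hmod2, if_neg (by omega), hW3 (t+1) (by omega)]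
      omega

lemma windmill_uniq (m n i K Q : ℕ) (hm : 1 ≤ m) (hn : 3 ≤ n)
    (hQ : Q < n-1) (hK : K < m) (hiKQ : K*(n-1)+Q+2 = i)
    (v : ℕ → ℕ) (hv0 : v 0 = i) (hvn : v n = i)
    (hvb : ∀ t, t ≤ n → 1 ≤ v t ∧ v t ≤ m*(n-1)+1)
    (hve : ∀ t, t < n → windmillEdge m n (v t) (v (t+1))) :
    ∀ t, t ≤ n → v t = windmillW n K Q i t := by
  have hmul : (K+1)*(n-1) ≤ m*(n-1) := Nat.mul_le_mul_right _ (by omega)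
  have hmul2 : (K+1)*(n-1) = K*(n-1)+(n-1) := by ring
  have hW1 : ∀ t, t+Q+2 ≤ n → windmillW n K Q i t = i+t := by
    intro t ht; unfold windmillW; rw [if_pos ht]
  have hW2 : ∀ t, t+Q+1 = n → windmillW n K Q i t = 1 := by
    intro t ht; unfold windmillW; rw [if_neg (by omega), if_pos ht]
  have hW3 : ∀ t, n < t+Q+1 → windmillW n K Q i t = K*(n-1)+(t+Q+1-n)+1 := by
    intro t ht; unfold windmillW; rw [if_neg (by omega), if_neg (by omega)]
  have hA : ∀ t, t + Q + 1 ≤ n → v t = windmillW n K Q i t := by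
    intro t
    induction t with
    | zero => intro _; rw [hv0, hW1 0 (by omega)]; omega
    | succ t ih =>
      intro ht
      have hvt' : v t = i + t := by
        rw [ih (by omega), hW1 t (by omega)]
      have h := hve t (by omega)
      rw [hvt'] at h
      rw [edge_succ m n (i+t) _ hm hn (by omega) (by omega)] at h
      have hmod2 : (i+t-2) % (n-1) = Q+t := by
        have h3 : i+t-2 = K*(n-1)+(Q+t) := by omega
        rw [h3, windmill_mod n K (Q+t) (by omega)]
      rw [hmod2] at h
      by_cases h4 : Q + t = n-2
      · rw [if_pos h4] at h
        rw [h, hW2 (t+1) (by omega)]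
      · rw [if_neg h4] at h
        rw [h, hW1 (t+1) (by omega)]
        omega
  have hs : v (n-1-Q) = 1 := by
    rw [hA (n-1-Q) (by omega), hW2 (n-1-Q) (by omega)]
  have hB := hve (n-1-Q) (by omega)
  rw [hs, edge_one m n _ hn] at hB
  obtain ⟨k', hk1, hk2, hk'⟩ := hB
  have hsn : n-1-Q+1 = n-Q := by omega
  rw [hsn] at hk'
  have hC : ∀ r, r ≤ Q → v (n-Q+r) = (k'-1)*(n-1)+2+r := by
    intro r
    induction r with
    | zero => intro _; exact hk'
    | succ r ih =>
      intro hr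
      have h := hve (n-Q+r) (by omega)
      rw [ih (by omega)] at h
      have hb1 : (k'-1)*(n-1) ≤ (m-1)*(n-1) := Nat.mul_le_mul_right _ (by omega)
      have hb2 : (m-1)*(n-1) + (n-1) = m*(n-1) := by
        have hmm : m-1+1 = m := by omega
        calc (m-1)*(n-1) + (n-1) = (m-1+1)*(n-1) := by ring
        _ = m*(n-1) := by rw [hmm]
      rw [edge_succ m n _ _ hm hn (by omega) (by omega)] at h
      have hmod2 : ((k'-1)*(n-1)+2+r-2) % (n-1) = r := by
        have h3 : (k'-1)*(n-1)+2+r-2 = (k'-1)*(n-1)+r := by omega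
        rw [h3, windmill_mod n (k'-1) r (by omega)]
      rw [hmod2, if_neg (by omega)] at h
      have h5 : n-Q+r+1 = n-Q+(r+1) := by omega
      rw [h5] at h
      rw [h]; omega
  have hD : (k'-1)*(n-1)+2+Q = i := by
    have h := hC Q (le_refl Q)
    have h5 : n-Q+Q = n := by omega
    rw [h5, hvn] at h
    omega
  have hk'K : k'-1 = K := by
    have h1 : (k'-1)*(n-1) = K*(n-1) := by omega
    exact Nat.eq_of_mul_eq_mul_right (by omega : 0 < n-1) h1
  intro t ht
  by_cases h1 : t + Q + 1 ≤ n
  · exact hA t h1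
  · have h2 : n-Q + (t-(n-Q)) = t := by omega
    calc v t = v (n-Q+(t-(n-Q))) := by rw [h2]
      _ = (k'-1)*(n-1)+2+(t-(n-Q)) := hC _ (by omega)
      _ = windmillW n K Q i t := by rw [hW3 t (by omega), hk'K]; omega

set_option maxHeartbeats 2000000 in
theorem unique_closed_walk_length_n (m n : ℕ) (hm : 1 ≤ m) (hn : 3 ≤ n)
    (i : ℕ) (hi : 1 ≤ i ∧ i ≤ m*(n-1)+1) (hi1 : i ≠ 1) :
    ∃! w : Fin (n+1) → ℕ, IsWalk m n n w i i := by
  obtain ⟨hia, hib⟩ := hi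
  have hi2 : 2 ≤ i := by omega
  obtain ⟨K, Q, hQ, hK, hiKQ, himod⟩ := windmill_decomp m n i hn hi2 hib
  have hW0 : windmillW n K Q i 0 = i := by
    unfold windmillW; rw [if_pos (by omega)]; omega
  have hWn : windmillW n K Q i n = i := by
    unfold windmillW; rw [if_neg (by omega), if_neg (by omega)]; omega
  have hex : IsWalk m n n (fun t => windmillW n K Q i t.val) i i := by
    refine ⟨?_, ?_, ?_, ?_⟩
    · show windmillW n K Q i (0 : Fin (n+1)).val = i
      rw [Fin.val_zero]; exact hW0
    · show windmillW n K Q i (Fin.last n).val = i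
      exact hWn
    · intro t
      exact windmill_bound m n i K Q hm hn hQ hK hiKQ t.val (by omega)
    · intro t
      have e1 : (t.castSucc : Fin (n+1)).val = t.val := rfl
      have e2 : (t.succ : Fin (n+1)).val = t.val + 1 := rfl
      show windmillEdge m n (windmillW n K Q i t.castSucc.val)
        (windmillW n K Q i t.succ.val)
      rw [e1, e2]
      exact windmill_edge_step m n i K Q hm hn hQ hK hiKQ t.val t.isLt
  have huni : ∀ w : Fin (n+1) → ℕ, IsWalk m n n w i i →
      w = fun t => windmillW n K Q i t.val := by
    intro w hw
    obtain ⟨hw0, hwn, hwb, hwe⟩ := hw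
    obtain ⟨v, hvt⟩ : ∃ v : ℕ → ℕ, ∀ t (h : t < n+1), v t = w ⟨t, h⟩ :=
      ⟨fun t => if h : t < n+1 then w ⟨t, h⟩ else 0,
        fun t h => by simp only; rw [dif_pos h]⟩
    have hv0 : v 0 = i := by
      rw [hvt 0 (by omega)]
      have e : (⟨0, by omega⟩ : Fin (n+1)) = 0 := Fin.ext (by simp)
      rw [e, hw0]
    have hvn : v n = i := by
      rw [hvt n (by omega)]
      have e : (⟨n, by omega⟩ : Fin (n+1)) = Fin.last n := Fin.ext (by simp)
      rw [e, hwn]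
    have hvb : ∀ t, t ≤ n → 1 ≤ v t ∧ v t ≤ m*(n-1)+1 := by
      intro t ht
      rw [hvt t (by omega)]
      exact hwb _
    have hve : ∀ t, t < n → windmillEdge m n (v t) (v (t+1)) := by
      intro t ht
      have h := hwe ⟨t, ht⟩
      have e1 : ((⟨t, ht⟩ : Fin n).castSucc) = (⟨t, by omega⟩ : Fin (n+1)) :=
        Fin.ext (by simp)
      have e2 : ((⟨t, ht⟩ : Fin n).succ) = (⟨t+1, by omega⟩ : Fin (n+1)) :=
        Fin.ext (by simp)
      rw [e1, e2] at h
      rw [hvt t (by omega), hvt (t+1) (by omega)]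
      exact h
    have key := windmill_uniq m n i K Q hm hn hQ hK hiKQ v hv0 hvn hvb hve
    funext t
    have h := key t.val (by omega)
    rw [hvt t.val t.isLt] at h
    have e : (⟨t.val, t.isLt⟩ : Fin (n+1)) = t := Fin.ext rfl
    rw [e] at h
    exact h
  exact ⟨_, hex, huni⟩
end

section
/- For every k in {1,...,m}, there exists exactly one walk of length n-2 from vertex (k-1)(n-1)+2 to vertex (k-1)(n-1)+n in the oriented Dutch windmill graph D^m_n. -/
lemma edge_forces (m n a b k i : ℕ) (hn : 3 ≤ n)
    (hi2 : 2 ≤ i) (hin : i ≤ n-1) (ha : a = (k-1)*(n-1)+i)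
    (he : windmillEdge m n a b) : b = a + 1 := by
  rcases he with ⟨k', _, _, ha1, _⟩ | ⟨_, _, _, _, _, _, _, hb⟩ | ⟨k', hk'1, hk'm, ha', hb⟩
  · omega
  · exact hb
  · exfalso
    have hAB : (k'-1)*(n-1) < (k-1)*(n-1) := by omega
    have hkk : k' ≤ k - 1 := by
      by_contra h
      push_neg at h
      have : (k-1)*(n-1) ≤ (k'-1)*(n-1) := Nat.mul_le_mul_right _ (by omega)
      omega
    have h2 : (k'-1+1)*(n-1) ≤ (k-1)*(n-1) := Nat.mul_le_mul_right _ (by omega)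
    rw [Nat.add_mul] at h2
    omega

theorem unique_walk_length_n_minus_two (m n : ℕ) (hm : 1 ≤ m) (hn : 3 ≤ n)
    (k : ℕ) (hk : 1 ≤ k ∧ k ≤ m) :
    ∃! w : Fin (n-2+1) → ℕ,
      IsWalk m n (n-2) w ((k-1)*(n-1)+2) ((k-1)*(n-1)+n) := by
  obtain ⟨hk1, hkm⟩ := hk
  have hmul : (k-1)*(n-1) + (n-1) = k*(n-1) := by
    have : (k-1+1)*(n-1) = k*(n-1) := by congr 1; omega
    rw [Nat.add_mul] at this; omega
  have hmul2 : k*(n-1) ≤ m*(n-1) := Nat.mul_le_mul_right _ hkm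
  refine ⟨fun t => (k-1)*(n-1)+2+(t : ℕ), ⟨?_, ?_, ?_, ?_⟩, ?_⟩
  · simp
  · simp only [Fin.val_last]; omega
  · intro t
    have := t.isLt
    simp only []
    constructor <;> omega
  · intro t
    have ht := t.isLt
    right; left
    refine ⟨k, 2+(t : ℕ), hk1, hkm, by omega, by omega, ?_, ?_⟩
    · simp [Fin.coe_castSucc]; omega
    · simp [Fin.coe_castSucc, Fin.val_succ]; omega
  · intro w' hw'
    obtain ⟨h0, hlast, hbd, hedge⟩ := hw'
    have key : ∀ s (hs : s < n-2+1), w' ⟨s, hs⟩ = (k-1)*(n-1)+2+s := by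
      intro s
      induction s with
      | zero => intro hs; exact h0
      | succ s ih =>
        intro hs
        have hs' : s < n-2 := by omega
        have he := hedge ⟨s, hs'⟩
        have hc : (⟨s, hs'⟩ : Fin (n-2)).castSucc = ⟨s, by omega⟩ := rfl
        have hsu : (⟨s, hs'⟩ : Fin (n-2)).succ = ⟨s+1, hs⟩ := rfl
        rw [hc, hsu] at he
        rw [ih (by omega)] at he
        have := edge_forces m n ((k-1)*(n-1)+2+s) (w' ⟨s+1, hs⟩) k (2+s) hn
          (by omega) (by omega) (by omega) he
        omega
    funext t
    have := key t t.isLt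
    simpa using this
end

section
/- For every k in {1,...,m}, there exists exactly one walk of length 2n-2 from vertex (k-1)(n-1)+2 to vertex (k-1)(n-1)+n in the oriented Dutch windmill graph D^m_n. -/
lemma decomp_eq {n a b i j : ℕ} (hn : 3 ≤ n) (hi1 : 2 ≤ i) (hi2 : i ≤ n)
    (hj1 : 2 ≤ j) (hj2 : j ≤ n) (h : a*(n-1)+i = b*(n-1)+j) : a = b ∧ i = j := by
  rcases lt_trichotomy a b with hab|hab|hab
  · exfalso
    have h1 : (a+1)*(n-1) ≤ b*(n-1) := Nat.mul_le_mul_right _ hab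
    have h2 : (a+1)*(n-1) = a*(n-1) + (n-1) := by ring
    rw [h2] at h1
    obtain ⟨A, hA⟩ : ∃ A, a*(n-1) = A := ⟨_, rfl⟩
    obtain ⟨B, hB⟩ : ∃ B, b*(n-1) = B := ⟨_, rfl⟩
    rw [hA, hB] at h h1
    omega
  · subst hab; omega
  · exfalso
    have h1 : (b+1)*(n-1) ≤ a*(n-1) := Nat.mul_le_mul_right _ hab
    have h2 : (b+1)*(n-1) = b*(n-1) + (n-1) := by ring
    rw [h2] at h1
    obtain ⟨A, hA⟩ : ∃ A, a*(n-1) = A := ⟨_, rfl⟩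
    obtain ⟨B, hB⟩ : ∃ B, b*(n-1) = B := ⟨_, rfl⟩
    rw [hA, hB] at h h1
    omega

lemma edgeA {m n a b c i : ℕ} (hn : 3 ≤ n) (hc : 1 ≤ c) (hcm : c ≤ m)
    (hi : 2 ≤ i) (hi2 : i ≤ n-1) (ha : a = (c-1)*(n-1)+i)
    (h : windmillEdge m n a b) : b = a+1 := by
  rcases h with ⟨k,hk1,hk2,ha1,hb⟩ | ⟨k,j,hk1,hk2,hj1,hj2,ha2,hb⟩ | ⟨k,hk1,hk2,ha3,hb⟩
  · exfalso; have : i ≤ a := ha ▸ Nat.le_add_left _ _; omega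
  · exact hb
  · exfalso
    have := decomp_eq hn hi (by omega) (by omega) (le_refl n) (ha ▸ ha3)
    omega

lemma edgeB {m n a b c : ℕ} (hn : 3 ≤ n) (hc : 1 ≤ c) (hcm : c ≤ m)
    (ha : a = (c-1)*(n-1)+n) (h : windmillEdge m n a b) : b = 1 := by
  rcases h with ⟨k,hk1,hk2,ha1,hb⟩ | ⟨k,j,hk1,hk2,hj1,hj2,ha2,hb⟩ | ⟨k,hk1,hk2,ha3,hb⟩
  · exfalso; have : n ≤ a := ha ▸ Nat.le_add_left _ _; omega
  · exfalso
    have := decomp_eq hn (by omega) (le_refl n) hj1 (by omega) (ha ▸ ha2)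
    omega
  · exact hb

lemma edgeC {m n b : ℕ} (hn : 3 ≤ n) (h : windmillEdge m n 1 b) :
    ∃ k, 1 ≤ k ∧ k ≤ m ∧ b = (k-1)*(n-1)+2 := by
  rcases h with ⟨k,hk1,hk2,ha1,hb⟩ | ⟨k,j,hk1,hk2,hj1,hj2,ha2,hb⟩ | ⟨k,hk1,hk2,ha3,hb⟩
  · exact ⟨k,hk1,hk2,hb⟩
  · exfalso; have : j ≤ 1 := ha2 ▸ Nat.le_add_left _ _; omega
  · exfalso; have : n ≤ 1 := ha3 ▸ Nat.le_add_left _ _; omega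

lemma forced_seg {m n r : ℕ} (hn : 3 ≤ n) {w : Fin (r+1) → ℕ}
    (hE : ∀ t : Fin r, windmillEdge m n (w t.castSucc) (w t.succ))
    {c : ℕ} (hc : 1 ≤ c) (hcm : c ≤ m) (s : ℕ) (hs : s < r+1)
    (hws : w ⟨s, hs⟩ = (c-1)*(n-1)+2) :
    ∀ d (h : s + d < r + 1), 2 + d ≤ n → w ⟨s+d, h⟩ = (c-1)*(n-1)+(2+d) := by
  intro d
  induction d with
  | zero => intro h _; exact hws
  | succ d ih =>
    intro h hd
    have hlt : s + d < r := by omega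
    have hprev := ih (by omega) (by omega)
    have hedge : windmillEdge m n (w ⟨s+d, by omega⟩) (w ⟨s+d+1, h⟩) := by
      have := hE ⟨s+d, hlt⟩
      simpa [Fin.castSucc_mk, Fin.succ_mk] using this
    have hb : w ⟨s+d+1, h⟩ = w ⟨s+d, by omega⟩ + 1 :=
      edgeA hn hc hcm (show 2 ≤ 2+d by omega) (by omega) hprev hedge
    rw [hprev] at hb
    have hgoal : w ⟨s+d+1, h⟩ = (c-1)*(n-1)+(2+(d+1)) := by rw [hb]; ring
    exact hgoal

lemma bound_lemma {n k m : ℕ} (hn : 3 ≤ n) (hk1 : 1 ≤ k) (hk2 : k ≤ m) :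
    (k-1)*(n-1) + n ≤ m*(n-1)+1 := by
  have h1 : k*(n-1) ≤ m*(n-1) := Nat.mul_le_mul_right _ hk2
  have h2 : k*(n-1) = (k-1)*(n-1)+(n-1) := by
    nth_rewrite 1 [show k = (k-1)+1 by omega]
    ring
  rw [h2] at h1
  obtain ⟨A, hA⟩ : ∃ A, (k-1)*(n-1) = A := ⟨_, rfl⟩
  obtain ⟨B, hB⟩ : ∃ B, m*(n-1) = B := ⟨_, rfl⟩
  rw [hA, hB] at h1 ⊢
  omega

set_option maxHeartbeats 1000000 in
theorem unique_walk_length_two_n_minus_two (m n : ℕ) (hm : 1 ≤ m) (hn : 3 ≤ n)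
    (k : ℕ) (hk : 1 ≤ k ∧ k ≤ m) :
    ∃! w : Fin (2*n-2+1) → ℕ,
      IsWalk m n (2*n-2) w ((k-1)*(n-1)+2) ((k-1)*(n-1)+n) := by
  obtain ⟨hk1, hk2⟩ := hk
  have hbound : (k-1)*(n-1) + n ≤ m*(n-1)+1 := bound_lemma hn hk1 hk2
  obtain ⟨b, hb⟩ : ∃ b, (k-1)*(n-1) = b := ⟨_, rfl⟩
  rw [hb] at hbound ⊢
  refine ⟨fun t => if (t:ℕ) ≤ n-2 then b+2+(t:ℕ)
      else if (t:ℕ) = n-1 then 1 else b + ((t:ℕ) - (n-2)), ⟨?_, ?_, ?_, ?_⟩, ?_⟩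
  · -- start
    simp only [Fin.val_zero]
    simp
  · -- end
    simp only [Fin.val_last]
    rw [if_neg (by omega), if_neg (by omega)]
    omega
  · -- bounds
    intro t
    have ht := t.isLt
    dsimp only
    split_ifs <;> omega
  · -- edges
    rintro ⟨s, hs⟩
    simp only [Fin.castSucc_mk, Fin.succ_mk, Fin.val_mk]
    have hcase : s + 1 ≤ n-2 ∨ s = n-2 ∨ s = n-1 ∨ (n ≤ s ∧ s ≤ 2*n-3) := by omega
    rcases hcase with h | h | h | ⟨h, h'⟩
    · rw [if_pos (by omega : s ≤ n-2), if_pos h]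
      exact Or.inr (Or.inl ⟨k, 2+s, hk1, hk2, by omega, by omega, by rw [hb]; omega,
        by omega⟩)
    · rw [if_pos (by omega : s ≤ n-2), if_neg (by omega), if_pos (by omega)]
      exact Or.inr (Or.inr ⟨k, hk1, hk2, by rw [hb]; omega, rfl⟩)
    · rw [if_neg (by omega), if_pos h, if_neg (by omega), if_neg (by omega)]
      exact Or.inl ⟨k, hk1, hk2, rfl, by rw [hb]; omega⟩
    · rw [if_neg (by omega), if_neg (by omega), if_neg (by omega), if_neg (by omega)]
      exact Or.inr (Or.inl ⟨k, s-(n-2), hk1, hk2, by omega, by omega, by rw [hb],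
        by omega⟩)
  · -- uniqueness
    rintro w ⟨hw0, hwlast, hwmem, hwE⟩
    have hz : (⟨0, by omega⟩ : Fin (2*n-2+1)) = 0 := Fin.ext (by simp)
    have h00 : w ⟨0, by omega⟩ = (k-1)*(n-1)+2 := by rw [hz, hw0, hb]
    have hA : ∀ d (h : d < 2*n-2+1), 2+d ≤ n → w ⟨d, h⟩ = (k-1)*(n-1)+(2+d) := by
      intro d h hd
      have := forced_seg hn hwE hk1 hk2 0 (by omega) h00 d (by omega) hd
      simpa using this
    have hn2 : w ⟨n-2, by omega⟩ = (k-1)*(n-1)+n := by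
      rw [hA (n-2) (by omega) (by omega)]
      congr 1
      omega
    have hedge1 : windmillEdge m n (w ⟨n-2, by omega⟩) (w ⟨n-2+1, by omega⟩) :=
      hwE ⟨n-2, by omega⟩
    have hstep1 : w ⟨n-2+1, by omega⟩ = 1 := edgeB hn hk1 hk2 hn2 hedge1
    have hedge2 : windmillEdge m n (w ⟨n-2+1, by omega⟩) (w ⟨n-2+1+1, by omega⟩) :=
      hwE ⟨n-2+1, by omega⟩
    have hedge3 : windmillEdge m n 1 (w ⟨n-2+1+1, by omega⟩) :=
      (congrArg (fun x => windmillEdge m n x (w ⟨n-2+1+1, by omega⟩)) hstep1).mp hedge2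
    obtain ⟨k', hk'1, hk'2, hk'eq⟩ := edgeC hn hedge3
    have hB := forced_seg hn hwE hk'1 hk'2 (n-2+1+1) (by omega) hk'eq
    have hlast2 : w (Fin.last (2*n-2)) = (k'-1)*(n-1)+n := by
      have h1 := hB (n-2) (by omega) (by omega)
      have h2 : Fin.last (2*n-2) = (⟨n-2+1+1+(n-2), by omega⟩ : Fin (2*n-2+1)) := by
        apply Fin.ext
        simp only [Fin.val_last, Fin.val_mk]
        omega
      rw [h2, h1]
      congr 1
      omega
    have hkk : k' = k := by
      rw [hwlast] at hlast2
      rw [← hb] at hlast2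
      have := decomp_eq hn (by omega) (le_refl n) (by omega) (le_refl n) hlast2.symm
      omega
    funext t
    obtain ⟨s, hslt⟩ := t
    simp only [Fin.val_mk]
    have hcase : s ≤ n-2 ∨ s = n-1 ∨ (n ≤ s ∧ s ≤ 2*n-2) := by omega
    rcases hcase with h | h | ⟨h, h'⟩
    · rw [if_pos h, hA s hslt (by omega), hb]
      omega
    · rw [if_neg (by omega), if_pos h]
      rw [show (⟨s, hslt⟩ : Fin (2*n-2+1)) = ⟨n-2+1, by omega⟩ from Fin.ext (by simp; omega)]
      exact hstep1
    · rw [if_neg (by omega), if_neg (by omega)]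
      rw [show (⟨s, hslt⟩ : Fin (2*n-2+1)) = ⟨n-2+1+1+(s-n), by omega⟩ from
        Fin.ext (by simp; omega)]
      rw [hB (s-n) (by omega) (by omega), hkk, hb]
      omega
end

section
/- Let M be the adjacency matrix of the oriented Dutch windmill graph D^m_n with m ≥ 2. Then M^(2n-2) ≠ m · M^(n-2). -/
lemma wm_edge_unique {m n k i b : ℕ} (hn : 3 ≤ n) (hk : 1 ≤ k) (hkm : k ≤ m)
    (hi : 2 ≤ i) (hi' : i ≤ n - 1)
    (h : windmillEdge m n ((k-1)*(n-1)+i) b) : b = (k-1)*(n-1)+i+1 := by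
  rcases h with ⟨k', h1, h2, h3, h4⟩ | ⟨k', i', h1,h2,h3,h4,h5,h6⟩ | ⟨k', h1, h2, h3, h4⟩
  · exfalso
    set A := (k-1)*(n-1) with hA
    omega
  · exact h6
  · exfalso
    rcases le_or_gt k k' with hle | hlt
    · have hAB : (k-1)*(n-1) ≤ (k'-1)*(n-1) :=
        Nat.mul_le_mul_right _ (by omega)
      set A := (k-1)*(n-1); set B := (k'-1)*(n-1)
      omega
    · have hAB : (k'-1)*(n-1) + (n-1) ≤ (k-1)*(n-1) := by
        calc (k'-1)*(n-1)+(n-1) = ((k'-1)+1)*(n-1) := by ring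
          _ ≤ (k-1)*(n-1) := Nat.mul_le_mul_right _ (by omega)
      set A := (k-1)*(n-1); set B := (k'-1)*(n-1)
      omega

lemma wm_pow_nonneg (m n : ℕ) : ∀ r (i j : Fin (m*(n-1)+1)),
    0 ≤ ((windmillMatrix m n)^r) i j := by
  intro r
  induction r with
  | zero =>
    intro i j
    rw [pow_zero, Matrix.one_apply]
    split <;> norm_num
  | succ r ih =>
    intro i j
    rw [pow_succ', Matrix.mul_apply]
    refine Finset.sum_nonneg fun x _ => mul_nonneg ?_ (ih _ _)
    simp only [windmillMatrix]
    split <;> norm_num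

lemma wm_pow_split (m n a b : ℕ) (i j u : Fin (m*(n-1)+1)) :
    ((windmillMatrix m n)^a) i u * ((windmillMatrix m n)^b) u j
      ≤ ((windmillMatrix m n)^(a+b)) i j := by
  rw [pow_add, Matrix.mul_apply]
  exact Finset.single_le_sum
    (fun x _ => mul_nonneg (wm_pow_nonneg m n a i x) (wm_pow_nonneg m n b x j))
    (Finset.mem_univ u)

lemma wm_forced (m n : ℕ) (hm : 2 ≤ m) (hn : 3 ≤ n) :
    ∀ s k i (v w : Fin (m*(n-1)+1)), 1 ≤ k → k ≤ m → 2 ≤ i → i + s ≤ n →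
      (v:ℕ) + 1 = (k-1)*(n-1) + i →
      ((windmillMatrix m n)^s) v w
        = if (w:ℕ) + 1 = (k-1)*(n-1) + i + s then 1 else 0 := by
  intro s
  induction s with
  | zero =>
    intro k i v w hk hkm hi hin hv
    have hiff : (v = w) ↔ ((w:ℕ) + 1 = (k-1)*(n-1) + i + 0) := by
      rw [Fin.ext_iff]; omega
    rw [pow_zero, Matrix.one_apply, if_congr hiff rfl rfl]
  | succ s ih =>
    intro k i v w hk hkm hi hin hv
    have hin' : i ≤ n - 1 := by omega
    have hmm : m*(n-1) = (m-1)*(n-1) + (n-1) := by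
      have : (m-1)+1 = m := by omega
      calc m*(n-1) = ((m-1)+1)*(n-1) := by rw [this]
        _ = (m-1)*(n-1) + (n-1) := by ring
    have hkb : (k-1)*(n-1) ≤ (m-1)*(n-1) := Nat.mul_le_mul_right _ (by omega)
    have hub : (v:ℕ)+1 < m*(n-1)+1 := by omega
    set u : Fin (m*(n-1)+1) := ⟨(v:ℕ)+1, hub⟩ with hu
    rw [pow_succ', Matrix.mul_apply]
    have hsum : ∑ x, windmillMatrix m n v x * ((windmillMatrix m n)^s) x w
        = windmillMatrix m n v u * ((windmillMatrix m n)^s) u w := by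
      refine Finset.sum_eq_single_of_mem u (Finset.mem_univ u) ?_
      intro x _ hx
      have hMvx : windmillMatrix m n v x = 0 := by
        simp only [windmillMatrix]
        rw [if_neg]
        intro hedge
        rw [hv] at hedge
        have hxval := wm_edge_unique hn hk hkm hi hin' hedge
        refine hx (Fin.ext ?_)
        show (x:ℕ) = (v:ℕ)+1
        omega
      rw [hMvx, zero_mul]
    rw [hsum]
    have hMvu : windmillMatrix m n v u = 1 := by
      simp only [windmillMatrix]
      rw [if_pos]
      exact Or.inr (Or.inl ⟨k, i, hk, hkm, hi, hin', hv, rfl⟩)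
    rw [hMvu, one_mul]
    have hu1 : (u:ℕ) + 1 = (k-1)*(n-1) + (i+1) := by
      show (v:ℕ)+1+1 = _
      omega
    have := ih k (i+1) u w hk hkm (by omega) (by omega) hu1
    rw [this]
    have hiff : ((w:ℕ) + 1 = (k-1)*(n-1) + (i+1) + s)
        ↔ ((w:ℕ) + 1 = (k-1)*(n-1) + i + (s+1)) := by omega
    rw [if_congr hiff rfl rfl]

theorem windmillMatrix_pow_two_n_minus_two_ne (m n : ℕ) (hm : 2 ≤ m) (hn : 3 ≤ n) :
    (windmillMatrix m n)^(2*n-2) ≠ (m : ℝ) • (windmillMatrix m n)^(n-2) := by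
  intro h
  have key : 2*(n-1) ≤ m*(n-1) := Nat.mul_le_mul_right _ hm
  set N := m*(n-1)+1 with hN
  have hvN : 1 < N := by omega
  have hwN : 2*n-2 < N := by omega
  have hu1N : n-1 < N := by omega
  have hu2N : 0 < N := by omega
  have hu3N : n < N := by omega
  set v : Fin N := ⟨1, hvN⟩
  set w : Fin N := ⟨2*n-2, hwN⟩
  set u1 : Fin N := ⟨n-1, hu1N⟩
  set u2 : Fin N := ⟨0, hu2N⟩
  set u3 : Fin N := ⟨n, hu3N⟩
  set M := windmillMatrix m n with hM
  -- (M^(n-2)) v w = 0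
  have hP0 : (M^(n-2)) v w = 0 := by
    rw [wm_forced m n hm hn (n-2) 1 2 v w le_rfl (by omega) le_rfl (by omega)
      (by show (1:ℕ)+1 = (1-1)*(n-1)+2; omega)]
    rw [if_neg (by show ¬(2*n-2+1 = (1-1)*(n-1)+2+(n-2)); omega)]
  -- (M^(n-2)) v u1 = 1
  have h1 : (M^(n-2)) v u1 = 1 := by
    rw [wm_forced m n hm hn (n-2) 1 2 v u1 le_rfl (by omega) le_rfl (by omega)
      (by show (1:ℕ)+1 = (1-1)*(n-1)+2; omega)]
    rw [if_pos (by show n-1+1 = (1-1)*(n-1)+2+(n-2); omega)]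
  -- M u1 u2 = 1  (edge n → 1)
  have h2 : M u1 u2 = 1 := by
    simp only [hM, windmillMatrix]
    rw [if_pos]
    exact Or.inr (Or.inr ⟨1, le_rfl, by omega, by show n-1+1 = (1-1)*(n-1)+n; omega, rfl⟩)
  -- M u2 u3 = 1  (edge 1 → n+1)
  have h3 : M u2 u3 = 1 := by
    simp only [hM, windmillMatrix]
    rw [if_pos]
    exact Or.inl ⟨2, by omega, hm, rfl, by show n+1 = (2-1)*(n-1)+2; omega⟩
  -- (M^(n-2)) u3 w = 1
  have h4 : (M^(n-2)) u3 w = 1 := by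
    rw [wm_forced m n hm hn (n-2) 2 2 u3 w (by omega) hm le_rfl (by omega)
      (by show n+1 = (2-1)*(n-1)+2; omega)]
    rw [if_pos (by show 2*n-2+1 = (2-1)*(n-1)+2+(n-2); omega)]
  -- build the lower bound
  have A3 := wm_pow_split m n 1 (n-2) u2 w u3
  rw [← hM, pow_one] at A3
  rw [h3, h4, one_mul] at A3
  have e3 : 1 + (n-2) = n-1 := by omega
  rw [e3] at A3
  have A2 := wm_pow_split m n 1 (n-1) u1 w u2
  rw [← hM, pow_one] at A2
  rw [h2, one_mul] at A2
  have e2 : 1 + (n-1) = n := by omega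
  rw [e2] at A2
  have A1 := wm_pow_split m n (n-2) n v w u1
  rw [← hM] at A1
  rw [h1, one_mul] at A1
  have e1 : (n-2) + n = 2*n-2 := by omega
  rw [e1] at A1
  have hL : (1:ℝ) ≤ (M^(2*n-2)) v w := le_trans (le_trans A3 A2) A1
  -- contradiction
  have hvw : (M^(2*n-2)) v w = ((m:ℝ) • M^(n-2)) v w := by rw [h]
  rw [Matrix.smul_apply, hP0, smul_zero] at hvw
  rw [hvw] at hL
  norm_num at hL
end

section
/- Let M be the adjacency matrix of the oriented Dutch windmill graph D^m_n with m ≥ 2. Then M^n ≠ m · I, where I is the identity matrix of order m(n-1)+1. -/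
/-- From the last vertex `(k-1)(n-1)+n` of blade `k`, the only out-edge goes
to vertex `1`. -/
lemma windmill_edge_from_tail (m n b : ℕ) (hn : 3 ≤ n) (k : ℕ)
    (hk1 : 1 ≤ k) (hk2 : k ≤ m) :
    windmillEdge m n ((k-1)*(n-1)+n) b ↔ b = 1 := by
  constructor
  · rintro (⟨k', _, _, ha, _⟩ | ⟨k', i, _, _, hi2, hi3, ha, _⟩ | ⟨k', _, _, _, hb⟩)
    · omega
    · -- (k-1)*(n-1)+n = (k'-1)*(n-1)+i with 2 ≤ i ≤ n-1 : impossible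
      exfalso
      have hL : (k-1)*(n-1)+n = k*(n-1)+1 := by
        have hk : k = (k-1)+1 := by omega
        have : k*(n-1) = (k-1)*(n-1) + 1*(n-1) := by
          conv_lhs => rw [hk]
          rw [add_mul]
        omega
      rcases le_or_gt (k'-1) (k-1) with h | h
      · have := Nat.mul_le_mul_right (n-1) h
        omega
      · have : k ≤ k' - 1 := by omega
        have := Nat.mul_le_mul_right (n-1) this
        omega
    · exact hb
  · rintro rfl
    exact Or.inr (Or.inr ⟨k, hk1, hk2, rfl, rfl⟩)

theorem windmillMatrix_pow_n_ne_smul_one (m n : ℕ) (hm : 2 ≤ m) (hn : 3 ≤ n) :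
    (windmillMatrix m n)^n ≠ (m : ℝ) • (1 : Matrix (Fin (m*(n-1)+1)) (Fin (m*(n-1)+1)) ℝ) := by
  intro h
  set N := m*(n-1)+1 with hN
  have hN2 : 2*(n-1) < N := by
    have : 2*(n-1) ≤ m*(n-1) := Nat.mul_le_mul_right _ hm
    omega
  have hN1 : n-1 < N := by omega
  set i1 : Fin N := ⟨n-1, hN1⟩
  set i2 : Fin N := ⟨2*(n-1), hN2⟩
  have hne : i1 ≠ i2 := by
    simp only [i1, i2, Fin.mk.injEq, ne_eq]
    omega
  have e1 : ((i1 : ℕ) + 1) = (1-1)*(n-1)+n := by simp [i1]; omega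
  have e2 : ((i2 : ℕ) + 1) = (2-1)*(n-1)+n := by simp [i2]; omega
  have hrow : windmillMatrix m n i1 = windmillMatrix m n i2 := by
    funext j
    simp only [windmillMatrix, e1, e2,
      windmill_edge_from_tail m n _ hn 1 le_rfl (by omega),
      windmill_edge_from_tail m n _ hn 2 (by omega) hm]
  have hdet : (windmillMatrix m n).det = 0 :=
    Matrix.det_zero_of_row_eq hne hrow
  have hd := congrArg Matrix.det h
  rw [Matrix.det_pow, hdet, zero_pow (by omega), Matrix.det_smul, Matrix.det_one,
    mul_one] at hd
  have : (0:ℝ) < (m:ℝ)^(Fintype.card (Fin N)) := by positivity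
  rw [← hd] at this
  exact lt_irrefl _ this
end

section
/- Let M be the adjacency matrix of the oriented Dutch windmill graph D^m_n. Then M^(n²-1) = m^(n-1) · M^(n-1). -/
namespace WindmillAux

open Matrix

variable {m n : ℕ}

lemma rep_unique (hn : 3 ≤ n) {a b x y : ℕ} (hx : x < n-1) (hy : y < n-1)
    (h : a*(n-1)+x = b*(n-1)+y) : a = b ∧ x = y := by
  have h1 : (a*(n-1)+x) % (n-1) = x % (n-1) := Nat.mul_add_mod' _ _ _
  have h2 : (b*(n-1)+y) % (n-1) = y % (n-1) := Nat.mul_add_mod' _ _ _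
  rw [Nat.mod_eq_of_lt hx] at h1
  rw [Nat.mod_eq_of_lt hy] at h2
  rw [h, h2] at h1
  have hxy : x = y := h1.symm
  have h3 : a * (n-1) = b * (n-1) := by omega
  exact ⟨Nat.eq_of_mul_eq_mul_right (by omega) h3, hxy⟩

lemma edge_to_start (hn : 3 ≤ n) {k : ℕ} (hk : k < m) (a : ℕ) :
    windmillEdge m n a (k*(n-1)+2) ↔ a = 1 := by
  constructor
  · rintro (⟨k', _, _, ha, _⟩ | ⟨k', i, _, _, hi2, hi, ha, hb⟩ | ⟨k', _, _, _, hb⟩)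
    · exact ha
    · exfalso
      have h : (k'-1)*(n-1)+(i-1) = k*(n-1)+0 := by omega
      have := (rep_unique hn (by omega) (by omega) h).2
      omega
    · omega
  · intro ha
    exact Or.inl ⟨k+1, by omega, by omega, ha, by simp⟩

lemma edge_to_mid (hn : 3 ≤ n) {k p : ℕ} (hk : k < m) (hp2 : 2 ≤ p) (hp : p ≤ n-1) (a : ℕ) :
    windmillEdge m n a (k*(n-1)+p+1) ↔ a = k*(n-1)+p := by
  constructor
  · rintro (⟨k', _, _, _, hb⟩ | ⟨k', i, _, _, hi2, hi, ha, hb⟩ | ⟨k', _, _, _, hb⟩)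
    · exfalso
      have h : (k'-1)*(n-1)+0 = k*(n-1)+(p-1) := by omega
      have := (rep_unique hn (by omega) (by omega) h).2
      omega
    · have h : (k'-1)*(n-1)+(i-1) = k*(n-1)+(p-1) := by omega
      obtain ⟨hk', hi'⟩ := rep_unique hn (by omega) (by omega) h
      have hmul : (k'-1)*(n-1) = k*(n-1) := by rw [hk']
      omega
    · omega
  · intro ha
    exact Or.inr (Or.inl ⟨k+1, p, by omega, by omega, hp2, hp, by simpa using ha, by omega⟩)

lemma edge_to_hub (hn : 3 ≤ n) (a : ℕ) :
    windmillEdge m n a 1 ↔ ∃ k, k < m ∧ a = k*(n-1)+n := by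
  constructor
  · rintro (⟨k', _, _, _, hb⟩ | ⟨k', i, _, _, hi2, _, ha, hb⟩ | ⟨k', hk1, hk2, ha, _⟩)
    · omega
    · omega
    · exact ⟨k'-1, by omega, ha⟩
  · rintro ⟨k, hk, ha⟩
    exact Or.inr (Or.inr ⟨k+1, by omega, by omega, by simpa using ha, rfl⟩)

/-- The `p`-th vertex of cycle `k` (0-based index `k*(n-1)+p`). -/
def vtxF (m n k p : ℕ) : Fin (m*(n-1)+1) :=
  ⟨(k*(n-1)+p) % (m*(n-1)+1), Nat.mod_lt _ (Nat.succ_pos _)⟩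

lemma vtx_lt {k p : ℕ} (hk : k < m) (hp : p ≤ n-1) : k*(n-1)+p < m*(n-1)+1 := by
  have h1 : (k+1)*(n-1) ≤ m*(n-1) := Nat.mul_le_mul_right (n-1) (by omega)
  have h2 : (k+1)*(n-1) = k*(n-1)+(n-1) := by ring
  omega

lemma vtxF_val {k p : ℕ} (hk : k < m) (hp : p ≤ n-1) : (vtxF m n k p : ℕ) = k*(n-1)+p :=
  Nat.mod_eq_of_lt (vtx_lt hk hp)

open Classical in
lemma matrix_apply (i j : Fin (m*(n-1)+1)) :
    windmillMatrix m n i j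
      = if windmillEdge m n ((i : ℕ)+1) ((j : ℕ)+1) then (1:ℝ) else 0 := rfl

lemma mulVec_sum {N : ℕ} (A : Matrix (Fin N) (Fin N) ℝ) (s : Finset ℕ)
    (f : ℕ → Fin N → ℝ) : A *ᵥ (∑ k ∈ s, f k) = ∑ k ∈ s, A *ᵥ (f k) := by
  classical
  induction s using Finset.induction with
  | empty => simp
  | insert _ _ h ih => rw [Finset.sum_insert h, Finset.sum_insert h, Matrix.mulVec_add, ih]

lemma col_start (hn : 3 ≤ n) {k : ℕ} (hk : k < m) :
    windmillMatrix m n *ᵥ Pi.single (vtxF m n k 1) 1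
      = Pi.single (0 : Fin (m*(n-1)+1)) 1 := by
  funext i
  rw [Matrix.mulVec_single]
  rw [Pi.smul_apply, Matrix.col_apply, op_smul_eq_mul, mul_one]
  rw [matrix_apply, vtxF_val hk (by omega), Pi.single_apply]
  rw [show k*(n-1)+1+1 = k*(n-1)+2 by omega]
  rw [edge_to_start hn hk]
  by_cases hc : (i:ℕ) = 0
  · rw [if_pos (show (i:ℕ)+1 = 1 by omega),
      if_pos (Fin.ext (by simpa using hc))]
  · rw [if_neg (show ¬((i:ℕ)+1 = 1) by omega),
      if_neg (fun h => hc (by simpa using congrArg Fin.val h))]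

lemma col_mid (hn : 3 ≤ n) {k p : ℕ} (hk : k < m) (hp2 : 2 ≤ p) (hp : p ≤ n-1) :
    windmillMatrix m n *ᵥ Pi.single (vtxF m n k p) 1
      = Pi.single (vtxF m n k (p-1)) 1 := by
  funext i
  rw [Matrix.mulVec_single]
  rw [Pi.smul_apply, Matrix.col_apply, op_smul_eq_mul, mul_one]
  rw [matrix_apply, vtxF_val hk hp, Pi.single_apply]
  rw [edge_to_mid hn hk hp2 hp]
  by_cases hc : (i:ℕ) = k*(n-1)+(p-1)
  · rw [if_pos (show (i:ℕ)+1 = k*(n-1)+p by omega),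
      if_pos (Fin.ext (by rw [vtxF_val hk (by omega : p-1 ≤ n-1)]; exact hc))]
  · rw [if_neg (show ¬((i:ℕ)+1 = k*(n-1)+p) by omega),
      if_neg (fun h => hc (by
        rw [← vtxF_val hk (by omega : p-1 ≤ n-1)]; exact congrArg Fin.val h))]

lemma col_hub (hn : 3 ≤ n) :
    windmillMatrix m n *ᵥ Pi.single (0 : Fin (m*(n-1)+1)) 1
      = ∑ k ∈ Finset.range m, Pi.single (vtxF m n k (n-1)) 1 := by
  funext i
  rw [Finset.sum_apply, Matrix.mulVec_single]
  rw [Pi.smul_apply, Matrix.col_apply, op_smul_eq_mul, mul_one]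
  rw [matrix_apply]
  have h0 : ((0 : Fin (m*(n-1)+1)) : ℕ) + 1 = 1 := rfl
  rw [h0, edge_to_hub hn]
  by_cases h : ∃ k, k < m ∧ (i:ℕ) = k*(n-1)+(n-1)
  · obtain ⟨k0, hk0, hik⟩ := h
    rw [if_pos ⟨k0, hk0, by omega⟩]
    rw [Finset.sum_eq_single k0]
    · rw [Pi.single_apply, if_pos]
      exact Fin.ext (by rw [vtxF_val hk0 le_rfl]; omega)
    · intro b hb hbne
      rw [Pi.single_apply, if_neg]
      intro hib
      apply hbne
      have hv : (i:ℕ) = b*(n-1)+(n-1) := by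
        rw [hib, vtxF_val (Finset.mem_range.mp hb) le_rfl]
      have h2 : b*(n-1)+(n-2) = k0*(n-1)+(n-2) := by omega
      exact (rep_unique hn (by omega) (by omega) h2).1
    · intro hk0'
      exact absurd (Finset.mem_range.mpr hk0) hk0'
  · rw [if_neg, Finset.sum_eq_zero]
    · intro b hb
      rw [Pi.single_apply, if_neg]
      intro hib
      exact h ⟨b, Finset.mem_range.mp hb,
        by rw [hib, vtxF_val (Finset.mem_range.mp hb) le_rfl]⟩
    · rintro ⟨k, hk, hak⟩
      exact h ⟨k, hk, by omega⟩

/-- Sum of class-`p` basis vectors. -/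
def Uvec (m n p : ℕ) : Fin (m*(n-1)+1) → ℝ :=
  ∑ k ∈ Finset.range m, Pi.single (vtxF m n k p) 1

def hubV (m n : ℕ) : Fin (m*(n-1)+1) → ℝ := Pi.single 0 1

lemma V_hub (hn : 3 ≤ n) :
    windmillMatrix m n *ᵥ hubV m n = Uvec m n (n-1) := col_hub hn

lemma V_start (hn : 3 ≤ n) :
    windmillMatrix m n *ᵥ Uvec m n 1 = (m:ℝ) • hubV m n := by
  rw [Uvec, mulVec_sum,
    Finset.sum_congr rfl (fun k hk => col_start hn (Finset.mem_range.mp hk)),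
    Finset.sum_const, Finset.card_range, hubV]
  exact (Nat.cast_smul_eq_nsmul ℝ m _).symm

lemma V_mid (hn : 3 ≤ n) {p : ℕ} (hp2 : 2 ≤ p) (hp : p ≤ n-1) :
    windmillMatrix m n *ᵥ Uvec m n p = Uvec m n (p-1) := by
  rw [Uvec, mulVec_sum,
    Finset.sum_congr rfl (fun k hk => col_mid hn (Finset.mem_range.mp hk) hp2 hp)]
  rfl

lemma L1 (hn : 3 ≤ n) : ∀ p, 1 ≤ p → p ≤ n-1 →
    (windmillMatrix m n)^p *ᵥ Uvec m n p = (m:ℝ) • hubV m n := by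
  intro p
  induction p with
  | zero => omega
  | succ q ih =>
    intro _ hq
    by_cases h0 : q = 0
    · subst h0
      rw [pow_one, V_start hn]
    · rw [pow_succ, ← Matrix.mulVec_mulVec, V_mid hn (by omega) hq,
        Nat.add_sub_cancel]
      exact ih (by omega) (by omega)

lemma Lsingle (hn : 3 ≤ n) : ∀ p k, k < m → 1 ≤ p → p ≤ n-1 →
    (windmillMatrix m n)^p *ᵥ Pi.single (vtxF m n k p) 1 = hubV m n := by
  intro p
  induction p with
  | zero => omega
  | succ q ih =>
    intro k hk _ hq
    by_cases h0 : q = 0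
    · subst h0
      rw [pow_one, col_start hn hk]
      rfl
    · rw [pow_succ, ← Matrix.mulVec_mulVec, col_mid hn hk (by omega) hq,
        Nat.add_sub_cancel]
      exact ih k hk (by omega) (by omega)

lemma E0 (hn : 3 ≤ n) :
    (windmillMatrix m n)^n *ᵥ hubV m n = (m:ℝ) • hubV m n := by
  have hsplit : (windmillMatrix m n)^n = (windmillMatrix m n)^(n-1) * windmillMatrix m n := by
    rw [← pow_succ]; congr 1; omega
  rw [hsplit, ← Matrix.mulVec_mulVec, V_hub hn]
  exact L1 hn (n-1) (by omega) le_rfl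

lemma E1 (hn : 3 ≤ n) :
    (windmillMatrix m n)^n *ᵥ Uvec m n (n-1) = (m:ℝ) • Uvec m n (n-1) := by
  have hsplit : (windmillMatrix m n)^n = windmillMatrix m n * (windmillMatrix m n)^(n-1) := by
    rw [← pow_succ']; congr 1; omega
  rw [hsplit, ← Matrix.mulVec_mulVec,
    L1 hn (n-1) (by omega) le_rfl, Matrix.mulVec_smul, V_hub hn]

lemma decomp (j : Fin (m*(n-1)+1)) (hn : 3 ≤ n) :
    j = 0 ∨ ∃ k p, k < m ∧ 1 ≤ p ∧ p ≤ n-1 ∧ (j:ℕ) = k*(n-1)+p := by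
  by_cases h0 : (j:ℕ) = 0
  · left
    exact Fin.ext (by simpa using h0)
  · right
    have hlt := j.isLt
    have hdm := Nat.div_add_mod ((j:ℕ)-1) (n-1)
    refine ⟨((j:ℕ)-1)/(n-1), ((j:ℕ)-1)%(n-1)+1, ?_, by omega, ?_, ?_⟩
    · rw [Nat.div_lt_iff_lt_mul (by omega : 0 < n-1)]
      omega
    · have := Nat.mod_lt ((j:ℕ)-1) (show 0 < n-1 by omega)
      omega
    · have hc : (n-1) * (((j:ℕ)-1)/(n-1)) = (((j:ℕ)-1)/(n-1)) * (n-1) :=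
        Nat.mul_comm _ _
      omega

lemma key (hm : 1 ≤ m) (hn : 3 ≤ n) :
    (windmillMatrix m n)^(n-1) * (windmillMatrix m n)^n
      = (m:ℝ) • (windmillMatrix m n)^(n-1) := by
  set M := windmillMatrix m n with hM
  have hcols : ∀ j : Fin (m*(n-1)+1),
      (M^(n-1) * M^n) *ᵥ Pi.single j 1 = ((m:ℝ) • M^(n-1)) *ᵥ Pi.single j 1 := by
    intro j
    have hcomm : M^(n-1) * M^n = M^n * M^(n-1) := by
      rw [← pow_add, ← pow_add]; congr 1; omega
    rw [hcomm, ← Matrix.mulVec_mulVec, Matrix.smul_mulVec]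
    rcases decomp j hn with h0 | ⟨k, p, hk, hp1, hp, hval⟩
    · subst h0
      have hsplit : M^(n-1) = M^(n-2) * M := by
        rw [← pow_succ]; congr 1; omega
      have hVh : M *ᵥ Pi.single (0 : Fin (m*(n-1)+1)) 1 = Uvec m n (n-1) :=
        V_hub hn
      rw [hsplit, ← Matrix.mulVec_mulVec, hVh, Matrix.mulVec_mulVec,
        show M^n * M^(n-2) = M^(n-2) * M^n from by
          rw [← pow_add, ← pow_add]; congr 1; omega,
        ← Matrix.mulVec_mulVec, E1 hn, Matrix.mulVec_smul]
    · have hidx : j = vtxF m n k p := Fin.ext (by rw [vtxF_val hk hp]; omega)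
      rw [hidx]
      have hsplit : M^(n-1) = M^(n-1-p) * M^p := by
        rw [← pow_add]; congr 1; omega
      rw [hsplit, ← Matrix.mulVec_mulVec, Lsingle hn p k hk hp1 hp,
        Matrix.mulVec_mulVec,
        show M^n * M^(n-1-p) = M^(n-1-p) * M^n from by
          rw [← pow_add, ← pow_add]; congr 1; omega,
        ← Matrix.mulVec_mulVec, E0 hn, Matrix.mulVec_smul]
  ext i j
  have h := congrFun (hcols j) i
  simpa [Matrix.mulVec_single] using h

end WindmillAux

theorem windmillMatrix_pow_n_sq_minus_one (m n : ℕ) (hm : 1 ≤ m) (hn : 3 ≤ n) :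
    (windmillMatrix m n)^(n^2-1) = ((m : ℝ)^(n-1)) • (windmillMatrix m n)^(n-1) := by
  set M := windmillMatrix m n with hM
  have key := WindmillAux.key hm hn
  have iter : ∀ t, M^(n-1+n*t) = ((m:ℝ)^t) • M^(n-1) := by
    intro t
    induction t with
    | zero => simp
    | succ s ih =>
      have hexp : n-1+n*(s+1) = (n-1+n*s)+n := by
        rw [Nat.mul_succ]; omega
      rw [hexp, pow_add, ih, smul_mul_assoc, key, smul_smul, ← pow_succ]
  have hfin := iter (n-1)
  have hexp : n-1+n*(n-1) = n^2-1 := by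
    obtain ⟨t, rfl⟩ : ∃ t, n = t+3 := ⟨n-3, by omega⟩
    rw [show t+3-1 = t+2 from rfl, pow_two]
    have h1 : (t+3)*(t+3) = (t+2 + (t+3)*(t+2)) + 1 := by ring
    omega
  rw [hexp] at hfin
  exact hfin
end
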